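/- arXiv:2407.07130 — 11 statements merged into one kernel-verified Lean document; each statement's English description precedes it below -/
import Mathlib

section
/- Let τ ∈ (0,2) be real and let (x,y,z) ∈ ℂ³ satisfy x² + y² + z² + x·y·z − 4 + τ² = 0. Then there exists a quadruple L₁,L₂,L₃,L₄ ∈ SL(2,ℂ) admissible for τ whose trace coordinates are exactly (x,y,z), i.e. tr(L₁L₂) = x, tr(L₂L₃) = y, tr(L₂L₄) = z. -/
/-!
Take `L₂ = diag(i, -i)`. A traceless `L₁ = !![-i x / 2, b; c, i x / 2]` has `tr (L₁ L₂) = x` and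
lies in `SL(2, ℂ)` iff `b c = x² / 4 - 1`; likewise `L₃` with entries `q, r` and `y`. With
`L₄ = (L₁ L₂ L₃)⁻¹` one computes `tr L₄ = i (c q - b r)` and `tr (L₂ L₄) = -(x y / 2 + b r + c q)`,
so `τ` and `z` prescribe `b r = C` and `c q = D` with `C, D = (-z - x y / 2 ± i τ) / 2`. The cubic
relation says precisely `C D = (x² / 4 - 1) (y² / 4 - 1)`, and as `C - D = i τ ≠ 0` the four
products `b c, q r, b r, c q` can be realised simultaneously.
-/

open Complex Matrix
open scoped MatrixGroups

lemma exists_mul_eq_of_mul_eq_mul {K : Type*} [Field K] {P Q C D : K} (h : P * Q = C * D)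
    (hCD : C ≠ 0 ∨ D ≠ 0) :
    ∃ b c q r : K, b * c = P ∧ q * r = Q ∧ b * r = C ∧ c * q = D := by
  wlog hC : C ≠ 0 generalizing C D
  · obtain ⟨b, c, q, r, hbc, hqr, hbr, hcq⟩ :=
      this (h.trans (mul_comm C D)) hCD.symm (hCD.resolve_left hC)
    exact ⟨c, b, r, q, (mul_comm c b).trans hbc, (mul_comm r q).trans hqr, hcq, hbr⟩
  refine ⟨1, P, Q / C, C, one_mul P, div_mul_cancel₀ Q hC, one_mul C, ?_⟩
  rw [mul_div_assoc', h, mul_div_cancel_left₀ D hC]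

noncomputable def diagI : SL(2, ℂ) :=
  ⟨!![I, 0; 0, -I], by rw [det_fin_two_of]; linear_combination -I_mul_I⟩

noncomputable def tracelessSL (w b c : ℂ) (h : b * c = w ^ 2 / 4 - 1) : SL(2, ℂ) :=
  ⟨!![-I * w / 2, b; c, I * w / 2], by
    rw [det_fin_two_of]; linear_combination (-w ^ 2 / 4) * I_mul_I - h⟩

@[simp]
lemma coe_diagI : (diagI : Matrix (Fin 2) (Fin 2) ℂ) = !![I, 0; 0, -I] := rfl

@[simp]
lemma coe_tracelessSL (w b c : ℂ) (h : b * c = w ^ 2 / 4 - 1) :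
    (tracelessSL w b c h : Matrix (Fin 2) (Fin 2) ℂ) = !![-I * w / 2, b; c, I * w / 2] := rfl

theorem exists_admissible_quadruple_of_entries (t x y z b c q r : ℂ)
    (hbc : b * c = x ^ 2 / 4 - 1) (hqr : q * r = y ^ 2 / 4 - 1)
    (hbr : b * r = (-z - x * y / 2 + I * t) / 2)
    (hcq : c * q = (-z - x * y / 2 - I * t) / 2) :
    ∃ L₁ L₂ L₃ L₄ : SL(2, ℂ),
      L₁ * L₂ * L₃ * L₄ = 1 ∧
      Matrix.trace (L₁ : Matrix (Fin 2) (Fin 2) ℂ) = 0 ∧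
      Matrix.trace (L₂ : Matrix (Fin 2) (Fin 2) ℂ) = 0 ∧
      Matrix.trace (L₃ : Matrix (Fin 2) (Fin 2) ℂ) = 0 ∧
      Matrix.trace (L₄ : Matrix (Fin 2) (Fin 2) ℂ) = t ∧
      Matrix.trace ((L₁ : Matrix (Fin 2) (Fin 2) ℂ) * (L₂ : Matrix (Fin 2) (Fin 2) ℂ)) = x ∧
      Matrix.trace ((L₂ : Matrix (Fin 2) (Fin 2) ℂ) * (L₃ : Matrix (Fin 2) (Fin 2) ℂ)) = y ∧
      Matrix.trace ((L₂ : Matrix (Fin 2) (Fin 2) ℂ) * (L₄ : Matrix (Fin 2) (Fin 2) ℂ)) = z := by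
  set L₁ := tracelessSL x b c hbc
  set L₃ := tracelessSL y q r hqr
  refine ⟨L₁, diagI, L₃, (L₁ * diagI * L₃)⁻¹, mul_inv_cancel _, ?_, ?_, ?_, ?_, ?_, ?_, ?_⟩ <;>
    simp only [L₁, L₃, Matrix.SpecialLinearGroup.coe_inv, Matrix.SpecialLinearGroup.coe_mul,
      coe_diagI, coe_tracelessSL, mul_fin_two, adjugate_fin_two_of, trace_fin_two_of]
  · ring
  · ring
  · ring
  · linear_combination I * hcq - I * hbr - t * I_mul_I
  · linear_combination -x * I_mul_I
  · linear_combination -y * I_mul_I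
  · linear_combination -hbr - hcq + (x * y / 2 * (1 - I * I) + b * r + c * q) * I_mul_I

theorem exists_admissible_quadruple_with_given_trace_coordinates_general
    (τ : ℝ) (hτ0 : 0 < τ) (x y z : ℂ)
    (hxyz : x ^ 2 + y ^ 2 + z ^ 2 + x * y * z - 4 + (τ : ℂ) ^ 2 = 0) :
    ∃ L₁ L₂ L₃ L₄ : Matrix.SpecialLinearGroup (Fin 2) ℂ,
      L₁ * L₂ * L₃ * L₄ = 1 ∧
      Matrix.trace (L₁ : Matrix (Fin 2) (Fin 2) ℂ) = 0 ∧
      Matrix.trace (L₂ : Matrix (Fin 2) (Fin 2) ℂ) = 0 ∧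
      Matrix.trace (L₃ : Matrix (Fin 2) (Fin 2) ℂ) = 0 ∧
      Matrix.trace (L₄ : Matrix (Fin 2) (Fin 2) ℂ) = (τ : ℂ) ∧
      Matrix.trace ((L₁ : Matrix (Fin 2) (Fin 2) ℂ) * (L₂ : Matrix (Fin 2) (Fin 2) ℂ)) = x ∧
      Matrix.trace ((L₂ : Matrix (Fin 2) (Fin 2) ℂ) * (L₃ : Matrix (Fin 2) (Fin 2) ℂ)) = y ∧
      Matrix.trace ((L₂ : Matrix (Fin 2) (Fin 2) ℂ) * (L₄ : Matrix (Fin 2) (Fin 2) ℂ)) = z := by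
  have hτ : (τ : ℂ) ≠ 0 := by exact_mod_cast hτ0.ne'
  set C := (-z - x * y / 2 + I * τ) / 2
  set D := (-z - x * y / 2 - I * τ) / 2
  have hCD : C ≠ 0 ∨ D ≠ 0 := by
    by_contra! h
    exact mul_ne_zero I_ne_zero hτ (by linear_combination h.1 - h.2)
  have hfactor : (x ^ 2 / 4 - 1) * (y ^ 2 / 4 - 1) = C * D := by
    linear_combination (-1 / 4 : ℂ) * hxyz + ((τ : ℂ) ^ 2 / 4) * I_mul_I
  obtain ⟨b, c, q, r, hbc, hqr, hbr, hcq⟩ := exists_mul_eq_of_mul_eq_mul hfactor hCD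
  exact exists_admissible_quadruple_of_entries τ x y z b c q r hbc hqr hbr hcq

theorem exists_admissible_quadruple_with_given_trace_coordinates
    (τ : ℝ) (hτ0 : 0 < τ) (hτ2 : τ < 2) (x y z : ℂ)
    (hxyz : x ^ 2 + y ^ 2 + z ^ 2 + x * y * z - 4 + (τ : ℂ) ^ 2 = 0) :
    ∃ L₁ L₂ L₃ L₄ : Matrix.SpecialLinearGroup (Fin 2) ℂ,
      L₁ * L₂ * L₃ * L₄ = 1 ∧
      Matrix.trace (L₁ : Matrix (Fin 2) (Fin 2) ℂ) = 0 ∧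
      Matrix.trace (L₂ : Matrix (Fin 2) (Fin 2) ℂ) = 0 ∧
      Matrix.trace (L₃ : Matrix (Fin 2) (Fin 2) ℂ) = 0 ∧
      Matrix.trace (L₄ : Matrix (Fin 2) (Fin 2) ℂ) = (τ : ℂ) ∧
      Matrix.trace ((L₁ : Matrix (Fin 2) (Fin 2) ℂ) * (L₂ : Matrix (Fin 2) (Fin 2) ℂ)) = x ∧
      Matrix.trace ((L₂ : Matrix (Fin 2) (Fin 2) ℂ) * (L₃ : Matrix (Fin 2) (Fin 2) ℂ)) = y ∧
      Matrix.trace ((L₂ : Matrix (Fin 2) (Fin 2) ℂ) * (L₄ : Matrix (Fin 2) (Fin 2) ℂ)) = z :=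
  exists_admissible_quadruple_with_given_trace_coordinates_general τ hτ0 x y z hxyz
end

section
/- Let τ ∈ (0,2) be real and let L₁,L₂,L₃,L₄ ∈ SL(2,ℂ) and L₁′,L₂′,L₃′,L₄′ ∈ SL(2,ℂ) both be admissible for τ. If the two quadruples have the same trace coordinates, i.e. tr(L₁L₂) = tr(L₁′L₂′), tr(L₂L₃) = tr(L₂′L₃′) and tr(L₂L₄) = tr(L₂′L₄′), then they are simultaneously conjugate: there exists G ∈ SL(2,ℂ) with Lⱼ′ = G·Lⱼ·G⁻¹ for all j = 1,2,3,4. -/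
/-!
A traceless element of `SL(2, ℂ)` is conjugate to `diag(i, -i)`, so both quadruples may be
conjugated to have `L₂ = diag(i, -i)`. Writing `L₁ = [[p, q], [r, -p]]` and
`L₃ = [[s, u], [v, -s]]`, one finds `x = 2ip`, `y = 2is`, `τ = i(ru - qv)` and
`z = 2ps - (ru + qv)`, while `det = 1` gives `qr = -1 - p²` and `uv = -1 - s²`. Hence the two
normal forms share `p`, `s`, `qr`, `uv`, `ru` and `qv`; as `τ ≠ 0`, one of `ru`, `qv` is nonzero,
and this forces `(q, r, u, v) ↦ (μq, r/μ, μu, v/μ)` for some `μ ≠ 0`. That rescaling is conjugation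
by `diag(√μ, 1/√μ)`, which commutes with `L₂`, and `L₄ = (L₁L₂L₃)⁻¹` follows along.
-/

open Matrix Complex MatrixGroups Matrix.SpecialLinearGroup

section CommRing

variable {R : Type*} [CommRing R]

local notation:1024 "↑ₘ" A:1024 => ((A : SL(2, R)) : Matrix (Fin 2) (Fin 2) R)

theorem Matrix.SpecialLinearGroup.trace_coe_conj {n : Type*} [Fintype n] [DecidableEq n]
    (G A : SpecialLinearGroup n R) :
    trace (↑(G * A * G⁻¹) : Matrix n n R) = trace (A : Matrix n n R) := by
  rw [coe_mul, coe_mul, trace_mul_cycle, ← coe_mul, inv_mul_cancel, coe_one, one_mul]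

namespace SL2

theorem trace_inv (M : SL(2, R)) : trace ↑ₘM⁻¹ = trace ↑ₘM := by
  simp [coe_inv, adjugate_fin_two, trace_fin_two, add_comm]

theorem trace_mul_inv (A : Matrix (Fin 2) (Fin 2) R) (M : SL(2, R)) :
    trace (A * ↑ₘM⁻¹) = trace A * trace ↑ₘM - trace (A * ↑ₘM) := by
  simp [coe_inv, adjugate_fin_two, trace_fin_two, mul_apply, Fin.sum_univ_two]
  ring

theorem apply_one_one_of_trace_eq_zero {A : SL(2, R)}
    (h : trace ↑ₘA = 0) : A 1 1 = -A 0 0 := by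
  rw [trace_fin_two] at h
  exact eq_neg_of_add_eq_zero_right h

theorem apply_zero_one_mul_apply_one_zero_of_trace_eq_zero {A : SL(2, R)}
    (h : trace ↑ₘA = 0) : A 0 1 * A 1 0 = -1 - A 0 0 ^ 2 := by
  have hdet := A.det_coe
  rw [det_fin_two, apply_one_one_of_trace_eq_zero h] at hdet
  linear_combination -hdet

end SL2

structure IsAdmissible (τ : R) (L₁ L₂ L₃ L₄ : SL(2, R)) : Prop where
  mul_eq_one : L₁ * L₂ * L₃ * L₄ = 1
  trace₁ : trace ↑ₘL₁ = 0
  trace₂ : trace ↑ₘL₂ = 0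
  trace₃ : trace ↑ₘL₃ = 0
  trace₄ : trace ↑ₘL₄ = τ

def traceCoords (L₁ L₂ L₃ L₄ : SL(2, R)) : R × R × R :=
  (trace (↑ₘL₁ * ↑ₘL₂), trace (↑ₘL₂ * ↑ₘL₃), trace (↑ₘL₂ * ↑ₘL₄))

theorem IsAdmissible.conj {τ : R} {L₁ L₂ L₃ L₄ : SL(2, R)} (h : IsAdmissible τ L₁ L₂ L₃ L₄)
    (G : SL(2, R)) :
    IsAdmissible τ (G * L₁ * G⁻¹) (G * L₂ * G⁻¹) (G * L₃ * G⁻¹) (G * L₄ * G⁻¹) where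
  mul_eq_one := by
    rw [show G * L₁ * G⁻¹ * (G * L₂ * G⁻¹) * (G * L₃ * G⁻¹) * (G * L₄ * G⁻¹) =
      G * (L₁ * L₂ * L₃ * L₄) * G⁻¹ by group, h.mul_eq_one]
    group
  trace₁ := (trace_coe_conj G L₁).trans h.trace₁
  trace₂ := (trace_coe_conj G L₂).trans h.trace₂
  trace₃ := (trace_coe_conj G L₃).trans h.trace₃
  trace₄ := (trace_coe_conj G L₄).trans h.trace₄

theorem traceCoords_conj (G L₁ L₂ L₃ L₄ : SL(2, R)) :
    traceCoords (G * L₁ * G⁻¹) (G * L₂ * G⁻¹) (G * L₃ * G⁻¹) (G * L₄ * G⁻¹) =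
      traceCoords L₁ L₂ L₃ L₄ := by
  have key : ∀ A B : SL(2, R),
      trace (↑ₘ(G * A * G⁻¹) * ↑ₘ(G * B * G⁻¹)) = trace (↑ₘA * ↑ₘB) := fun A B => by
    rw [← coe_mul, show G * A * G⁻¹ * (G * B * G⁻¹) = G * (A * B) * G⁻¹ by group,
      trace_coe_conj, coe_mul]
  simp only [traceCoords, key]

end CommRing

theorem exists_scaling_of_mul_eq {K : Type*} [Field K] {q r u v q' r' u' v' : K}
    (hqr : q' * r' = q * r) (huv : u' * v' = u * v) (hur : u' * r' = u * r)
    (hvq : v' * q' = v * q) (hne : u * r ≠ 0 ∨ v * q ≠ 0) :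
    ∃ μ ≠ 0, q' = μ * q ∧ u' = μ * u ∧ μ * r' = r ∧ μ * v' = v := by
  wlog hur0 : u * r ≠ 0 generalizing q r u v q' r' u' v'
  · have hqv : q * v ≠ 0 := by rw [mul_comm]; exact hne.resolve_left hur0
    obtain ⟨μ, hμ, hu, hq, hv, hr⟩ := this huv hqr (by linear_combination hvq)
      (by linear_combination hur) (.inl hqv) hqv
    exact ⟨μ, hμ, hq, hu, hr, hv⟩
  have hu : u ≠ 0 := left_ne_zero_of_mul hur0
  have hr' : r' ≠ 0 := right_ne_zero_of_mul (hur ▸ hur0)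
  refine ⟨u' / u, div_ne_zero (left_ne_zero_of_mul (hur ▸ hur0)) hu, ?_, ?_, ?_, ?_⟩
  · field_simp
    exact mul_right_cancel₀ hr' (by linear_combination u * hqr - q * hur)
  · field_simp
  · field_simp; linear_combination hur
  · field_simp; linear_combination huv

theorem diag2_commute {F : Type*} [Field F] {a b : F} (ha : a ≠ 0) (hb : b ≠ 0) :
    Commute (diag2 a ha) (diag2 b hb) := by
  ext i j; fin_cases i <;> fin_cases j <;> simp [diag2_coe', mul_comm]

theorem eq_diag2_mul_mul_inv {F : Type*} [Field F] {A A' : SL(2, F)} {l : F} (hl : l ≠ 0)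
    (h₀₀ : A' 0 0 = A 0 0) (h₀₁ : A' 0 1 = l ^ 2 * A 0 1) (h₁₀ : l ^ 2 * A' 1 0 = A 1 0)
    (h₁₁ : A' 1 1 = A 1 1) :
    A' = diag2 l hl * A * (diag2 l hl)⁻¹ := by
  rw [diag2_inv]
  ext i j; fin_cases i <;> fin_cases j <;>
    simp [diag2_coe', mul_apply, Fin.sum_univ_two, vecMul, dotProduct] <;> field_simp <;> grind

section Complex

local notation:1024 "↑ₘ" A:1024 => ((A : SL(2, ℂ)) : Matrix (Fin 2) (Fin 2) ℂ)

noncomputable def iDiag : SL(2, ℂ) := diag2 I I_ne_zero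

theorem coe_iDiag : ↑ₘiDiag = !![I, 0; 0, -I] := by
  simp [iDiag, diag2_coe']

theorem trace_iDiag : trace ↑ₘiDiag = 0 := by
  simp [coe_iDiag, trace_fin_two]

theorem trace_mul_iDiag (A : Matrix (Fin 2) (Fin 2) ℂ) :
    trace (A * ↑ₘiDiag) = I * (A 0 0 - A 1 1) := by
  rw [coe_iDiag, eta_fin_two A]
  simp [trace_fin_two]; ring

theorem trace_iDiag_mul (A : Matrix (Fin 2) (Fin 2) ℂ) :
    trace (↑ₘiDiag * A) = I * (A 0 0 - A 1 1) := by
  rw [coe_iDiag, eta_fin_two A]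
  simp [trace_fin_two]; ring

theorem trace_mul_iDiag_mul (A B : Matrix (Fin 2) (Fin 2) ℂ) :
    trace (A * ↑ₘiDiag * B) =
      I * (A 0 0 * B 0 0 + A 1 0 * B 0 1 - A 0 1 * B 1 0 - A 1 1 * B 1 1) := by
  rw [coe_iDiag, eta_fin_two A, eta_fin_two B]
  simp [trace_fin_two]; ring

theorem trace_iDiag_mul_iDiag_mul (A B : Matrix (Fin 2) (Fin 2) ℂ) :
    trace (↑ₘiDiag * A * ↑ₘiDiag * B) =
      A 0 1 * B 1 0 + A 1 0 * B 0 1 - A 0 0 * B 0 0 - A 1 1 * B 1 1 := by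
  rw [coe_iDiag, eta_fin_two A, eta_fin_two B]
  simp [trace_fin_two]
  linear_combination (A 0 0 * B 0 0 + A 1 1 * B 1 1 - A 0 1 * B 1 0 - A 1 0 * B 0 1) * I_mul_I

theorem exists_det_eq_one_mul_eq_mul_iDiag {a b c : ℂ} (habc : b * c = -1 - a ^ 2) :
    ∃ E : Matrix (Fin 2) (Fin 2) ℂ, E.det = 1 ∧ !![a, b; c, -a] * E = E * ↑ₘiDiag := by
  rw [coe_iDiag]
  have hI : I ^ 2 = -1 := I_sq
  -- the columns of `E` are eigenvectors for `I` and `-I`, the first one rescaled to get `det E = 1`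
  by_cases ha : a = I
  · refine ⟨!![I / 2, b; c / 4, -2 * I], ?_, ?_⟩
    · rw [det_fin_two_of]; grind
    · rw [mul_fin_two, mul_fin_two]
      ext i j; fin_cases i <;> fin_cases j <;> simp <;> grind
  · have hd : -2 * I * (a - I) ≠ 0 := by simp [sub_eq_zero, ha, I_ne_zero]
    refine ⟨!![b / (-2 * I * (a - I)), a - I; (I - a) / (-2 * I * (a - I)), c], ?_, ?_⟩
    · rw [det_fin_two_of]; field_simp; grind
    · rw [mul_fin_two, mul_fin_two]
      ext i j; fin_cases i <;> fin_cases j <;> simp <;> field_simp <;> grind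

theorem exists_conj_eq_iDiag {M : SL(2, ℂ)} (hM : trace ↑ₘM = 0) :
    ∃ E : SL(2, ℂ), M = E * iDiag * E⁻¹ := by
  obtain ⟨E, hdet, hE⟩ := exists_det_eq_one_mul_eq_mul_iDiag
    (SL2.apply_zero_one_mul_apply_one_zero_of_trace_eq_zero hM)
  refine ⟨⟨E, hdet⟩, eq_mul_inv_of_mul_eq (Subtype.ext (?_ : ↑ₘM * E = E * ↑ₘiDiag))⟩
  rw [← hE, eta_fin_two ↑ₘM, SL2.apply_one_one_of_trace_eq_zero hM]
  rfl

variable {τ : ℂ}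

theorem IsAdmissible.exists_conj_snd_eq_iDiag {L₁ L₂ L₃ L₄ : SL(2, ℂ)}
    (h : IsAdmissible τ L₁ L₂ L₃ L₄) :
    ∃ (E K₁ K₃ K₄ : SL(2, ℂ)), IsAdmissible τ K₁ iDiag K₃ K₄ ∧
      traceCoords K₁ iDiag K₃ K₄ = traceCoords L₁ L₂ L₃ L₄ ∧
      L₁ = E * K₁ * E⁻¹ ∧ L₂ = E * iDiag * E⁻¹ ∧ L₃ = E * K₃ * E⁻¹ ∧ L₄ = E * K₄ * E⁻¹ := by
  obtain ⟨E, rfl⟩ := exists_conj_eq_iDiag h.trace₂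
  have hK := h.conj E⁻¹
  have hKc := traceCoords_conj E⁻¹ L₁ (E * iDiag * E⁻¹) L₃ L₄
  simp only [inv_inv, show E⁻¹ * (E * iDiag * E⁻¹) * E = iDiag by group] at hK hKc
  exact ⟨E, _, _, _, hK, hKc, by group, rfl, by group, by group⟩

theorem IsAdmissible.traceCoords_iDiag_eq {K₁ K₃ K₄ : SL(2, ℂ)}
    (h : IsAdmissible τ K₁ iDiag K₃ K₄) :
    traceCoords K₁ iDiag K₃ K₄ = (2 * I * K₁ 0 0, 2 * I * K₃ 0 0,
      2 * K₁ 0 0 * K₃ 0 0 - (K₃ 0 1 * K₁ 1 0 + K₃ 1 0 * K₁ 0 1)) ∧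
    τ = I * (K₃ 0 1 * K₁ 1 0 - K₃ 1 0 * K₁ 0 1) := by
  have hK₄ : K₄ = (K₁ * iDiag * K₃)⁻¹ := eq_inv_of_mul_eq_one_right h.mul_eq_one
  have h₁ := SL2.apply_one_one_of_trace_eq_zero h.trace₁
  have h₃ := SL2.apply_one_one_of_trace_eq_zero h.trace₃
  refine ⟨?_, ?_⟩
  · simp only [traceCoords, hK₄, SL2.trace_mul_inv, trace_iDiag, coe_mul, zero_mul, zero_sub,
      ← Matrix.mul_assoc, trace_mul_iDiag, trace_iDiag_mul, trace_iDiag_mul_iDiag_mul, h₁, h₃]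
    ext <;> simp only <;> ring
  · rw [← h.trace₄, hK₄, SL2.trace_inv, coe_mul, coe_mul, trace_mul_iDiag_mul, h₁, h₃]
    ring

theorem exists_diag2_conj_eq {A B A' B' : SL(2, ℂ)} (hA : trace ↑ₘA = 0) (hB : trace ↑ₘB = 0)
    (hA' : trace ↑ₘA' = 0) (hB' : trace ↑ₘB' = 0) (h₀ : A' 0 0 = A 0 0) (h₀' : B' 0 0 = B 0 0)
    (hBA : B' 0 1 * A' 1 0 = B 0 1 * A 1 0) (hAB : B' 1 0 * A' 0 1 = B 1 0 * A 0 1)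
    (hne : B 0 1 * A 1 0 ≠ 0 ∨ B 1 0 * A 0 1 ≠ 0) :
    ∃ (l : ℂ) (hl : l ≠ 0),
      A' = diag2 l hl * A * (diag2 l hl)⁻¹ ∧ B' = diag2 l hl * B * (diag2 l hl)⁻¹ := by
  have hqr : A' 0 1 * A' 1 0 = A 0 1 * A 1 0 := by
    rw [SL2.apply_zero_one_mul_apply_one_zero_of_trace_eq_zero hA,
      SL2.apply_zero_one_mul_apply_one_zero_of_trace_eq_zero hA', h₀]
  have huv : B' 0 1 * B' 1 0 = B 0 1 * B 1 0 := by
    rw [SL2.apply_zero_one_mul_apply_one_zero_of_trace_eq_zero hB,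
      SL2.apply_zero_one_mul_apply_one_zero_of_trace_eq_zero hB', h₀']
  obtain ⟨μ, hμ, hq, hu, hr, hv⟩ := exists_scaling_of_mul_eq hqr huv hBA hAB hne
  obtain ⟨l, rfl⟩ := IsAlgClosed.exists_pow_nat_eq μ two_pos
  have hl : l ≠ 0 := by rintro rfl; simp at hμ
  refine ⟨l, hl, eq_diag2_mul_mul_inv hl h₀ hq hr ?_, eq_diag2_mul_mul_inv hl h₀' hu hv ?_⟩
  · rw [SL2.apply_one_one_of_trace_eq_zero hA, SL2.apply_one_one_of_trace_eq_zero hA', h₀]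
  · rw [SL2.apply_one_one_of_trace_eq_zero hB, SL2.apply_one_one_of_trace_eq_zero hB', h₀']

theorem IsAdmissible.exists_conj_of_traceCoords_iDiag_eq (hτ : τ ≠ 0)
    {K₁ K₃ K₄ K₁' K₃' K₄' : SL(2, ℂ)} (hK : IsAdmissible τ K₁ iDiag K₃ K₄)
    (hK' : IsAdmissible τ K₁' iDiag K₃' K₄')
    (h : traceCoords K₁ iDiag K₃ K₄ = traceCoords K₁' iDiag K₃' K₄') :
    ∃ H : SL(2, ℂ), K₁' = H * K₁ * H⁻¹ ∧ iDiag = H * iDiag * H⁻¹ ∧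
      K₃' = H * K₃ * H⁻¹ ∧ K₄' = H * K₄ * H⁻¹ := by
  obtain ⟨hc, hτK⟩ := hK.traceCoords_iDiag_eq
  obtain ⟨hc', hτK'⟩ := hK'.traceCoords_iDiag_eq
  rw [hc, hc'] at h
  simp only [Prod.mk.injEq] at h
  obtain ⟨hx, hy, hz⟩ := h
  have h2I : 2 * I ≠ 0 := by simp [I_ne_zero]
  have h₁ : K₁' 0 0 = K₁ 0 0 := (mul_left_cancel₀ h2I hx).symm
  have h₃ : K₃' 0 0 = K₃ 0 0 := (mul_left_cancel₀ h2I hy).symm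
  rw [h₁, h₃] at hz
  have hBA : K₃' 0 1 * K₁' 1 0 = K₃ 0 1 * K₁ 1 0 := by
    apply mul_left_cancel₀ h2I
    linear_combination hτK - hτK' + I * hz
  have hAB : K₃' 1 0 * K₁' 0 1 = K₃ 1 0 * K₁ 0 1 := by
    apply mul_left_cancel₀ h2I
    linear_combination hτK' - hτK + I * hz
  have hne : K₃ 0 1 * K₁ 1 0 ≠ 0 ∨ K₃ 1 0 * K₁ 0 1 ≠ 0 := by
    by_contra! h0
    exact hτ (by rw [hτK, h0.1, h0.2, sub_zero, mul_zero])
  obtain ⟨l, hl, rfl, rfl⟩ := exists_diag2_conj_eq hK.trace₁ hK.trace₃ hK'.trace₁ hK'.trace₃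
    h₁ h₃ hBA hAB hne
  have hJ : iDiag = diag2 l hl * iDiag * (diag2 l hl)⁻¹ :=
    eq_mul_inv_of_mul_eq (diag2_commute I_ne_zero hl).eq
  refine ⟨diag2 l hl, rfl, hJ, rfl, ?_⟩
  rw [eq_inv_of_mul_eq_one_right hK'.mul_eq_one, eq_inv_of_mul_eq_one_right hK.mul_eq_one]
  nth_rw 1 [hJ]
  group

theorem IsAdmissible.exists_conj_of_traceCoords_eq (hτ : τ ≠ 0)
    {L₁ L₂ L₃ L₄ L₁' L₂' L₃' L₄' : SL(2, ℂ)} (hL : IsAdmissible τ L₁ L₂ L₃ L₄)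
    (hL' : IsAdmissible τ L₁' L₂' L₃' L₄')
    (h : traceCoords L₁ L₂ L₃ L₄ = traceCoords L₁' L₂' L₃' L₄') :
    ∃ G : SL(2, ℂ), L₁' = G * L₁ * G⁻¹ ∧ L₂' = G * L₂ * G⁻¹ ∧
      L₃' = G * L₃ * G⁻¹ ∧ L₄' = G * L₄ * G⁻¹ := by
  obtain ⟨E, K₁, K₃, K₄, hK, hKc, rfl, rfl, rfl, rfl⟩ := hL.exists_conj_snd_eq_iDiag
  obtain ⟨E', K₁', K₃', K₄', hK', hKc', rfl, rfl, rfl, rfl⟩ := hL'.exists_conj_snd_eq_iDiag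
  obtain ⟨H, rfl, hJ, rfl, rfl⟩ :=
    hK.exists_conj_of_traceCoords_iDiag_eq hτ hK' (hKc.trans (h.trans hKc'.symm))
  refine ⟨E' * H * E⁻¹, by group, ?_, by group, by group⟩
  nth_rw 1 [hJ]
  group

end Complex

theorem admissible_quadruples_with_equal_trace_coordinates_are_conjugate_general
    (τ : ℝ) (hτ0 : 0 < τ)
    (L₁ L₂ L₃ L₄ L₁' L₂' L₃' L₄' : Matrix.SpecialLinearGroup (Fin 2) ℂ)
    (hprod : L₁ * L₂ * L₃ * L₄ = 1)
    (h1 : Matrix.trace (L₁ : Matrix (Fin 2) (Fin 2) ℂ) = 0)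
    (h2 : Matrix.trace (L₂ : Matrix (Fin 2) (Fin 2) ℂ) = 0)
    (h3 : Matrix.trace (L₃ : Matrix (Fin 2) (Fin 2) ℂ) = 0)
    (h4 : Matrix.trace (L₄ : Matrix (Fin 2) (Fin 2) ℂ) = (τ : ℂ))
    (hprod' : L₁' * L₂' * L₃' * L₄' = 1)
    (h1' : Matrix.trace (L₁' : Matrix (Fin 2) (Fin 2) ℂ) = 0)
    (h2' : Matrix.trace (L₂' : Matrix (Fin 2) (Fin 2) ℂ) = 0)
    (h3' : Matrix.trace (L₃' : Matrix (Fin 2) (Fin 2) ℂ) = 0)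
    (h4' : Matrix.trace (L₄' : Matrix (Fin 2) (Fin 2) ℂ) = (τ : ℂ))
    (hx : Matrix.trace ((L₁ : Matrix (Fin 2) (Fin 2) ℂ) * (L₂ : Matrix (Fin 2) (Fin 2) ℂ))
        = Matrix.trace ((L₁' : Matrix (Fin 2) (Fin 2) ℂ) * (L₂' : Matrix (Fin 2) (Fin 2) ℂ)))
    (hy : Matrix.trace ((L₂ : Matrix (Fin 2) (Fin 2) ℂ) * (L₃ : Matrix (Fin 2) (Fin 2) ℂ))
        = Matrix.trace ((L₂' : Matrix (Fin 2) (Fin 2) ℂ) * (L₃' : Matrix (Fin 2) (Fin 2) ℂ)))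
    (hz : Matrix.trace ((L₂ : Matrix (Fin 2) (Fin 2) ℂ) * (L₄ : Matrix (Fin 2) (Fin 2) ℂ))
        = Matrix.trace ((L₂' : Matrix (Fin 2) (Fin 2) ℂ) * (L₄' : Matrix (Fin 2) (Fin 2) ℂ))) :
    ∃ G : Matrix.SpecialLinearGroup (Fin 2) ℂ,
      L₁' = G * L₁ * G⁻¹ ∧ L₂' = G * L₂ * G⁻¹ ∧ L₃' = G * L₃ * G⁻¹ ∧ L₄' = G * L₄ * G⁻¹ :=
  IsAdmissible.exists_conj_of_traceCoords_eq (ofReal_ne_zero.mpr hτ0.ne')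
    ⟨hprod, h1, h2, h3, h4⟩ ⟨hprod', h1', h2', h3', h4'⟩ (Prod.ext hx (Prod.ext hy hz))

theorem admissible_quadruples_with_equal_trace_coordinates_are_conjugate
    (τ : ℝ) (hτ0 : 0 < τ) (hτ2 : τ < 2)
    (L₁ L₂ L₃ L₄ L₁' L₂' L₃' L₄' : Matrix.SpecialLinearGroup (Fin 2) ℂ)
    (hprod : L₁ * L₂ * L₃ * L₄ = 1)
    (h1 : Matrix.trace (L₁ : Matrix (Fin 2) (Fin 2) ℂ) = 0)
    (h2 : Matrix.trace (L₂ : Matrix (Fin 2) (Fin 2) ℂ) = 0)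
    (h3 : Matrix.trace (L₃ : Matrix (Fin 2) (Fin 2) ℂ) = 0)
    (h4 : Matrix.trace (L₄ : Matrix (Fin 2) (Fin 2) ℂ) = (τ : ℂ))
    (hprod' : L₁' * L₂' * L₃' * L₄' = 1)
    (h1' : Matrix.trace (L₁' : Matrix (Fin 2) (Fin 2) ℂ) = 0)
    (h2' : Matrix.trace (L₂' : Matrix (Fin 2) (Fin 2) ℂ) = 0)
    (h3' : Matrix.trace (L₃' : Matrix (Fin 2) (Fin 2) ℂ) = 0)
    (h4' : Matrix.trace (L₄' : Matrix (Fin 2) (Fin 2) ℂ) = (τ : ℂ))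
    (hx : Matrix.trace ((L₁ : Matrix (Fin 2) (Fin 2) ℂ) * (L₂ : Matrix (Fin 2) (Fin 2) ℂ))
        = Matrix.trace ((L₁' : Matrix (Fin 2) (Fin 2) ℂ) * (L₂' : Matrix (Fin 2) (Fin 2) ℂ)))
    (hy : Matrix.trace ((L₂ : Matrix (Fin 2) (Fin 2) ℂ) * (L₃ : Matrix (Fin 2) (Fin 2) ℂ))
        = Matrix.trace ((L₂' : Matrix (Fin 2) (Fin 2) ℂ) * (L₃' : Matrix (Fin 2) (Fin 2) ℂ)))
    (hz : Matrix.trace ((L₂ : Matrix (Fin 2) (Fin 2) ℂ) * (L₄ : Matrix (Fin 2) (Fin 2) ℂ))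
        = Matrix.trace ((L₂' : Matrix (Fin 2) (Fin 2) ℂ) * (L₄' : Matrix (Fin 2) (Fin 2) ℂ))) :
    ∃ G : Matrix.SpecialLinearGroup (Fin 2) ℂ,
      L₁' = G * L₁ * G⁻¹ ∧ L₂' = G * L₂ * G⁻¹ ∧ L₃' = G * L₃ * G⁻¹ ∧ L₄' = G * L₄ * G⁻¹ :=
  admissible_quadruples_with_equal_trace_coordinates_are_conjugate_general τ hτ0 L₁ L₂ L₃ L₄ L₁' L₂'
    L₃' L₄' hprod h1 h2 h3 h4 hprod' h1' h2' h3' h4' hx hy hz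
end

section
/- Let τ ∈ (0,2) be real and let L₁,L₂,L₃,L₄ ∈ SL(2,ℂ) be admissible for τ with trace coordinates x = tr(L₁L₂), y = tr(L₂L₃), z = tr(L₂L₄). Then there exists U ∈ SL(2,ℂ) such that U·Lⱼ·U⁻¹ ∈ SU(2) for all j = 1,2,3,4 if and only if x and y are real with −2 < x < 2 and −2 < y < 2 and z is real. -/
/-!
An element of `SU(2)` has real trace in `[-2, 2]`, with `±2` only at `±1`. If `L₁L₂` were
central, `τ = tr (L₁L₂L₃)⁻¹ = ±tr L₃` would vanish; likewise for `L₂L₃`. This gives the forward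
direction.

Conversely, conjugate `L₂` to `K = diag(i, -i)` and write `L₁ = [[a, b], [c, -a]]` and
`L₃ = [[a', b'], [c', -a']]`. Then `x = 2ia` with `-2 < x < 2` forces `a ∈ iℝ` and
`bc = -1 - a² < 0`, so `c = r b̄` with `r < 0`; likewise `c' = s b̄'`. Now `τ = i(cb' - bc')` and
`z = 2aa' - bc' - cb'`, and taking imaginary parts, `τ ≠ 0` and `z ∈ ℝ` force `r = s`.
Conjugating by `diag(l, l⁻¹)` with `l⁴ = -r` makes `L₁`, `L₂`, `L₃`, hence `L₄`, special unitary.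
-/

open Matrix Complex
open scoped MatrixGroups ComplexConjugate

theorem Complex.exists_neg_mul_conj_of_mul_eq_neg {b c : ℂ} {p : ℝ} (hp : p < 0) (h : b * c = p) :
    ∃ r : ℝ, r < 0 ∧ c = r * conj b := by
  have hb : b ≠ 0 := left_ne_zero_of_mul (h ▸ ofReal_ne_zero.mpr hp.ne)
  have hnb : 0 < normSq b := normSq_pos.mpr hb
  refine ⟨p / normSq b, div_neg_of_neg_of_pos hp hnb, ?_⟩
  rw [ofReal_div, div_mul_eq_mul_div, eq_div_iff (ofReal_ne_zero.mpr hnb.ne'), ← mul_conj]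
  linear_combination (conj b) * h

theorem Complex.eq_of_im_add_eq_zero_of_im_sub_ne_zero {r s : ℝ} {b b' : ℂ}
    (h₁ : (r * conj b * b' + s * b * conj b').im = 0)
    (h₂ : (r * conj b * b' - s * b * conj b').im ≠ 0) :
    r = s := by
  have e₁ : (r * conj b * b' + s * b * conj b').im = (r - s) * (conj b * b').im := by
    simp only [add_im, mul_im, mul_re, ofReal_re, ofReal_im, conj_re, conj_im]; ring
  have e₂ : (r * conj b * b' - s * b * conj b').im = (r + s) * (conj b * b').im := by
    simp only [sub_im, mul_im, mul_re, ofReal_re, ofReal_im, conj_re, conj_im]; ring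
  rw [e₁] at h₁
  rw [e₂] at h₂
  exact sub_eq_zero.mp ((mul_eq_zero.mp h₁).resolve_right (right_ne_zero_of_mul h₂))

theorem Matrix.mem_unitaryGroup_iff_star_eq_adjugate {n R : Type*} [Fintype n] [DecidableEq n]
    [CommRing R] [StarRing R] {A : Matrix n n R} (hA : A.det = 1) :
    A ∈ unitaryGroup n R ↔ star A = adjugate A := by
  rw [mem_unitaryGroup_iff']
  constructor
  · intro h
    calc star A = star A * (A * adjugate A) := by rw [mul_adjugate, hA, one_smul, mul_one]
      _ = adjugate A := by rw [← Matrix.mul_assoc, h, Matrix.one_mul]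
  · intro h
    rw [h, adjugate_mul, hA, one_smul]

namespace Matrix.SpecialLinearGroup

section CommRing

variable {n R : Type*} [Fintype n] [DecidableEq n] [CommRing R]

theorem trace_conj (g A : SpecialLinearGroup n R) :
    trace (↑(g * A * g⁻¹) : Matrix n n R) = trace (A : Matrix n n R) := by
  rw [coe_mul, coe_mul, trace_mul_cycle, ← coe_mul, inv_mul_cancel, coe_one, Matrix.one_mul]

theorem trace_mul_eq_zero_of_mem_center {Z B : SpecialLinearGroup n R}
    (hZ : Z ∈ Subgroup.center (SpecialLinearGroup n R)) (hB : trace (B : Matrix n n R) = 0) :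
    trace (↑(Z * B) : Matrix n n R) = 0 := by
  obtain ⟨r, -, hr⟩ := mem_center_iff.mp hZ
  rw [coe_mul, ← hr, scalar_apply, ← smul_eq_diagonal_mul, trace_smul, hB, smul_zero]

theorem trace_inv_fin_two (A : SL(2, R)) :
    trace (↑A⁻¹ : Matrix (Fin 2) (Fin 2) R) = trace (A : Matrix (Fin 2) (Fin 2) R) := by
  rw [coe_inv, adjugate_fin_two, trace_fin_two_of, trace_fin_two, add_comm]

theorem trace_mul_inv_fin_two (A B : SL(2, R)) :
    trace (↑(A * B⁻¹) : Matrix (Fin 2) (Fin 2) R) = trace (A : Matrix (Fin 2) (Fin 2) R) *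
      trace (B : Matrix (Fin 2) (Fin 2) R) - trace (↑(A * B) : Matrix (Fin 2) (Fin 2) R) := by
  simp only [coe_mul, coe_inv, adjugate_fin_two, trace_fin_two, mul_apply, Fin.sum_univ_two,
    of_apply, cons_val', cons_val_zero, cons_val_one, empty_val', cons_val_fin_one]
  ring

theorem mul_self_eq_neg_one_of_trace_eq_zero [Nontrivial R] {A : SL(2, R)}
    (hA : trace (A : Matrix (Fin 2) (Fin 2) R) = 0) :
    (A * A : Matrix (Fin 2) (Fin 2) R) = -1 := by
  have h := aeval_self_charpoly (A : Matrix (Fin 2) (Fin 2) R)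
  rw [charpoly_fin_two, hA, A.det_coe] at h
  simpa [sq, add_eq_zero_iff_eq_neg] using h

end CommRing

theorem exists_conj_eq_of_mul_eq_mul {n K : Type*} [Fintype n] [DecidableEq n] [Nonempty n]
    [Field K] [IsAlgClosed K] {M N : SpecialLinearGroup n K} {V : Matrix n n K} (hV : V.det ≠ 0)
    (h : (M : Matrix n n K) * V = V * N) :
    ∃ W : SpecialLinearGroup n K, W * M * W⁻¹ = N := by
  obtain ⟨s, hs⟩ := IsAlgClosed.exists_pow_nat_eq V.det (Fintype.card_pos (α := n))
  let W : SpecialLinearGroup n K := ⟨s⁻¹ • V, by rw [det_smul, inv_pow, hs, inv_mul_cancel₀ hV]⟩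
  have hW : M * W = W * N := Subtype.ext <| by
    change (M : Matrix n n K) * (s⁻¹ • V) = (s⁻¹ • V) * N
    rw [Matrix.mul_smul, Matrix.smul_mul, h]
  exact ⟨W⁻¹, by rw [inv_inv, mul_assoc, hW, inv_mul_cancel_left]⟩

section SpecialUnitary

variable (n R : Type*) [Fintype n] [DecidableEq n] [CommRing R] [StarRing R]

def specialUnitary : Subgroup (SpecialLinearGroup n R) where
  carrier := {A | (A : Matrix n n R) ∈ unitaryGroup n R}
  mul_mem' hA hB := by simpa only [Set.mem_ofPred_eq, coe_mul] using mul_mem hA hB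
  one_mem' := by simpa only [Set.mem_ofPred_eq, coe_one] using one_mem _
  inv_mem' {A} hA := by
    simp only [Set.mem_ofPred_eq, coe_inv] at hA ⊢
    rw [← (mem_unitaryGroup_iff_star_eq_adjugate A.det_coe).mp hA]
    exact Unitary.star_mem hA

variable {n R}

theorem mem_specialUnitary_fin_two_iff {A : SL(2, R)} :
    A ∈ specialUnitary (Fin 2) R ↔ A 1 1 = star (A 0 0) ∧ A 1 0 = -star (A 0 1) := by
  change (A : Matrix (Fin 2) (Fin 2) R) ∈ unitaryGroup (Fin 2) R ↔ _
  rw [mem_unitaryGroup_iff_star_eq_adjugate A.det_coe, adjugate_fin_two, ← Matrix.ext_iff]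
  constructor
  · intro h
    exact ⟨(h 0 0).symm, by simpa using congrArg star (h 0 1)⟩
  · rintro ⟨h11, h10⟩ i j
    fin_cases i <;> fin_cases j <;> simp [h11, h10]

end SpecialUnitary

local notation:1024 "↑ₘ" A:1024 => ((A : SL(2, ℂ)) : Matrix (Fin 2) (Fin 2) ℂ)

section SU2

variable {A : SL(2, ℂ)}

theorem trace_eq_two_mul_re_of_mem_specialUnitary (hA : A ∈ specialUnitary (Fin 2) ℂ) :
    trace ↑ₘA = (2 * (A 0 0).re : ℝ) := by
  rw [trace_fin_two, (mem_specialUnitary_fin_two_iff.mp hA).1, star_def, add_conj]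

theorem normSq_add_normSq_eq_one_of_mem_specialUnitary (hA : A ∈ specialUnitary (Fin 2) ℂ) :
    normSq (A 0 0) + normSq (A 0 1) = 1 := by
  have hdet := A.det_coe
  obtain ⟨h11, h10⟩ := mem_specialUnitary_fin_two_iff.mp hA
  rw [det_fin_two, h11, h10, star_def] at hdet
  apply ofReal_injective
  push_cast
  rw [← mul_conj, ← mul_conj]
  linear_combination hdet

theorem im_trace_eq_zero_of_mem_specialUnitary (hA : A ∈ specialUnitary (Fin 2) ℂ) :
    (trace ↑ₘA).im = 0 := by
  rw [trace_eq_two_mul_re_of_mem_specialUnitary hA, ofReal_im]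

theorem abs_re_trace_lt_two_of_mem_specialUnitary (hA : A ∈ specialUnitary (Fin 2) ℂ)
    (hZ : A ∉ Subgroup.center SL(2, ℂ)) : |(trace ↑ₘA).re| < 2 := by
  rw [trace_eq_two_mul_re_of_mem_specialUnitary hA, ofReal_re, abs_mul, abs_two]
  by_contra! hre
  have hnorm := normSq_add_normSq_eq_one_of_mem_specialUnitary hA
  rw [normSq_apply] at hnorm
  have hre1 : (A 0 0).re ^ 2 = 1 := by nlinarith [sq_abs (A 0 0).re, normSq_nonneg (A 0 1)]
  have him : (A 0 0).im = 0 := by nlinarith [normSq_nonneg (A 0 1)]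
  have hb : A 0 1 = 0 := normSq_eq_zero.mp (by nlinarith [normSq_nonneg (A 0 1)])
  have ha : A 0 0 = (A 0 0).re := Complex.ext rfl (by simpa using him)
  refine hZ (mem_center_iff.mpr ⟨A 0 0, by rw [Fintype.card_fin, ha]; exact_mod_cast hre1, ?_⟩)
  obtain ⟨h11, h10⟩ := mem_specialUnitary_fin_two_iff.mp hA
  ext i j
  fin_cases i <;> fin_cases j <;> simp [h11, h10, hb, conj_eq_iff_re.mpr ha.symm]

end SU2

theorem trace_coords_of_mem_specialUnitary {L₁ L₂ L₃ : SL(2, ℂ)}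
    (hL₁ : L₁ ∈ specialUnitary (Fin 2) ℂ) (hL₂ : L₂ ∈ specialUnitary (Fin 2) ℂ)
    (hL₃ : L₃ ∈ specialUnitary (Fin 2) ℂ) (h₁ : trace ↑ₘL₁ = 0) (h₃ : trace ↑ₘL₃ = 0)
    (hτ : trace ↑ₘ(L₁ * L₂ * L₃) ≠ 0) :
    (trace ↑ₘ(L₁ * L₂)).im = 0 ∧ |(trace ↑ₘ(L₁ * L₂)).re| < 2 ∧
      (trace ↑ₘ(L₂ * L₃)).im = 0 ∧ |(trace ↑ₘ(L₂ * L₃)).re| < 2 ∧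
      (trace ↑ₘ(L₂ * (L₁ * L₂ * L₃)⁻¹)).im = 0 := by
  have h₁₂ := mul_mem hL₁ hL₂
  have h₂₃ := mul_mem hL₂ hL₃
  refine ⟨im_trace_eq_zero_of_mem_specialUnitary h₁₂,
    abs_re_trace_lt_two_of_mem_specialUnitary h₁₂ fun hZ ↦ hτ ?_,
    im_trace_eq_zero_of_mem_specialUnitary h₂₃,
    abs_re_trace_lt_two_of_mem_specialUnitary h₂₃ fun hZ ↦ hτ ?_,
    im_trace_eq_zero_of_mem_specialUnitary (mul_mem hL₂ (inv_mem (mul_mem h₁₂ hL₃)))⟩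
  · exact trace_mul_eq_zero_of_mem_center hZ h₃
  · rw [mul_assoc, coe_mul, trace_mul_comm, ← coe_mul]
    exact trace_mul_eq_zero_of_mem_center hZ h₁

theorem trace_coords_of_conj_mem_specialUnitary {L₁ L₂ L₃ : SL(2, ℂ)} (U : SL(2, ℂ))
    (hU₁ : U * L₁ * U⁻¹ ∈ specialUnitary (Fin 2) ℂ) (hU₂ : U * L₂ * U⁻¹ ∈ specialUnitary (Fin 2) ℂ)
    (hU₃ : U * L₃ * U⁻¹ ∈ specialUnitary (Fin 2) ℂ) (h₁ : trace ↑ₘL₁ = 0) (h₃ : trace ↑ₘL₃ = 0)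
    (hτ : trace ↑ₘ(L₁ * L₂ * L₃) ≠ 0) :
    (trace ↑ₘ(L₁ * L₂)).im = 0 ∧ |(trace ↑ₘ(L₁ * L₂)).re| < 2 ∧
      (trace ↑ₘ(L₂ * L₃)).im = 0 ∧ |(trace ↑ₘ(L₂ * L₃)).re| < 2 ∧
      (trace ↑ₘ(L₂ * (L₁ * L₂ * L₃)⁻¹)).im = 0 := by
  have hconj : ∀ g h : SL(2, ℂ), U * g * U⁻¹ * (U * h * U⁻¹) = U * (g * h) * U⁻¹ := by
    intro g h; group
  have hconj_inv : ∀ g : SL(2, ℂ), (U * g * U⁻¹)⁻¹ = U * g⁻¹ * U⁻¹ := by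
    intro g; group
  have key := trace_coords_of_mem_specialUnitary hU₁ hU₂ hU₃ (by rwa [trace_conj])
    (by rwa [trace_conj]) (by rwa [hconj, hconj, trace_conj])
  simpa only [hconj, hconj_inv, trace_conj] using key

noncomputable def diagI : SL(2, ℂ) := diag2 I I_ne_zero

theorem coe_diagI : ↑ₘdiagI = !![I, 0; 0, -I] := by
  rw [diagI, diag2_coe', inv_I]

theorem exists_conj_eq_diagI {M : SL(2, ℂ)} (hM : trace ↑ₘM = 0) :
    ∃ V : SL(2, ℂ), V * M * V⁻¹ = diagI := by
  set m := ↑ₘM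
  set k := ↑ₘdiagI
  have hm : m * m = -1 := mul_self_eq_neg_one_of_trace_eq_zero hM
  have hk : k * k = -1 := mul_self_eq_neg_one_of_trace_eq_zero (by simp [coe_diagI])
  have intertwines (X : Matrix (Fin 2) (Fin 2) ℂ) :
      m * (X - m * X * k) = (X - m * X * k) * k := by
    rw [mul_sub, sub_mul, ← Matrix.mul_assoc, ← Matrix.mul_assoc, hm, Matrix.mul_assoc _ k, hk]
    simp only [Matrix.neg_mul, Matrix.one_mul, Matrix.mul_neg, Matrix.mul_one, sub_neg_eq_add,
      add_comm]
  -- The determinants of the intertwiners for `X = 1` and `X = [[0, 1], [-1, 0]]` sum to `4`,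
  -- so one of them is invertible.
  have hdet_sum : (1 - m * 1 * k).det + (!![0, 1; -1, 0] - m * !![0, 1; -1, 0] * k).det = 4 := by
    have hdet : m.det = 1 := M.det_coe
    rw [det_fin_two] at hdet
    simp only [k, coe_diagI, det_fin_two, sub_apply, one_apply_eq, one_apply_ne, mul_apply,
      Fin.sum_univ_two, of_apply, cons_val', cons_val_zero, cons_val_one, cons_val_fin_one, ne_eq,
      zero_ne_one, one_ne_zero, not_false_eq_true, mul_zero, mul_one, add_zero, zero_add, mul_neg,
      neg_mul, zero_sub, sub_neg_eq_add]
    linear_combination 2 * hdet - 2 * (m 0 0 * m 1 1 - m 0 1 * m 1 0) * I_sq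
  obtain ⟨X, hX⟩ : ∃ X, (X - m * X * k).det ≠ 0 := by
    by_contra! h
    rw [h, h] at hdet_sum
    norm_num at hdet_sum
  exact exists_conj_eq_of_mul_eq_mul hX (intertwines X)

theorem diag2_conj_mem_specialUnitary {A : SL(2, ℂ)} (hA : trace ↑ₘA = 0)
    {l : ℝ} (hl : (l : ℂ) ≠ 0) (ha : (A 0 0).re = 0) (hc : A 1 0 = -(l : ℂ) ^ 4 * conj (A 0 1)) :
    diag2 (l : ℂ) hl * A * (diag2 (l : ℂ) hl)⁻¹ ∈ specialUnitary (Fin 2) ℂ := by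
  obtain ⟨a, b, c, d, hA'⟩ : ∃ a b c d, ↑ₘA = !![a, b; c, d] := ⟨_, _, _, _, eta_fin_two _⟩
  rw [mem_specialUnitary_fin_two_iff, coe_mul, coe_mul, coe_inv, diag2_coe', adjugate_fin_two_of,
    hA']
  rw [hA', trace_fin_two_of] at hA
  simp only [hA', of_apply, cons_val', cons_val_zero, cons_val_one, empty_val',
    cons_val_fin_one] at ha hc
  have hd : d = -a := by linear_combination hA
  have hca : conj a = -a := Complex.ext (by simp [ha]) (by simp)
  simp only [mul_fin_two, of_apply, cons_val', cons_val_zero, cons_val_one, empty_val',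
    cons_val_fin_one, neg_zero, mul_zero, zero_mul, add_zero, zero_add, star_def, map_mul, map_inv₀,
    conj_ofReal, hca, hd, hc]
  constructor <;> field_simp

theorem trace_mul_diagI {A : SL(2, ℂ)} (hA : trace ↑ₘA = 0) :
    trace ↑ₘ(A * diagI) = 2 * I * A 0 0 := by
  rw [trace_fin_two] at hA
  simp only [coe_mul, coe_diagI, trace_fin_two, mul_apply, Fin.sum_univ_two, of_apply, cons_val',
    cons_val_zero, cons_val_one, empty_val', cons_val_fin_one]
  linear_combination (-I) * hA

theorem trace_mul_diagI_mul {A C : SL(2, ℂ)} (hA : trace ↑ₘA = 0) (hC : trace ↑ₘC = 0) :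
    trace ↑ₘ(A * diagI * C) = I * (A 1 0 * C 0 1 - A 0 1 * C 1 0) := by
  rw [trace_fin_two] at hA hC
  simp only [coe_mul, coe_diagI, trace_fin_two, mul_apply, Fin.sum_univ_two, of_apply, cons_val',
    cons_val_zero, cons_val_one, empty_val', cons_val_fin_one]
  linear_combination I * A 0 0 * hC - I * C 1 1 * hA

theorem trace_diagI_mul_diagI_mul {A C : SL(2, ℂ)} (hA : trace ↑ₘA = 0) (hC : trace ↑ₘC = 0) :
    trace ↑ₘ(diagI * A * diagI * C) = A 0 1 * C 1 0 + A 1 0 * C 0 1 - 2 * A 0 0 * C 0 0 := by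
  rw [trace_fin_two] at hA hC
  simp only [coe_mul, coe_diagI, trace_fin_two, mul_apply, Fin.sum_univ_two, of_apply, cons_val',
    cons_val_zero, cons_val_one, empty_val', cons_val_fin_one]
  linear_combination (A 0 0 * C 0 0 - A 1 0 * C 0 1 - A 0 1 * C 1 0 + A 1 1 * C 1 1) * I_sq +
    A 0 0 * hC - C 1 1 * hA

theorem re_eq_zero_and_exists_neg_of_trace_mul_diagI {A : SL(2, ℂ)} (hA : trace ↑ₘA = 0)
    (hx : (trace ↑ₘ(A * diagI)).im = 0) (hx' : |(trace ↑ₘ(A * diagI)).re| < 2) :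
    (A 0 0).re = 0 ∧ ∃ r : ℝ, r < 0 ∧ A 1 0 = r * conj (A 0 1) := by
  rw [trace_mul_diagI hA] at hx hx'
  have hre : (A 0 0).re = 0 := by simpa using hx
  have him : |(A 0 0).im| < 1 := by simpa using hx'
  refine ⟨hre, exists_neg_mul_conj_of_mul_eq_neg (p := (A 0 0).im ^ 2 - 1) ?_ ?_⟩
  · nlinarith [abs_lt.mp him, sq_abs (A 0 0).im]
  · have hdet := A.det_coe
    rw [trace_fin_two] at hA
    rw [det_fin_two] at hdet
    have ha : A 0 0 = (A 0 0).im * I := Complex.ext (by simpa using hre) (by simp)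
    push_cast
    linear_combination -hdet + A 0 0 * hA - (A 0 0 + (A 0 0).im * I) * ha - (A 0 0).im ^ 2 * I_sq

theorem exists_diag2_conj_mem_specialUnitary {A C : SL(2, ℂ)}
    (hA : trace ↑ₘA = 0) (hC : trace ↑ₘC = 0)
    (hx : (trace ↑ₘ(A * diagI)).im = 0) (hx' : |(trace ↑ₘ(A * diagI)).re| < 2)
    (hy : (trace ↑ₘ(diagI * C)).im = 0) (hy' : |(trace ↑ₘ(diagI * C)).re| < 2)
    (hτ : (trace ↑ₘ(A * diagI * C)).re ≠ 0) (hz : (trace ↑ₘ(diagI * A * diagI * C)).im = 0) :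
    ∃ (l : ℝ) (hl : (l : ℂ) ≠ 0),
      diag2 (l : ℂ) hl * A * (diag2 (l : ℂ) hl)⁻¹ ∈ specialUnitary (Fin 2) ℂ ∧
      diag2 (l : ℂ) hl * diagI * (diag2 (l : ℂ) hl)⁻¹ ∈ specialUnitary (Fin 2) ℂ ∧
      diag2 (l : ℂ) hl * C * (diag2 (l : ℂ) hl)⁻¹ ∈ specialUnitary (Fin 2) ℂ := by
  rw [coe_mul, trace_mul_comm, ← coe_mul] at hy hy'
  obtain ⟨ha, r, hr, hc⟩ := re_eq_zero_and_exists_neg_of_trace_mul_diagI hA hx hx'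
  obtain ⟨ha', s, -, hc'⟩ := re_eq_zero_and_exists_neg_of_trace_mul_diagI hC hy hy'
  have hrs : r = s := by
    apply eq_of_im_add_eq_zero_of_im_sub_ne_zero (b := A 0 1) (b' := C 0 1)
    · have e : r * conj (A 0 1) * C 0 1 + s * A 0 1 * conj (C 0 1) =
          trace ↑ₘ(diagI * A * diagI * C) + 2 * (A 0 0 * C 0 0) := by
        rw [trace_diagI_mul_diagI_mul hA hC, hc, hc']; ring
      rw [e, add_im, hz]
      simp [mul_im, ha, ha']
    · have e : trace ↑ₘ(A * diagI * C) =
          I * (r * conj (A 0 1) * C 0 1 - s * A 0 1 * conj (C 0 1)) := by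
        rw [trace_mul_diagI_mul hA hC, hc, hc']; ring
      rwa [e, mul_re, I_re, I_im, zero_mul, one_mul, zero_sub, neg_ne_zero] at hτ
  obtain ⟨l, hl, hl4⟩ : ∃ l : ℝ, 0 < l ∧ l ^ 4 = -r :=
    ⟨√√(-r), Real.sqrt_pos.mpr (Real.sqrt_pos.mpr (neg_pos.mpr hr)), by
      rw [show 4 = 2 * 2 by rfl, pow_mul, Real.sq_sqrt (Real.sqrt_nonneg _),
        Real.sq_sqrt (neg_nonneg.mpr hr.le)]⟩
  have hlr : -(l : ℂ) ^ 4 = r := by rw [← ofReal_pow, hl4, ofReal_neg, neg_neg]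
  have hl0 : (l : ℂ) ≠ 0 := ofReal_ne_zero.mpr hl.ne'
  exact ⟨l, hl0, diag2_conj_mem_specialUnitary hA hl0 ha (by rw [hc, hlr]),
    diag2_conj_mem_specialUnitary (by simp [coe_diagI]) hl0 (by simp [coe_diagI])
      (by simp [coe_diagI]),
    diag2_conj_mem_specialUnitary hC hl0 ha' (by rw [hc', hlr, hrs])⟩

theorem exists_conj_mem_specialUnitary {L₁ L₂ L₃ : SL(2, ℂ)}
    (h₁ : trace ↑ₘL₁ = 0) (h₂ : trace ↑ₘL₂ = 0) (h₃ : trace ↑ₘL₃ = 0)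
    (hx : (trace ↑ₘ(L₁ * L₂)).im = 0) (hx' : |(trace ↑ₘ(L₁ * L₂)).re| < 2)
    (hy : (trace ↑ₘ(L₂ * L₃)).im = 0) (hy' : |(trace ↑ₘ(L₂ * L₃)).re| < 2)
    (hτ : (trace ↑ₘ(L₁ * L₂ * L₃)).re ≠ 0) (hz : (trace ↑ₘ(L₂ * (L₁ * L₂ * L₃)⁻¹)).im = 0) :
    ∃ U : SL(2, ℂ), U * L₁ * U⁻¹ ∈ specialUnitary (Fin 2) ℂ ∧
      U * L₂ * U⁻¹ ∈ specialUnitary (Fin 2) ℂ ∧ U * L₃ * U⁻¹ ∈ specialUnitary (Fin 2) ℂ := by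
  obtain ⟨V, hV⟩ := exists_conj_eq_diagI h₂
  have hconj : ∀ g h : SL(2, ℂ), V * g * V⁻¹ * (V * h * V⁻¹) = V * (g * h) * V⁻¹ := by
    intro g h; group
  rw [trace_mul_inv_fin_two, h₂, zero_mul, zero_sub, neg_im, neg_eq_zero] at hz
  rw [← trace_conj V] at h₁ h₃ hx hx' hy hy' hτ hz
  rw [← hconj, hV] at hx hx' hy hy'
  rw [← hconj, ← hconj, hV] at hτ
  rw [← hconj, ← hconj, ← hconj, hV] at hz
  obtain ⟨l, hl, hA, hK, hC⟩ :=
    exists_diag2_conj_mem_specialUnitary h₁ h₃ hx hx' hy hy' hτ (by simpa only [mul_assoc] using hz)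
  refine ⟨diag2 (l : ℂ) hl * V, ?_, ?_, ?_⟩
  · convert hA using 1; group
  · convert hK using 1; rw [← hV]; group
  · convert hC using 1; group

end Matrix.SpecialLinearGroup

open Matrix.SpecialLinearGroup

theorem admissible_quadruple_unitarizable_iff_trace_coordinates_real_general
    (τ : ℝ) (hτ0 : 0 < τ)
    (L₁ L₂ L₃ L₄ : Matrix.SpecialLinearGroup (Fin 2) ℂ)
    (hprod : L₁ * L₂ * L₃ * L₄ = 1)
    (h1 : Matrix.trace (L₁ : Matrix (Fin 2) (Fin 2) ℂ) = 0)
    (h2 : Matrix.trace (L₂ : Matrix (Fin 2) (Fin 2) ℂ) = 0)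
    (h3 : Matrix.trace (L₃ : Matrix (Fin 2) (Fin 2) ℂ) = 0)
    (h4 : Matrix.trace (L₄ : Matrix (Fin 2) (Fin 2) ℂ) = (τ : ℂ))
    (x y z : ℂ)
    (hx : x = Matrix.trace ((L₁ : Matrix (Fin 2) (Fin 2) ℂ) * (L₂ : Matrix (Fin 2) (Fin 2) ℂ)))
    (hy : y = Matrix.trace ((L₂ : Matrix (Fin 2) (Fin 2) ℂ) * (L₃ : Matrix (Fin 2) (Fin 2) ℂ)))
    (hz : z = Matrix.trace ((L₂ : Matrix (Fin 2) (Fin 2) ℂ) * (L₄ : Matrix (Fin 2) (Fin 2) ℂ))) :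
    (∃ U : Matrix.SpecialLinearGroup (Fin 2) ℂ,
        ((U * L₁ * U⁻¹ : Matrix.SpecialLinearGroup (Fin 2) ℂ) : Matrix (Fin 2) (Fin 2) ℂ)
          ∈ Matrix.unitaryGroup (Fin 2) ℂ ∧
        ((U * L₂ * U⁻¹ : Matrix.SpecialLinearGroup (Fin 2) ℂ) : Matrix (Fin 2) (Fin 2) ℂ)
          ∈ Matrix.unitaryGroup (Fin 2) ℂ ∧
        ((U * L₃ * U⁻¹ : Matrix.SpecialLinearGroup (Fin 2) ℂ) : Matrix (Fin 2) (Fin 2) ℂ)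
          ∈ Matrix.unitaryGroup (Fin 2) ℂ ∧
        ((U * L₄ * U⁻¹ : Matrix.SpecialLinearGroup (Fin 2) ℂ) : Matrix (Fin 2) (Fin 2) ℂ)
          ∈ Matrix.unitaryGroup (Fin 2) ℂ)
    ↔ (x.im = 0 ∧ -2 < x.re ∧ x.re < 2 ∧ y.im = 0 ∧ -2 < y.re ∧ y.re < 2 ∧ z.im = 0) := by
  obtain rfl : L₄ = (L₁ * L₂ * L₃)⁻¹ := eq_inv_of_mul_eq_one_right hprod
  rw [trace_inv_fin_two] at h4
  subst hx hy hz
  simp only [← coe_mul]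
  constructor
  · rintro ⟨U, hU₁, hU₂, hU₃, -⟩
    obtain ⟨hxi, hxr, hyi, hyr, hzi⟩ := trace_coords_of_conj_mem_specialUnitary U hU₁ hU₂ hU₃ h1 h3
      (by rw [h4]; exact_mod_cast hτ0.ne')
    obtain ⟨hx₁, hx₂⟩ := abs_lt.mp hxr
    obtain ⟨hy₁, hy₂⟩ := abs_lt.mp hyr
    exact ⟨hxi, hx₁, hx₂, hyi, hy₁, hy₂, hzi⟩
  · rintro ⟨hxi, hx₁, hx₂, hyi, hy₁, hy₂, hzi⟩
    obtain ⟨U, hU₁, hU₂, hU₃⟩ := exists_conj_mem_specialUnitary h1 h2 h3 hxi (abs_lt.mpr ⟨hx₁, hx₂⟩)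
      hyi (abs_lt.mpr ⟨hy₁, hy₂⟩) (by rw [h4, ofReal_re]; exact hτ0.ne') hzi
    refine ⟨U, hU₁, hU₂, hU₃, ?_⟩
    have hU₄ : U * (L₁ * L₂ * L₃)⁻¹ * U⁻¹ = (U * L₁ * U⁻¹ * (U * L₂ * U⁻¹) * (U * L₃ * U⁻¹))⁻¹ := by
      group
    rw [hU₄]
    exact inv_mem (mul_mem (mul_mem hU₁ hU₂) hU₃)

theorem admissible_quadruple_unitarizable_iff_trace_coordinates_real
    (τ : ℝ) (hτ0 : 0 < τ) (hτ2 : τ < 2)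
    (L₁ L₂ L₃ L₄ : Matrix.SpecialLinearGroup (Fin 2) ℂ)
    (hprod : L₁ * L₂ * L₃ * L₄ = 1)
    (h1 : Matrix.trace (L₁ : Matrix (Fin 2) (Fin 2) ℂ) = 0)
    (h2 : Matrix.trace (L₂ : Matrix (Fin 2) (Fin 2) ℂ) = 0)
    (h3 : Matrix.trace (L₃ : Matrix (Fin 2) (Fin 2) ℂ) = 0)
    (h4 : Matrix.trace (L₄ : Matrix (Fin 2) (Fin 2) ℂ) = (τ : ℂ))
    (x y z : ℂ)
    (hx : x = Matrix.trace ((L₁ : Matrix (Fin 2) (Fin 2) ℂ) * (L₂ : Matrix (Fin 2) (Fin 2) ℂ)))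
    (hy : y = Matrix.trace ((L₂ : Matrix (Fin 2) (Fin 2) ℂ) * (L₃ : Matrix (Fin 2) (Fin 2) ℂ)))
    (hz : z = Matrix.trace ((L₂ : Matrix (Fin 2) (Fin 2) ℂ) * (L₄ : Matrix (Fin 2) (Fin 2) ℂ))) :
    (∃ U : Matrix.SpecialLinearGroup (Fin 2) ℂ,
        ((U * L₁ * U⁻¹ : Matrix.SpecialLinearGroup (Fin 2) ℂ) : Matrix (Fin 2) (Fin 2) ℂ)
          ∈ Matrix.unitaryGroup (Fin 2) ℂ ∧
        ((U * L₂ * U⁻¹ : Matrix.SpecialLinearGroup (Fin 2) ℂ) : Matrix (Fin 2) (Fin 2) ℂ)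
          ∈ Matrix.unitaryGroup (Fin 2) ℂ ∧
        ((U * L₃ * U⁻¹ : Matrix.SpecialLinearGroup (Fin 2) ℂ) : Matrix (Fin 2) (Fin 2) ℂ)
          ∈ Matrix.unitaryGroup (Fin 2) ℂ ∧
        ((U * L₄ * U⁻¹ : Matrix.SpecialLinearGroup (Fin 2) ℂ) : Matrix (Fin 2) (Fin 2) ℂ)
          ∈ Matrix.unitaryGroup (Fin 2) ℂ)
    ↔ (x.im = 0 ∧ -2 < x.re ∧ x.re < 2 ∧ y.im = 0 ∧ -2 < y.re ∧ y.re < 2 ∧ z.im = 0) :=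
  admissible_quadruple_unitarizable_iff_trace_coordinates_real_general τ hτ0 L₁ L₂ L₃ L₄ hprod h1 h2
    h3 h4 x y z hx hy hz
end

section
/- Let τ ∈ (0,2) be real and let L₁,L₂,L₃,L₄ ∈ SL(2,ℂ) be admissible for τ. If U, V ∈ SL(2,ℂ) both unitarize the quadruple, i.e. U·Lⱼ·U⁻¹ ∈ SU(2) and V·Lⱼ·V⁻¹ ∈ SU(2) for all j = 1,2,3,4, then V·U⁻¹ ∈ SU(2); that is, the unitarizer is unique up to left multiplication by an element of SU(2). -/
local notation "SL2aux" => Matrix.SpecialLinearGroup (Fin 2) ℂ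
local notation "M2aux" => Matrix (Fin 2) (Fin 2) ℂ

/-- Cross products of two matrices commuting with a common non-scalar matrix vanish. -/
theorem aux_cross (a b c d p q r p' q' r' : ℂ)
    (h1 : b*r = c*q) (h2 : q*(a-d) = 2*(p*b)) (h3 : 2*(p*c) = r*(a-d))
    (h1' : b*r' = c*q') (h2' : q'*(a-d) = 2*(p'*b)) (h3' : 2*(p'*c) = r'*(a-d))
    (hns : ¬(b = 0 ∧ c = 0 ∧ a = d)) :
    p*q' = p'*q ∧ p*r' = p'*r ∧ q*r' = q'*r := by
  by_cases hb : b = 0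
  · by_cases hc : c = 0
    · have had : a - d ≠ 0 := fun h => hns ⟨hb, hc, sub_eq_zero.mp h⟩
      have hpq : p*q' = p'*q := by
        have h : (a-d)*(p*q' - p'*q) = 0 := by linear_combination p*h2' - p'*h2
        exact sub_eq_zero.mp ((mul_eq_zero.mp h).resolve_left had)
      have hpr : p*r' = p'*r := by
        have h : (a-d)*(p*r' - p'*r) = 0 := by linear_combination p'*h3 - p*h3'
        exact sub_eq_zero.mp ((mul_eq_zero.mp h).resolve_left had)
      have hqr : q*r' = q'*r := by
        have h : (a-d)*(q*r' - q'*r) = 0 := by linear_combination q'*h3 - q*h3' - 2*c*hpq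
        exact sub_eq_zero.mp ((mul_eq_zero.mp h).resolve_left had)
      exact ⟨hpq, hpr, hqr⟩
    · have hq : q = 0 := by
        have : c * q = 0 := by linear_combination -h1 + r*hb
        exact (mul_eq_zero.mp this).resolve_left hc
      have hq' : q' = 0 := by
        have : c * q' = 0 := by linear_combination -h1' + r'*hb
        exact (mul_eq_zero.mp this).resolve_left hc
      have hpr : p*r' = p'*r := by
        have h : c*(p*r' - p'*r) = 0 := by linear_combination (r'*h3 - r*h3')/2
        exact sub_eq_zero.mp ((mul_eq_zero.mp h).resolve_left hc)
      exact ⟨by rw [hq, hq']; ring, hpr, by rw [hq, hq']; ring⟩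
  · have hpq : p*q' = p'*q := by
      have h : b*(p*q' - p'*q) = 0 := by linear_combination (q*h2' - q'*h2)/2
      exact sub_eq_zero.mp ((mul_eq_zero.mp h).resolve_left hb)
    have hpr : p*r' = p'*r := by
      have h : b*(p*r' - p'*r) = 0 := by linear_combination p*h1' - p'*h1 + c*hpq
      exact sub_eq_zero.mp ((mul_eq_zero.mp h).resolve_left hb)
    have hqr : q*r' = q'*r := by
      have h : b*(q*r' - q'*r) = 0 := by linear_combination q*h1' - q'*h1
      exact sub_eq_zero.mp ((mul_eq_zero.mp h).resolve_left hb)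
    exact ⟨hpq, hpr, hqr⟩

theorem aux_comm (w wi m : M2aux) (hwiw : wi * w = 1)
    (hm' : m * star m = 1)
    (hu : star (w * m * wi) * (w * m * wi) = 1) :
    (star w * w) * m = m * (star w * w) := by
  have hsw : star w * star wi = 1 := by rw [← star_mul, hwiw, star_one]
  have c1 : ∀ x : M2aux, star w * (star wi * x) = x := fun x => by
    rw [← mul_assoc, hsw, one_mul]
  have h0 := congrArg (fun X : M2aux => star w * X * w) hu
  simp only [star_mul, mul_assoc, mul_one, one_mul, hwiw] at h0
  rw [c1] at h0
  have key : star m * (star w * (w * m)) = star w * w := by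
    simpa [mul_assoc] using h0
  calc (star w * w) * m = star w * (w * m) := by rw [mul_assoc]
    _ = m * star m * (star w * (w * m)) := by rw [hm', one_mul]
    _ = m * (star m * (star w * (w * m))) := by rw [mul_assoc]
    _ = m * (star w * w) := by rw [key]

theorem aux_eqs (H m : M2aux) (h : H * m = m * H) (htr : Matrix.trace m = 0) :
    H 0 1 * m 1 0 = H 1 0 * m 0 1 ∧
    m 0 1 * (H 0 0 - H 1 1) = 2*(m 0 0 * H 0 1) ∧
    2*(m 0 0 * H 1 0) = m 1 0 * (H 0 0 - H 1 1) := by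
  have hm11 : m 1 1 = -(m 0 0) := by
    rw [Matrix.trace_fin_two] at htr; linear_combination htr
  have h00 := congrFun (congrFun h 0) 0
  have h01 := congrFun (congrFun h 0) 1
  have h10 := congrFun (congrFun h 1) 0
  simp only [Matrix.mul_apply, Fin.sum_univ_two] at h00 h01 h10
  refine ⟨by linear_combination h00, by linear_combination h01 - H 0 1 * hm11,
    by linear_combination h10 + H 1 0 * hm11⟩

theorem aux_trace3 (m1 m2 m3 : M2aux)
    (ht1 : Matrix.trace m1 = 0) (ht2 : Matrix.trace m2 = 0) (ht3 : Matrix.trace m3 = 0)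
    (hpq : m1 0 0 * m2 0 1 = m2 0 0 * m1 0 1)
    (hpr : m1 0 0 * m2 1 0 = m2 0 0 * m1 1 0)
    (hqr : m1 0 1 * m2 1 0 = m2 0 1 * m1 1 0) :
    Matrix.trace (m1 * m2 * m3) = 0 := by
  rw [Matrix.trace_fin_two] at ht1 ht2 ht3 ⊢
  have e1 : m1 1 1 = -(m1 0 0) := by linear_combination ht1
  have e2 : m2 1 1 = -(m2 0 0) := by linear_combination ht2
  have e3 : m3 1 1 = -(m3 0 0) := by linear_combination ht3
  simp only [Matrix.mul_apply, Fin.sum_univ_two]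
  rw [e1, e2, e3]
  linear_combination (m3 0 0)*hqr + (m3 1 0)*hpq - (m3 0 1)*hpr

theorem aux_trace_conj (g A : SL2aux) :
    Matrix.trace ((g * A * g⁻¹ : SL2aux) : M2aux) = Matrix.trace (A : M2aux) := by
  have h : ((g⁻¹ : SL2aux) : M2aux) * ((g * A : SL2aux) : M2aux) = (A : M2aux) := by
    rw [← Matrix.SpecialLinearGroup.coe_mul, inv_mul_cancel_left]
  calc Matrix.trace ((g * A * g⁻¹ : SL2aux) : M2aux)
      = Matrix.trace (((g * A : SL2aux) : M2aux) * ((g⁻¹ : SL2aux) : M2aux)) := by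
        rw [Matrix.SpecialLinearGroup.coe_mul]
    _ = Matrix.trace (((g⁻¹ : SL2aux) : M2aux) * ((g * A : SL2aux) : M2aux)) :=
        Matrix.trace_mul_comm _ _
    _ = _ := by rw [h]

theorem aux_trace_inv (A : SL2aux) :
    Matrix.trace ((A⁻¹ : SL2aux) : M2aux) = Matrix.trace (A : M2aux) := by
  rw [Matrix.SpecialLinearGroup.coe_inv, Matrix.adjugate_fin_two]
  simp [Matrix.trace_fin_two, add_comm]

theorem aux_entry00 (w : M2aux) : (star w * w) 0 0
    = ((Complex.normSq (w 0 0) + Complex.normSq (w 1 0) : ℝ) : ℂ) := by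
  simp [Matrix.mul_apply, Fin.sum_univ_two, Matrix.star_apply,
    Complex.normSq_eq_conj_mul_self]

theorem aux_scalar (w : M2aux) (hdet : Matrix.det (star w * w) = 1)
    (hb : (star w * w) 0 1 = 0) (hc : (star w * w) 1 0 = 0)
    (had : (star w * w) 0 0 = (star w * w) 1 1) :
    star w * w = 1 := by
  have hd2 : (star w * w) 0 0 * (star w * w) 0 0 = 1 := by
    rw [Matrix.det_fin_two] at hdet
    linear_combination hdet + (star w * w) 0 0 * had + (star w * w) 1 0 * hb
  have h00 := aux_entry00 w
  have hreal : ((Complex.normSq (w 0 0) + Complex.normSq (w 1 0) : ℝ)) = 1 := by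
    have h2' : ((Complex.normSq (w 0 0) + Complex.normSq (w 1 0) : ℝ))
        * ((Complex.normSq (w 0 0) + Complex.normSq (w 1 0) : ℝ)) = 1 := by
      exact_mod_cast h00 ▸ hd2
    nlinarith [Complex.normSq_nonneg (w 0 0), Complex.normSq_nonneg (w 1 0)]
  have h1 : (star w * w) 0 0 = 1 := by rw [h00, hreal]; norm_num
  ext i j
  fin_cases i <;> fin_cases j <;> simp [Matrix.one_apply, hb, hc, ← had, h1]

theorem unitarizer_unique_up_to_left_SU2_multiplication
    (τ : ℝ) (hτ0 : 0 < τ) (hτ2 : τ < 2)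
    (L₁ L₂ L₃ L₄ : Matrix.SpecialLinearGroup (Fin 2) ℂ)
    (hprod : L₁ * L₂ * L₃ * L₄ = 1)
    (h1 : Matrix.trace (L₁ : Matrix (Fin 2) (Fin 2) ℂ) = 0)
    (h2 : Matrix.trace (L₂ : Matrix (Fin 2) (Fin 2) ℂ) = 0)
    (h3 : Matrix.trace (L₃ : Matrix (Fin 2) (Fin 2) ℂ) = 0)
    (h4 : Matrix.trace (L₄ : Matrix (Fin 2) (Fin 2) ℂ) = (τ : ℂ))
    (U V : Matrix.SpecialLinearGroup (Fin 2) ℂ)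
    (hU1 : ((U * L₁ * U⁻¹ : Matrix.SpecialLinearGroup (Fin 2) ℂ) : Matrix (Fin 2) (Fin 2) ℂ)
      ∈ Matrix.unitaryGroup (Fin 2) ℂ)
    (hU2 : ((U * L₂ * U⁻¹ : Matrix.SpecialLinearGroup (Fin 2) ℂ) : Matrix (Fin 2) (Fin 2) ℂ)
      ∈ Matrix.unitaryGroup (Fin 2) ℂ)
    (hU3 : ((U * L₃ * U⁻¹ : Matrix.SpecialLinearGroup (Fin 2) ℂ) : Matrix (Fin 2) (Fin 2) ℂ)
      ∈ Matrix.unitaryGroup (Fin 2) ℂ)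
    (hU4 : ((U * L₄ * U⁻¹ : Matrix.SpecialLinearGroup (Fin 2) ℂ) : Matrix (Fin 2) (Fin 2) ℂ)
      ∈ Matrix.unitaryGroup (Fin 2) ℂ)
    (hV1 : ((V * L₁ * V⁻¹ : Matrix.SpecialLinearGroup (Fin 2) ℂ) : Matrix (Fin 2) (Fin 2) ℂ)
      ∈ Matrix.unitaryGroup (Fin 2) ℂ)
    (hV2 : ((V * L₂ * V⁻¹ : Matrix.SpecialLinearGroup (Fin 2) ℂ) : Matrix (Fin 2) (Fin 2) ℂ)
      ∈ Matrix.unitaryGroup (Fin 2) ℂ)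
    (hV3 : ((V * L₃ * V⁻¹ : Matrix.SpecialLinearGroup (Fin 2) ℂ) : Matrix (Fin 2) (Fin 2) ℂ)
      ∈ Matrix.unitaryGroup (Fin 2) ℂ)
    (hV4 : ((V * L₄ * V⁻¹ : Matrix.SpecialLinearGroup (Fin 2) ℂ) : Matrix (Fin 2) (Fin 2) ℂ)
      ∈ Matrix.unitaryGroup (Fin 2) ℂ) :
    ((V * U⁻¹ : Matrix.SpecialLinearGroup (Fin 2) ℂ) : Matrix (Fin 2) (Fin 2) ℂ)
      ∈ Matrix.unitaryGroup (Fin 2) ℂ := by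
  set w : M2aux := ((V * U⁻¹ : SL2aux) : M2aux) with hwdef
  set wi : M2aux := (((V * U⁻¹ : SL2aux)⁻¹ : SL2aux) : M2aux) with hwidef
  have hwiw : wi * w = 1 := by
    rw [hwdef, hwidef, ← Matrix.SpecialLinearGroup.coe_mul, inv_mul_cancel]
    rfl
  -- the unitarized matrices
  set m1 : M2aux := ((U * L₁ * U⁻¹ : SL2aux) : M2aux) with hm1def
  set m2 : M2aux := ((U * L₂ * U⁻¹ : SL2aux) : M2aux) with hm2def
  set m3 : M2aux := ((U * L₃ * U⁻¹ : SL2aux) : M2aux) with hm3def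
  -- V Lⱼ V⁻¹ = w mⱼ wi
  have hconj : ∀ L : SL2aux, ((V * L * V⁻¹ : SL2aux) : M2aux)
      = w * ((U * L * U⁻¹ : SL2aux) : M2aux) * wi := by
    intro L
    have hg : (V * L * V⁻¹ : SL2aux)
        = (V * U⁻¹) * (U * L * U⁻¹) * (V * U⁻¹)⁻¹ := by group
    rw [hg, Matrix.SpecialLinearGroup.coe_mul, Matrix.SpecialLinearGroup.coe_mul,
      hwdef, hwidef]
  -- commutation of H = star w * w with m1, m2
  have hcomm1 : (star w * w) * m1 = m1 * (star w * w) := by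
    refine aux_comm w wi m1 hwiw (Matrix.mem_unitaryGroup_iff.mp hU1) ?_
    have := Matrix.mem_unitaryGroup_iff'.mp hV1
    rwa [hconj L₁, ← hm1def] at this
  have hcomm2 : (star w * w) * m2 = m2 * (star w * w) := by
    refine aux_comm w wi m2 hwiw (Matrix.mem_unitaryGroup_iff.mp hU2) ?_
    have := Matrix.mem_unitaryGroup_iff'.mp hV2
    rwa [hconj L₂, ← hm2def] at this
  -- traces of m1 m2 m3
  have ht1 : Matrix.trace m1 = 0 := by rw [hm1def, aux_trace_conj, h1]
  have ht2 : Matrix.trace m2 = 0 := by rw [hm2def, aux_trace_conj, h2]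
  have ht3 : Matrix.trace m3 = 0 := by rw [hm3def, aux_trace_conj, h3]
  -- trace of the product is τ
  have htau : Matrix.trace (m1 * m2 * m3) = (τ : ℂ) := by
    have h123 : L₁ * L₂ * L₃ = L₄⁻¹ := eq_inv_of_mul_eq_one_left hprod
    have hSL : (U*L₁*U⁻¹)*(U*L₂*U⁻¹)*(U*L₃*U⁻¹) = U * L₄⁻¹ * U⁻¹ := by
      rw [← h123]; group
    have hMat : m1 * m2 * m3 = ((U * L₄⁻¹ * U⁻¹ : SL2aux) : M2aux) := by
      rw [hm1def, hm2def, hm3def, ← Matrix.SpecialLinearGroup.coe_mul,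
        ← Matrix.SpecialLinearGroup.coe_mul, hSL]
    rw [hMat, aux_trace_conj, aux_trace_inv, h4]
  rw [Matrix.mem_unitaryGroup_iff']
  -- it suffices to show star w * w = 1
  by_cases hsc : (star w * w) 0 1 = 0 ∧ (star w * w) 1 0 = 0
      ∧ (star w * w) 0 0 = (star w * w) 1 1
  · have hdet : Matrix.det (star w * w) = 1 := by
      rw [Matrix.det_mul, Matrix.star_eq_conjTranspose, Matrix.det_conjTranspose,
        hwdef, Matrix.SpecialLinearGroup.det_coe]
      simp
    exact aux_scalar w hdet hsc.1 hsc.2.1 hsc.2.2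
  · exfalso
    obtain ⟨e1, e2, e3⟩ := aux_eqs (star w * w) m1 hcomm1 ht1
    obtain ⟨e1', e2', e3'⟩ := aux_eqs (star w * w) m2 hcomm2 ht2
    obtain ⟨hpq, hpr, hqr⟩ := aux_cross ((star w * w) 0 0) ((star w * w) 0 1)
      ((star w * w) 1 0) ((star w * w) 1 1)
      (m1 0 0) (m1 0 1) (m1 1 0) (m2 0 0) (m2 0 1) (m2 1 0)
      e1 e2 e3 e1' e2' e3' hsc
    have h0 : Matrix.trace (m1 * m2 * m3) = 0 :=
      aux_trace3 m1 m2 m3 ht1 ht2 ht3 hpq hpr hqr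
    rw [htau] at h0
    exact (Complex.ofReal_ne_zero.mpr (ne_of_gt hτ0)) h0
end

section
/- Let τ ∈ (0,2) be real, let S = {(x,y,z) ∈ ℝ³ : x² + y² + z² + x·y·z − 4 + τ² = 0}, and let Uτ = {(x,y,z) ∈ S : |x| < 2 and |y| < 2}. Then Uτ = {(x,y,z) ∈ S : |x| ≤ 2 and |y| ≤ 2}; moreover Uτ is nonempty and connected, and Uτ is a connected component of S (equivalently, Uτ is both open and closed in S). -/
open Real

/-- The open unitary locus. -/
def Uset (τ : ℝ) : Set (ℝ × ℝ × ℝ) :=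
  {p | p.1 ^ 2 + p.2.1 ^ 2 + p.2.2 ^ 2 + p.1 * p.2.1 * p.2.2 - 4 + τ ^ 2 = 0
       ∧ |p.1| < 2 ∧ |p.2.1| < 2}

lemma joinedIn_of_fun {X : Type*} [TopologicalSpace X] {U : Set X} {f : ℝ → X}
    (hf : Continuous f) (h : ∀ t ∈ Set.Icc (0:ℝ) 1, f t ∈ U) :
    JoinedIn U (f 0) (f 1) :=
  ⟨⟨⟨fun t => f t.1, hf.comp continuous_subtype_val⟩, rfl, rfl⟩,
    fun t => h t.1 t.2⟩

example : True := trivial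

lemma sqrt_facts (τ : ℝ) (hτ0 : 0 < τ) (hτ2 : τ < 2) :
    (Real.sqrt (4 - τ^2))^2 = 4 - τ^2 ∧ 0 ≤ Real.sqrt (4 - τ^2) ∧ Real.sqrt (4 - τ^2) < 2 := by
  have h4 : (0:ℝ) ≤ 4 - τ^2 := by nlinarith
  have h1 : (Real.sqrt (4 - τ^2))^2 = 4 - τ^2 := Real.sq_sqrt h4
  have h0 : 0 ≤ Real.sqrt (4 - τ^2) := Real.sqrt_nonneg _
  exact ⟨h1, h0, by nlinarith⟩

lemma circle_path (τ : ℝ) (hτ0 : 0 < τ) (hτ2 : τ < 2) :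
    JoinedIn (Uset τ) (0, 0, Real.sqrt (4 - τ^2)) (0, 0, -Real.sqrt (4 - τ^2)) := by
  obtain ⟨hc2, hc0, hclt⟩ := sqrt_facts τ hτ0 hτ2
  set c := Real.sqrt (4 - τ^2) with hc
  have key : JoinedIn (Uset τ) (c * Real.sin (π * 0), 0, c * Real.cos (π * 0))
      (c * Real.sin (π * 1), 0, c * Real.cos (π * 1)) := by
    apply joinedIn_of_fun (f := fun t => (c * Real.sin (π * t), 0, c * Real.cos (π * t)))
    · fun_prop
    · intro t _
      refine ⟨?_, ?_, by simp⟩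
      · have := Real.sin_sq_add_cos_sq (π * t)
        simp only
        nlinarith [this]
      · simp only
        have h1 : |Real.sin (π * t)| ≤ 1 := Real.abs_sin_le_one _
        have : |c * Real.sin (π * t)| = c * |Real.sin (π * t)| := by
          rw [abs_mul, abs_of_nonneg hc0]
        rw [this]
        nlinarith [abs_nonneg (Real.sin (π * t))]
  simpa using key

lemma shrink_path (τ : ℝ) (hτ0 : 0 < τ) (hτ2 : τ < 2) {x y z : ℝ}
    (heq : x^2 + y^2 + z^2 + x*y*z - 4 + τ^2 = 0) (hx : |x| < 2) (hy : |y| < 2) :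
    ∃ ε : ℝ, (ε = 1 ∨ ε = -1) ∧
      JoinedIn (Uset τ) (x, y, z) (0, 0, ε * Real.sqrt (4 - τ^2)) := by
  obtain ⟨hc2, hc0, hclt⟩ := sqrt_facts τ hτ0 hτ2
  set ε : ℝ := if 0 ≤ 2*z + x*y then 1 else -1 with hε
  have hε2 : ε^2 = 1 := by
    rw [hε]; split <;> norm_num
  have hx2 : x^2 < 4 := by nlinarith [abs_nonneg x, sq_abs x]
  have hy2 : y^2 < 4 := by nlinarith [abs_nonneg y, sq_abs y]
  -- discriminant at start
  have hD0 : (2*z + x*y)^2 = (4 - x^2) * (4 - y^2) - 4*τ^2 := by nlinarith [heq]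
  refine ⟨ε, by rw [hε]; split <;> simp, ?_⟩
  set f : ℝ → ℝ × ℝ × ℝ := fun t =>
    (x * (1 - t), y * (1 - t),
      (-(x*y*(1-t)^2) + ε * Real.sqrt ((4 - x^2*(1-t)^2) * (4 - y^2*(1-t)^2) - 4*τ^2)) / 2)
    with hf
  have hcont : Continuous f := by
    rw [hf]; fun_prop
  have hmem : ∀ t ∈ Set.Icc (0:ℝ) 1, f t ∈ Uset τ := by
    intro t ht
    obtain ⟨ht0, ht1⟩ := ht
    set s := 1 - t with hs
    have hs0 : 0 ≤ s := by simp [hs]; linarith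
    have hs1 : s ≤ 1 := by simp [hs]; linarith
    have hDt : 0 ≤ (4 - x^2*s^2) * (4 - y^2*s^2) - 4*τ^2 := by
      nlinarith [sq_nonneg (2*z + x*y), sq_nonneg x, sq_nonneg y, sq_nonneg s,
        mul_nonneg (sq_nonneg x) (sub_nonneg.mpr (by nlinarith : s^2 ≤ (1:ℝ))),
        mul_nonneg (sq_nonneg y) (sub_nonneg.mpr (by nlinarith : s^2 ≤ (1:ℝ)))]
    have hr2 : (Real.sqrt ((4 - x^2*s^2) * (4 - y^2*s^2) - 4*τ^2))^2
        = (4 - x^2*s^2) * (4 - y^2*s^2) - 4*τ^2 := Real.sq_sqrt hDt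
    set r := Real.sqrt ((4 - x^2*s^2) * (4 - y^2*s^2) - 4*τ^2) with hr
    refine ⟨?_, ?_, ?_⟩
    · show (x*s)^2 + (y*s)^2 + ((-(x*y*s^2) + ε * r)/2)^2
        + (x*s) * (y*s) * ((-(x*y*s^2) + ε * r)/2) - 4 + τ^2 = 0
      linear_combination (r^2/4) * hε2 + (1/4) * hr2
    · show |x * s| < 2
      calc |x * s| = |x| * |s| := abs_mul _ _
        _ ≤ |x| * 1 := by
            apply mul_le_mul_of_nonneg_left _ (abs_nonneg x)
            rw [abs_of_nonneg hs0]; exact hs1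
        _ < 2 := by linarith
    · show |y * s| < 2
      calc |y * s| = |y| * |s| := abs_mul _ _
        _ ≤ |y| * 1 := by
            apply mul_le_mul_of_nonneg_left _ (abs_nonneg y)
            rw [abs_of_nonneg hs0]; exact hs1
        _ < 2 := by linarith
  have hjoin := joinedIn_of_fun hcont hmem
  have hD0' : Real.sqrt ((4 - x^2*(1-(0:ℝ))^2) * (4 - y^2*(1-(0:ℝ))^2) - 4*τ^2)
      = |2*z + x*y| := by
    norm_num
    rw [← hD0, Real.sqrt_sq_eq_abs]
  have hf0 : f 0 = (x, y, z) := by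
    show (x*(1-(0:ℝ)), y*(1-(0:ℝ)),
      (-(x*y*(1-(0:ℝ))^2) + ε * Real.sqrt ((4 - x^2*(1-(0:ℝ))^2) * (4 - y^2*(1-(0:ℝ))^2) - 4*τ^2))/2) = _
    rw [hD0']
    simp only [Prod.mk.injEq]
    refine ⟨by ring, by ring, ?_⟩
    rw [hε]
    split
    · rename_i h
      rw [abs_of_nonneg h]; ring
    · rename_i h
      rw [abs_of_neg (by linarith)]; ring
  have hsq1 : ((4:ℝ) - x^2*(1-(1:ℝ))^2) * (4 - y^2*(1-(1:ℝ))^2) - 4*τ^2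
      = (2 * Real.sqrt (4 - τ^2))^2 := by
    rw [mul_pow, hc2]; ring
  have hf1 : f 1 = (0, 0, ε * Real.sqrt (4 - τ^2)) := by
    show (x*(1-(1:ℝ)), y*(1-(1:ℝ)),
      (-(x*y*(1-(1:ℝ))^2) + ε * Real.sqrt ((4 - x^2*(1-(1:ℝ))^2) * (4 - y^2*(1-(1:ℝ))^2) - 4*τ^2))/2) = _
    rw [hsq1, Real.sqrt_sq (by positivity)]
    simp only [Prod.mk.injEq]
    refine ⟨by ring, by ring, by ring⟩
  rw [hf0, hf1] at hjoin
  exact hjoin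

lemma Uset_pathConnected (τ : ℝ) (hτ0 : 0 < τ) (hτ2 : τ < 2) :
    IsPathConnected (Uset τ) := by
  obtain ⟨hc2, hc0, hclt⟩ := sqrt_facts τ hτ0 hτ2
  have hbase : (0, 0, Real.sqrt (4 - τ^2)) ∈ Uset τ := by
    refine ⟨by simp only; nlinarith, by simp, by simp⟩
  refine ⟨(0, 0, Real.sqrt (4 - τ^2)), hbase, ?_⟩
  rintro ⟨x, y, z⟩ ⟨heq, hx, hy⟩
  obtain ⟨ε, hε, hjoin⟩ := shrink_path τ hτ0 hτ2 heq hx hy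
  rcases hε with rfl | rfl
  · rw [one_mul] at hjoin
    exact hjoin.symm
  · have := circle_path τ hτ0 hτ2
    rw [show (-1 : ℝ) * Real.sqrt (4 - τ^2) = -Real.sqrt (4 - τ^2) by ring] at hjoin
    exact this.trans hjoin.symm

theorem unitary_locus_is_connected_component_of_real_character_variety
    (τ : ℝ) (hτ0 : 0 < τ) (hτ2 : τ < 2) :
    let S : Set (ℝ × ℝ × ℝ) :=
      {p | p.1 ^ 2 + p.2.1 ^ 2 + p.2.2 ^ 2 + p.1 * p.2.1 * p.2.2 - 4 + τ ^ 2 = 0}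
    let U : Set (ℝ × ℝ × ℝ) := {p ∈ S | |p.1| < 2 ∧ |p.2.1| < 2}
    U = {p ∈ S | |p.1| ≤ 2 ∧ |p.2.1| ≤ 2} ∧
    U.Nonempty ∧
    IsConnected U ∧
    IsClopen (Subtype.val ⁻¹' U : Set S) := by
  intro S U
  have hUU : U = Uset τ := rfl
  -- no point of S has |x| = 2 or |y| = 2
  have hkey : ∀ p ∈ S, |p.1| ≤ 2 → |p.2.1| ≤ 2 → |p.1| < 2 ∧ |p.2.1| < 2 := by
    rintro ⟨x, y, z⟩ hp hx hy
    have hp' : x^2 + y^2 + z^2 + x*y*z - 4 + τ^2 = 0 := hp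
    have hx2 : x^2 ≤ 4 := by nlinarith [abs_nonneg x, sq_abs x]
    have hy2 : y^2 ≤ 4 := by nlinarith [abs_nonneg y, sq_abs y]
    have hx4 : x^2 ≠ 4 := by
      intro h
      have hxz : x^2 * z^2 = 4 * z^2 := by rw [h]
      nlinarith [sq_nonneg (2*y + x*z), mul_pos hτ0 hτ0]
    have hy4 : y^2 ≠ 4 := by
      intro h
      have hyz : y^2 * z^2 = 4 * z^2 := by rw [h]
      nlinarith [sq_nonneg (2*x + y*z), mul_pos hτ0 hτ0]
    constructor
    · nlinarith [abs_nonneg x, sq_abs x, lt_of_le_of_ne hx2 hx4]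
    · nlinarith [abs_nonneg y, sq_abs y, lt_of_le_of_ne hy2 hy4]
  have hset : U = {p ∈ S | |p.1| ≤ 2 ∧ |p.2.1| ≤ 2} := by
    ext p
    constructor
    · rintro ⟨hpS, h1, h2⟩
      exact ⟨hpS, le_of_lt h1, le_of_lt h2⟩
    · rintro ⟨hpS, h1, h2⟩
      exact ⟨hpS, hkey p hpS h1 h2⟩
  have hpc : IsPathConnected U := hUU ▸ Uset_pathConnected τ hτ0 hτ2
  refine ⟨hset, hpc.isConnected.nonempty, hpc.isConnected, ?_, ?_⟩
  · -- closed
    have : (Subtype.val ⁻¹' U : Set S)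
        = Subtype.val ⁻¹' {p : ℝ × ℝ × ℝ | |p.1| ≤ 2 ∧ |p.2.1| ≤ 2} := by
      ext ⟨p, hp⟩
      simp only [Set.mem_preimage, hset, Set.mem_setOf_eq]
      exact ⟨fun h => h.2, fun h => ⟨hp, h⟩⟩
    rw [this]
    apply IsClosed.preimage continuous_subtype_val
    exact IsClosed.inter (isClosed_le (continuous_abs.comp continuous_fst) continuous_const)
      (isClosed_le (continuous_abs.comp (continuous_fst.comp continuous_snd)) continuous_const)
  · -- open
    have : (Subtype.val ⁻¹' U : Set S)
        = Subtype.val ⁻¹' {p : ℝ × ℝ × ℝ | |p.1| < 2 ∧ |p.2.1| < 2} := by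
      ext ⟨p, hp⟩
      simp only [Set.mem_preimage, Set.mem_setOf_eq]
      exact ⟨fun h => h.2, fun h => ⟨hp, h⟩⟩
    rw [this]
    apply IsOpen.preimage continuous_subtype_val
    exact IsOpen.inter (isOpen_lt (continuous_abs.comp continuous_fst) continuous_const)
      (isOpen_lt (continuous_abs.comp (continuous_fst.comp continuous_snd)) continuous_const)
end

section
/- Fix a real ρ > 1, an integer n ≥ 1, and μ₁,…,μₙ ∈ ℂ with |μᵢ| < ρ for all i. Let (u_k)_{k≥0} be a complex sequence with ‖u‖_ρ := ∑_{k≥0} |u_k|·ρᵏ < ∞, so that u(λ) = ∑_{k≥0} u_k·λᵏ defines a holomorphic function on the disc |λ| < ρ. Then there exist a unique complex sequence (q_k)_{k≥0} with ∑_{k≥0} |q_k|·ρᵏ < ∞ and a unique polynomial r of degree < n such that u(λ) = (λ−μ₁)⋯(λ−μₙ)·q(λ) + r(λ) for all |λ| < ρ, where q(λ) = ∑_{k≥0} q_k·λᵏ. Moreover the quotient satisfies the norm bound ∑_{k≥0} |q_k|·ρᵏ ≤ ‖u‖_ρ / ((ρ−|μ₁|)⋯(ρ−|μₙ|)). -/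
/-!
Division by a single factor `z - μ` is explicit: the quotient has coefficients
`q_k = ∑_j u_{k+j+1} μ^j` and the remainder is the constant `u(μ) = u_0 + μ q_0`. Summing the
nonnegative double series `∑_{j,k} |u_{k+j+1}| |μ|^j ρ^k` row by row, each row is a tail of
`‖u‖_ρ` times `|μ|^j / ρ^(j+1)`, which gives `‖q‖_ρ ≤ ‖u‖_ρ / (ρ - |μ|)`; induction on `n`
yields existence and the product bound.

For uniqueness, suppose `P Q = r` on the disc with `P = ∏ (z - μ_i)`, `Q` a power series and
`deg r < n`. Each `μ_i` is a root of `r`, and cancelling `z - μ_i` (at `μ_i` itself by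
continuity) shows `P ∣ r`; hence `r = 0`, so `Q` vanishes on the disc and its coefficients
vanish by uniqueness of power series expansions.
-/

open Polynomial Topology Metric Set

section PowerSeries

variable {ρ : ℝ} {q : ℕ → ℂ}

lemma summable_mul_pow_of_norm_le (hq : Summable fun k => ‖q k‖ * ρ ^ k) {z : ℂ}
    (hz : ‖z‖ ≤ ρ) : Summable fun k => q k * z ^ k :=
  hq.of_norm_bounded fun k => by
    rw [norm_mul, norm_pow]
    gcongr

lemma continuousOn_tsum_mul_pow (hq : Summable fun k => ‖q k‖ * ρ ^ k) :
    ContinuousOn (fun z : ℂ => ∑' k, q k * z ^ k) (ball 0 ρ) :=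
  continuousOn_tsum (fun k => (continuous_const.mul (continuous_pow k)).continuousOn) hq
    fun k z hz => by
      rw [norm_mul, norm_pow]
      gcongr
      exact (mem_ball_zero_iff.mp hz).le

lemma eq_zero_of_tsum_mul_pow_eq_zero (hρ : 0 < ρ) (hq : Summable fun k => ‖q k‖ * ρ ^ k)
    (h : ∀ z : ℂ, ‖z‖ < ρ → ∑' k, q k * z ^ k = 0) : q = 0 := by
  set p := FormalMultilinearSeries.ofScalars ℂ q
  have hp : HasFPowerSeriesOnBall p.sum p 0 p.radius := by
    refine p.hasFPowerSeriesOnBall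
      (lt_of_lt_of_le ?_ (p.le_radius_of_summable (r := ρ.toNNReal) ?_))
    · simpa using hρ
    · simpa [p, FormalMultilinearSeries.ofScalars_norm, hρ.le] using hq
  have hsum : p.sum =ᶠ[𝓝 0] 0 := by
    filter_upwards [ball_mem_nhds 0 hρ] with z hz
    change FormalMultilinearSeries.ofScalarsSum q z = 0
    simpa [FormalMultilinearSeries.ofScalarsSum_eq_tsum] using h z (mem_ball_zero_iff.mp hz)
  exact (FormalMultilinearSeries.ofScalars_series_eq_zero ℂ (c := q)).mp
    (hp.hasFPowerSeriesAt.eq_zero_of_eventually hsum)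

end PowerSeries

lemma eqOn_of_sub_mul_eq_sub_mul {𝕜 : Type*} [NontriviallyNormedField 𝕜] {s : Set 𝕜}
    (hs : IsOpen s) {F G : 𝕜 → 𝕜} (hF : ContinuousOn F s) (hG : ContinuousOn G s) (μ : 𝕜)
    (h : ∀ z ∈ s, (z - μ) * F z = (z - μ) * G z) : EqOn F G s :=
  EqOn.of_subset_closure (s := s ∩ {μ}ᶜ)
    (fun z hz => mul_left_cancel₀ (sub_ne_zero.mpr hz.2) (h z hz.1)) hF hG inter_subset_left
    ((dense_compl_singleton μ).open_subset_closure_inter hs)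

section Majorant

variable {v : ℕ → ℝ} {a ρ : ℝ}

lemma summable_shift_mul_pow_mul_pow_and_tsum_le (hv : 0 ≤ v) (ha : 0 ≤ a) (haρ : a < ρ)
    (hsum : Summable fun m => v m * ρ ^ m) :
    Summable (fun p : ℕ × ℕ => v (p.2 + p.1 + 1) * a ^ p.1 * ρ ^ p.2) ∧
      ∑' p : ℕ × ℕ, v (p.2 + p.1 + 1) * a ^ p.1 * ρ ^ p.2 ≤ (∑' m, v m * ρ ^ m) / (ρ - a) := by
  have hρ : 0 < ρ := ha.trans_lt haρ
  set T := ∑' m, v m * ρ ^ m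
  have hgeom : HasSum (fun j => (a / ρ) ^ j / ρ) (ρ - a)⁻¹ := by
    have h := (hasSum_geometric_of_lt_one (by positivity) ((div_lt_one hρ).mpr haρ)).div_const ρ
    have : ρ - a ≠ 0 := (sub_pos.mpr haρ).ne'
    rwa [show (1 - a / ρ)⁻¹ / ρ = (ρ - a)⁻¹ by field_simp] at h
  have htail : ∀ j, ∑' k, v (k + (j + 1)) * ρ ^ (k + (j + 1)) ≤ T := fun j =>
    Summable.tsum_le_tsum_of_inj (· + (j + 1)) (add_left_injective _)
      (fun m _ => mul_nonneg (hv m) (by positivity)) (fun _ => le_rfl)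
      ((summable_nat_add_iff (f := fun m => v m * ρ ^ m) _).mpr hsum) hsum
  have hrow : ∀ j, HasSum (fun k => v (k + j + 1) * a ^ j * ρ ^ k)
      ((a / ρ) ^ j / ρ * ∑' k, v (k + (j + 1)) * ρ ^ (k + (j + 1))) := fun j => by
    refine (((summable_nat_add_iff (f := fun m => v m * ρ ^ m) (j + 1)).mpr hsum).hasSum.mul_left
      ((a / ρ) ^ j / ρ)).congr_fun fun k => ?_
    rw [div_pow, pow_add, pow_succ, ← add_assoc]
    field_simp
  have hrow_le : ∀ j, ∑' k, v (k + j + 1) * a ^ j * ρ ^ k ≤ (a / ρ) ^ j / ρ * T := fun j => by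
    rw [(hrow j).tsum_eq]
    gcongr
    exact htail j
  have hpos : ∀ p : ℕ × ℕ, 0 ≤ v (p.2 + p.1 + 1) * a ^ p.1 * ρ ^ p.2 := fun p => by
    have : 0 ≤ v (p.2 + p.1 + 1) := hv _
    positivity
  have hsummable : Summable (fun p : ℕ × ℕ => v (p.2 + p.1 + 1) * a ^ p.1 * ρ ^ p.2) :=
    (summable_prod_of_nonneg hpos).mpr ⟨fun j => (hrow j).summable,
      (hgeom.summable.mul_right T).of_nonneg_of_le (fun j => tsum_nonneg fun k => hpos (j, k))
        hrow_le⟩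
  refine ⟨hsummable, ?_⟩
  calc ∑' p : ℕ × ℕ, v (p.2 + p.1 + 1) * a ^ p.1 * ρ ^ p.2
      = ∑' j, ∑' k, v (k + j + 1) * a ^ j * ρ ^ k := hsummable.tsum_prod
    _ ≤ ∑' j, (a / ρ) ^ j / ρ * T :=
      Summable.tsum_le_tsum hrow_le hsummable.prod (hgeom.summable.mul_right T)
    _ = T / (ρ - a) := by rw [tsum_mul_right, hgeom.tsum_eq, inv_mul_eq_div]

end Majorant

lemma hasSum_mul_pow_of_eq_add_mul {R : Type*} [CommRing R] [TopologicalSpace R]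
    [IsTopologicalRing R] {u q : ℕ → R} {μ z Q : R} (hrec : ∀ k, q k = u (k + 1) + μ * q (k + 1))
    (hQ : HasSum (fun k => q k * z ^ k) Q) :
    HasSum (fun k => u k * z ^ k) ((z - μ) * Q + (u 0 + μ * q 0)) := by
  have hshift : HasSum (fun k => q (k + 1) * z ^ (k + 1)) (Q - q 0) := by
    simpa using (hasSum_nat_add_iff' 1).mpr hQ
  have htail : HasSum (fun k => u (k + 1) * z ^ (k + 1)) (z * Q - μ * (Q - q 0)) :=
    ((hQ.mul_left z).sub (hshift.mul_left μ)).congr_fun fun k => by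
      rw [hrec k]
      ring
  refine (hasSum_nat_add_iff' 1).mp ?_
  rwa [Finset.sum_range_one, pow_zero, mul_one,
    show (z - μ) * Q + (u 0 + μ * q 0) - u 0 = z * Q - μ * (Q - q 0) by ring]

/-- The coefficients of `(u(z) - u(μ)) / (z - μ)`. -/
noncomputable def divSubCoeff {R : Type*} [Semiring R] [TopologicalSpace R] (u : ℕ → R) (μ : R)
    (k : ℕ) : R :=
  ∑' j, u (k + j + 1) * μ ^ j

section DivSub

variable {ρ : ℝ} {u : ℕ → ℂ} {μ : ℂ}

lemma summable_norm_shift_mul_pow (hμ : ‖μ‖ < ρ) (hu : Summable fun k => ‖u k‖ * ρ ^ k) :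
    Summable fun p : ℕ × ℕ => ‖u (p.2 + p.1 + 1)‖ * ‖μ‖ ^ p.1 * ρ ^ p.2 :=
  (summable_shift_mul_pow_mul_pow_and_tsum_le (fun m => norm_nonneg (u m)) (norm_nonneg μ) hμ hu).1

lemma summable_divSubCoeff_terms (hμ : ‖μ‖ < ρ) (hu : Summable fun k => ‖u k‖ * ρ ^ k) (k : ℕ) :
    Summable fun j => u (k + j + 1) * μ ^ j := by
  have hρ : ρ ^ k ≠ 0 := pow_ne_zero k ((norm_nonneg μ).trans_lt hμ).ne'
  refine ((summable_mul_right_iff hρ).mp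
    ((summable_norm_shift_mul_pow hμ hu).prod_symm.prod_factor k)).of_norm_bounded fun j => ?_
  rw [norm_mul, norm_pow]
  exact le_rfl

lemma norm_divSubCoeff_mul_pow_le (hμ : ‖μ‖ < ρ) (hu : Summable fun k => ‖u k‖ * ρ ^ k) (k : ℕ) :
    ‖divSubCoeff u μ k‖ * ρ ^ k ≤ ∑' j, ‖u (k + j + 1)‖ * ‖μ‖ ^ j * ρ ^ k := by
  have hρ : 0 ≤ ρ := (norm_nonneg μ).trans hμ.le
  rw [tsum_mul_right]
  gcongr
  simpa only [divSubCoeff, norm_mul, norm_pow] using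
    norm_tsum_le_tsum_norm (summable_divSubCoeff_terms hμ hu k).norm

lemma summable_norm_divSubCoeff_mul_pow (hμ : ‖μ‖ < ρ) (hu : Summable fun k => ‖u k‖ * ρ ^ k) :
    Summable fun k => ‖divSubCoeff u μ k‖ * ρ ^ k :=
  (summable_norm_shift_mul_pow hμ hu).prod_symm.prod.of_nonneg_of_le
    (fun k => mul_nonneg (norm_nonneg _) (pow_nonneg ((norm_nonneg μ).trans hμ.le) k))
    (norm_divSubCoeff_mul_pow_le hμ hu)

lemma tsum_norm_divSubCoeff_mul_pow_le (hμ : ‖μ‖ < ρ) (hu : Summable fun k => ‖u k‖ * ρ ^ k) :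
    ∑' k, ‖divSubCoeff u μ k‖ * ρ ^ k ≤ (∑' k, ‖u k‖ * ρ ^ k) / (ρ - ‖μ‖) := by
  have hF := summable_norm_shift_mul_pow hμ hu
  calc ∑' k, ‖divSubCoeff u μ k‖ * ρ ^ k
      ≤ ∑' k, ∑' j, ‖u (k + j + 1)‖ * ‖μ‖ ^ j * ρ ^ k :=
        Summable.tsum_le_tsum (norm_divSubCoeff_mul_pow_le hμ hu)
          (summable_norm_divSubCoeff_mul_pow hμ hu) hF.prod_symm.prod
    _ = ∑' p : ℕ × ℕ, ‖u (p.2 + p.1 + 1)‖ * ‖μ‖ ^ p.1 * ρ ^ p.2 :=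
        (hF.tsum_comm (f := fun j k => ‖u (k + j + 1)‖ * ‖μ‖ ^ j * ρ ^ k)).trans hF.tsum_prod.symm
    _ ≤ _ := (summable_shift_mul_pow_mul_pow_and_tsum_le (fun m => norm_nonneg (u m))
        (norm_nonneg μ) hμ hu).2

lemma divSubCoeff_eq_add_mul (hμ : ‖μ‖ < ρ) (hu : Summable fun k => ‖u k‖ * ρ ^ k) (k : ℕ) :
    divSubCoeff u μ k = u (k + 1) + μ * divSubCoeff u μ (k + 1) := by
  rw [divSubCoeff, (summable_divSubCoeff_terms hμ hu k).tsum_eq_zero_add, divSubCoeff,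
    ← tsum_mul_left]
  simp only [add_zero, pow_zero, mul_one]
  congr 1
  exact tsum_congr fun j => by
    rw [pow_succ, show k + (j + 1) + 1 = k + 1 + j + 1 by omega]
    ring

lemma exists_eq_sub_mul_add (hμ : ‖μ‖ < ρ) (hu : Summable fun k => ‖u k‖ * ρ ^ k) :
    ∃ q : ℕ → ℂ, ∃ c : ℂ, (Summable fun k => ‖q k‖ * ρ ^ k) ∧
      ∑' k, ‖q k‖ * ρ ^ k ≤ (∑' k, ‖u k‖ * ρ ^ k) / (ρ - ‖μ‖) ∧
      ∀ z : ℂ, ‖z‖ < ρ → ∑' k, u k * z ^ k = (z - μ) * ∑' k, q k * z ^ k + c :=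
  ⟨divSubCoeff u μ, u 0 + μ * divSubCoeff u μ 0, summable_norm_divSubCoeff_mul_pow hμ hu,
    tsum_norm_divSubCoeff_mul_pow_le hμ hu, fun _ hz =>
      (hasSum_mul_pow_of_eq_add_mul (divSubCoeff_eq_add_mul hμ hu)
        (summable_mul_pow_of_norm_le (summable_norm_divSubCoeff_mul_pow hμ hu)
          hz.le).hasSum).tsum_eq⟩

end DivSub

section Peeling

variable {𝕜 : Type*} [NontriviallyNormedField 𝕜] {s : Set 𝕜} {Q : 𝕜 → 𝕜} {r : 𝕜[X]}

lemma exists_eq_prod_mul_of_prod_mul_eq_eval (hs : IsOpen s) (hQ : ContinuousOn Q s) {n : ℕ}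
    {μ : Fin n → 𝕜} (hμ : ∀ i, μ i ∈ s) (h : ∀ z ∈ s, (∏ i, (z - μ i)) * Q z = r.eval z) :
    ∃ r' : 𝕜[X], r = (∏ i, (X - C (μ i))) * r' ∧ EqOn Q r'.eval s := by
  induction n generalizing r with
  | zero => exact ⟨r, by simp, fun z hz => by simpa using h z hz⟩
  | succ n ih =>
    have hroot : r.IsRoot (μ 0) := by
      simpa [Fin.prod_univ_succ] using (h (μ 0) (hμ 0)).symm
    set r₁ := r /ₘ (X - C (μ 0))
    have hr₁ : (X - C (μ 0)) * r₁ = r := mul_divByMonic_eq_iff_isRoot.mpr hroot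
    have hQ₁ : EqOn (fun z => (∏ i : Fin n, (z - μ i.succ)) * Q z) r₁.eval s :=
      eqOn_of_sub_mul_eq_sub_mul hs (by fun_prop) r₁.continuous.continuousOn (μ 0)
        fun z hz => by
          rw [← mul_assoc, ← Fin.prod_univ_succ (f := fun i => z - μ i), h z hz, ← hr₁,
            eval_mul, eval_sub, eval_X, eval_C]
    obtain ⟨r', hr', hQ'⟩ := ih (fun i => hμ i.succ) hQ₁
    refine ⟨r', ?_, hQ'⟩
    rw [← hr₁, hr', Fin.prod_univ_succ, mul_assoc]

lemma eq_zero_of_prod_mul_eq_eval_of_degree_lt (hs : IsOpen s) (hQ : ContinuousOn Q s) {n : ℕ}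
    {μ : Fin n → 𝕜} (hμ : ∀ i, μ i ∈ s) (hr : r.degree < n)
    (h : ∀ z ∈ s, (∏ i, (z - μ i)) * Q z = r.eval z) : r = 0 ∧ EqOn Q 0 s := by
  obtain ⟨r', rfl, hQ'⟩ := exists_eq_prod_mul_of_prod_mul_eq_eval hs hQ hμ h
  have hdeg : (∏ i, (X - C (μ i))).degree = (n : WithBot ℕ) := by simp [degree_prod]
  have hprod : (∏ i, (X - C (μ i))) * r' = 0 :=
    eq_zero_of_dvd_of_degree_lt (dvd_mul_right _ _) (hdeg ▸ hr)
  have hr' : r' = 0 :=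
    (mul_eq_zero.mp hprod).resolve_left (monic_prod_of_monic _ _ fun i _ => monic_X_sub_C _).ne_zero
  exact ⟨hprod, fun z hz => by simp [hQ' hz, hr']⟩

end Peeling

lemma degree_X_sub_C_mul_add_C_lt {R : Type*} [CommRing R] [IsDomain R] {a c : R} {p : R[X]}
    {n : ℕ} (hp : p.degree < n) : ((X - C a) * p + C c).degree < ↑(n + 1) := by
  refine (degree_add_le _ _).trans_lt (max_lt ?_ ?_)
  · rw [degree_mul, degree_X_sub_C, Nat.cast_add, Nat.cast_one, add_comm (1 : WithBot ℕ)]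
    exact WithBot.add_lt_add_right WithBot.one_ne_bot hp
  · exact degree_C_le.trans_lt (by exact_mod_cast Nat.succ_pos n)

section Division

variable {ρ : ℝ}

lemma exists_prod_mul_add {n : ℕ} (μ : Fin n → ℂ) (hμ : ∀ i, ‖μ i‖ < ρ) {u : ℕ → ℂ}
    (hu : Summable fun k => ‖u k‖ * ρ ^ k) :
    ∃ q : ℕ → ℂ, ∃ r : ℂ[X], (Summable fun k => ‖q k‖ * ρ ^ k) ∧
      ∑' k, ‖q k‖ * ρ ^ k ≤ (∑' k, ‖u k‖ * ρ ^ k) / ∏ i, (ρ - ‖μ i‖) ∧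
      r.degree < n ∧
      ∀ z : ℂ, ‖z‖ < ρ →
        ∑' k, u k * z ^ k = (∏ i, (z - μ i)) * ∑' k, q k * z ^ k + r.eval z := by
  induction n generalizing u with
  | zero => exact ⟨u, 0, hu, by simp, by simp, fun z _ => by simp⟩
  | succ n ih =>
    obtain ⟨q₁, c, hq₁, hb₁, he₁⟩ := exists_eq_sub_mul_add (hμ 0) hu
    obtain ⟨q, r, hq, hb, hr, he⟩ := ih (fun i => μ i.succ) (fun i => hμ i.succ) hq₁
    refine ⟨q, (X - C (μ 0)) * r + C c, hq, ?_, degree_X_sub_C_mul_add_C_lt hr, fun z hz => ?_⟩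
    · have hprod : 0 ≤ ∏ i : Fin n, (ρ - ‖μ i.succ‖) :=
        Finset.prod_nonneg fun i _ => (sub_pos.mpr (hμ i.succ)).le
      calc ∑' k, ‖q k‖ * ρ ^ k ≤ (∑' k, ‖q₁ k‖ * ρ ^ k) / ∏ i : Fin n, (ρ - ‖μ i.succ‖) := hb
        _ ≤ (∑' k, ‖u k‖ * ρ ^ k) / (ρ - ‖μ 0‖) / ∏ i : Fin n, (ρ - ‖μ i.succ‖) := by gcongr
        _ = _ := by rw [Fin.prod_univ_succ, div_div]
    · rw [he₁ z hz, he z hz, Fin.prod_univ_succ]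
      simp only [eval_add, eval_mul, eval_sub, eval_X, eval_C]
      ring

lemma eq_of_prod_mul_add_eq (hρ : 0 < ρ) {n : ℕ} {μ : Fin n → ℂ} (hμ : ∀ i, ‖μ i‖ < ρ)
    {q₁ q₂ : ℕ → ℂ} {r₁ r₂ : ℂ[X]} (hq₁ : Summable fun k => ‖q₁ k‖ * ρ ^ k)
    (hq₂ : Summable fun k => ‖q₂ k‖ * ρ ^ k) (hr₁ : r₁.degree < n) (hr₂ : r₂.degree < n)
    (h : ∀ z : ℂ, ‖z‖ < ρ →
      (∏ i, (z - μ i)) * ∑' k, q₁ k * z ^ k + r₁.eval z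
        = (∏ i, (z - μ i)) * ∑' k, q₂ k * z ^ k + r₂.eval z) :
    q₁ = q₂ ∧ r₁ = r₂ := by
  have hq : Summable fun k => ‖(q₁ - q₂) k‖ * ρ ^ k :=
    (hq₁.add hq₂).of_nonneg_of_le (fun k => by positivity) fun k => by
      rw [← add_mul]
      gcongr
      exact norm_sub_le _ _
  have hdiff : ∀ z ∈ ball (0 : ℂ) ρ,
      (∏ i, (z - μ i)) * ∑' k, (q₁ - q₂) k * z ^ k = (r₂ - r₁).eval z := fun z hz => by
    rw [mem_ball_zero_iff] at hz
    simp only [Pi.sub_apply, sub_mul]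
    rw [(summable_mul_pow_of_norm_le hq₁ hz.le).tsum_sub (summable_mul_pow_of_norm_le hq₂ hz.le),
      eval_sub]
    linear_combination h z hz
  obtain ⟨hr, hQ⟩ := eq_zero_of_prod_mul_eq_eval_of_degree_lt isOpen_ball
    (continuousOn_tsum_mul_pow hq) (fun i => mem_ball_zero_iff.mpr (hμ i))
    ((degree_sub_le _ _).trans_lt (max_lt hr₂ hr₁)) hdiff
  refine ⟨sub_eq_zero.mp (eq_zero_of_tsum_mul_pow_eq_zero hρ hq fun z hz => ?_),
    (sub_eq_zero.mp hr).symm⟩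
  exact hQ (mem_ball_zero_iff.mpr hz)

end Division

theorem euclidean_division_in_wiener_algebra_general
    (ρ : ℝ) (hρ : 1 < ρ) (n : ℕ)
    (μ : Fin n → ℂ) (hμ : ∀ i, ‖μ i‖ < ρ)
    (u : ℕ → ℂ) (hu : Summable fun k => ‖u k‖ * ρ ^ k) :
    (∃! qr : (ℕ → ℂ) × Polynomial ℂ,
      (Summable fun k => ‖qr.1 k‖ * ρ ^ k) ∧
      qr.2.degree < (n : WithBot ℕ) ∧
      ∀ z : ℂ, ‖z‖ < ρ →
        ∑' k : ℕ, u k * z ^ k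
          = (∏ i : Fin n, (z - μ i)) * (∑' k : ℕ, qr.1 k * z ^ k) + qr.2.eval z) ∧
    (∀ (q : ℕ → ℂ) (r : Polynomial ℂ),
      (Summable fun k => ‖q k‖ * ρ ^ k) →
      r.degree < (n : WithBot ℕ) →
      (∀ z : ℂ, ‖z‖ < ρ →
        ∑' k : ℕ, u k * z ^ k
          = (∏ i : Fin n, (z - μ i)) * (∑' k : ℕ, q k * z ^ k) + r.eval z) →
      (∑' k : ℕ, ‖q k‖ * ρ ^ k)
        ≤ (∑' k : ℕ, ‖u k‖ * ρ ^ k) / ∏ i : Fin n, (ρ - ‖μ i‖)) := by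
  obtain ⟨q₀, r₀, hq₀, hb₀, hr₀, he₀⟩ := exists_prod_mul_add μ hμ hu
  have huniq : ∀ (q : ℕ → ℂ) (r : ℂ[X]), (Summable fun k => ‖q k‖ * ρ ^ k) →
      r.degree < n → (∀ z : ℂ, ‖z‖ < ρ →
        ∑' k, u k * z ^ k = (∏ i, (z - μ i)) * (∑' k, q k * z ^ k) + r.eval z) →
      q = q₀ ∧ r = r₀ := fun q r hq hr he =>
    eq_of_prod_mul_add_eq (by linarith) hμ hq hq₀ hr hr₀ fun z hz => by rw [← he z hz, he₀ z hz]
  refine ⟨⟨(q₀, r₀), ⟨hq₀, hr₀, he₀⟩, fun ⟨q, r⟩ ⟨hq, hr, he⟩ => ?_⟩, fun q r hq hr he => ?_⟩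
  · obtain ⟨rfl, rfl⟩ := huniq q r hq hr he
    rfl
  · rw [(huniq q r hq hr he).1]
    exact hb₀

theorem euclidean_division_in_wiener_algebra
    (ρ : ℝ) (hρ : 1 < ρ) (n : ℕ) (hn : 1 ≤ n)
    (μ : Fin n → ℂ) (hμ : ∀ i, ‖μ i‖ < ρ)
    (u : ℕ → ℂ) (hu : Summable fun k => ‖u k‖ * ρ ^ k) :
    (∃! qr : (ℕ → ℂ) × Polynomial ℂ,
      (Summable fun k => ‖qr.1 k‖ * ρ ^ k) ∧
      qr.2.degree < (n : WithBot ℕ) ∧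
      ∀ z : ℂ, ‖z‖ < ρ →
        ∑' k : ℕ, u k * z ^ k
          = (∏ i : Fin n, (z - μ i)) * (∑' k : ℕ, qr.1 k * z ^ k) + qr.2.eval z) ∧
    (∀ (q : ℕ → ℂ) (r : Polynomial ℂ),
      (Summable fun k => ‖q k‖ * ρ ^ k) →
      r.degree < (n : WithBot ℕ) →
      (∀ z : ℂ, ‖z‖ < ρ →
        ∑' k : ℕ, u k * z ^ k
          = (∏ i : Fin n, (z - μ i)) * (∑' k : ℕ, q k * z ^ k) + r.eval z) →
      (∑' k : ℕ, ‖q k‖ * ρ ^ k)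
        ≤ (∑' k : ℕ, ‖u k‖ * ρ ^ k) / ∏ i : Fin n, (ρ - ‖μ i‖)) :=
  euclidean_division_in_wiener_algebra_general ρ hρ n μ hμ u hu
end

section
/- Let z ∈ ℂ with |z| < 1 and let a ≥ 0 be real. If a ≤ 1 then |(1+z)^a − 1| ≤ 1 − (1−|z|)^a, and if a ≥ 1 then |(1+z)^a − 1| ≤ (1+|z|)^a − 1, where (1+z)^a denotes the principal branch of the complex power (well defined since Re(1+z) > 0). -/
/-!
Compare `f t = (1 + t z) ^ a - 1` on `[0, 1]` with a real majorant `B` vanishing at `0`: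
`‖f' t‖ = a ‖1 + t z‖ ^ (a - 1) ‖z‖`, and `1 - t ‖z‖ ≤ ‖1 + t z‖ ≤ 1 + t ‖z‖`. For `a ≤ 1` the
exponent `a - 1` is nonpositive, so `‖f' t‖` is dominated by the derivative of
`B t = 1 - (1 - t ‖z‖) ^ a`; for `1 ≤ a` by that of `B t = (1 + t ‖z‖) ^ a - 1`.
-/

open Set

lemma Real.hasDerivAt_one_add_mul_rpow {t c : ℝ} (h : 0 < 1 + t * c) (a : ℝ) :
    HasDerivAt (fun s : ℝ => (1 + s * c) ^ a) (a * (1 + t * c) ^ (a - 1) * c) t := by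
  have := (((hasDerivAt_id t).mul_const c).const_add 1).rpow_const (p := a) (Or.inl h.ne')
  simp only [id_eq] at this
  convert this using 1
  ring

namespace Complex

variable {z : ℂ} {a : ℝ}

lemma abs_norm_one_add_ofReal_mul_sub_one_le {t : ℝ} (ht : 0 ≤ t) :
    |‖1 + t * z‖ - 1| ≤ t * ‖z‖ := by
  simpa [norm_mul, abs_of_nonneg ht] using abs_norm_sub_norm_le (1 + t * z) 1

lemma one_sub_mul_norm_le_norm_one_add_ofReal_mul {t : ℝ} (ht : 0 ≤ t) :
    1 - t * ‖z‖ ≤ ‖1 + t * z‖ := by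
  linarith [(abs_le.1 (abs_norm_one_add_ofReal_mul_sub_one_le (z := z) ht)).1]

lemma norm_one_add_ofReal_mul_le {t : ℝ} (ht : 0 ≤ t) :
    ‖1 + t * z‖ ≤ 1 + t * ‖z‖ := by
  linarith [(abs_le.1 (abs_norm_one_add_ofReal_mul_sub_one_le (z := z) ht)).2]

lemma one_add_ofReal_mul_mem_slitPlane (hz : ‖z‖ < 1) {t : ℝ} (ht : t ∈ Icc (0 : ℝ) 1) :
    1 + t * z ∈ slitPlane := by
  refine mem_slitPlane_of_norm_lt_one ?_
  rw [norm_mul, norm_real, Real.norm_of_nonneg ht.1]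
  nlinarith [norm_nonneg z, ht.2]

lemma hasDerivAt_one_add_ofReal_mul_cpow {t : ℝ} (h : 1 + t * z ∈ slitPlane) (c : ℂ) :
    HasDerivAt (fun s : ℝ => (1 + s * z) ^ c) (c * (1 + t * z) ^ (c - 1) * z) t := by
  have hline : HasDerivAt (fun u : ℂ => 1 + u * z) z t := by
    simpa using ((hasDerivAt_id (t : ℂ)).mul_const z).const_add 1
  exact (hline.cpow_const h).comp_ofReal

lemma norm_ofReal_mul_cpow_sub_one_mul (ha : 0 ≤ a) (w : ℂ) :
    ‖(a : ℂ) * w ^ ((a : ℂ) - 1) * z‖ = a * ‖w‖ ^ (a - 1) * ‖z‖ := by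
  rw [norm_mul, norm_mul, ← ofReal_one, ← ofReal_sub, norm_cpow_real, Complex.norm_of_nonneg ha]

theorem norm_one_add_cpow_sub_one_le_of_deriv_boundary (hz : ‖z‖ < 1) (ha : 0 ≤ a)
    {B B' : ℝ → ℝ} (hB0 : B 0 = 0) (hB : ∀ t ∈ Icc (0 : ℝ) 1, HasDerivAt B (B' t) t)
    (bound : ∀ t ∈ Icc (0 : ℝ) 1, a * ‖1 + t * z‖ ^ (a - 1) * ‖z‖ ≤ B' t) :
    ‖(1 + z) ^ (a : ℂ) - 1‖ ≤ B 1 := by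
  have hf : ∀ t ∈ Icc (0 : ℝ) 1, HasDerivAt (fun s : ℝ => (1 + s * z) ^ (a : ℂ) - 1)
      ((a : ℂ) * (1 + t * z) ^ ((a : ℂ) - 1) * z) t := fun t ht =>
    (hasDerivAt_one_add_ofReal_mul_cpow (one_add_ofReal_mul_mem_slitPlane hz ht) _).sub_const 1
  have hfence := image_norm_le_of_norm_deriv_right_le_deriv_boundary'
    (fun t ht => (hf t ht).continuousAt.continuousWithinAt)
    (fun t ht => (hf t (Ico_subset_Icc_self ht)).hasDerivWithinAt)
    (by simp [hB0]) (fun t ht => (hB t ht).continuousAt.continuousWithinAt)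
    (fun t ht => (hB t (Ico_subset_Icc_self ht)).hasDerivWithinAt)
    (fun t ht => by
      rw [norm_ofReal_mul_cpow_sub_one_mul ha]
      exact bound t (Ico_subset_Icc_self ht))
    (right_mem_Icc.2 zero_le_one)
  simpa using hfence

lemma norm_one_add_cpow_sub_one_le_of_le_one (hz : ‖z‖ < 1) (ha : 0 ≤ a) (ha1 : a ≤ 1) :
    ‖(1 + z) ^ (a : ℂ) - 1‖ ≤ 1 - (1 - ‖z‖) ^ a := by
  have hpos (t : ℝ) (ht : t ∈ Icc (0 : ℝ) 1) : 0 < 1 + t * -‖z‖ := by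
    nlinarith [norm_nonneg z, ht.1, ht.2]
  have := norm_one_add_cpow_sub_one_le_of_deriv_boundary hz ha
    (B := fun t => 1 - (1 + t * -‖z‖) ^ a) (by simp)
    (fun t ht => (Real.hasDerivAt_one_add_mul_rpow (hpos t ht) a).const_sub 1)
    (fun t ht => by
      have hw : 1 + t * -‖z‖ ≤ ‖1 + t * z‖ := by
        linarith [one_sub_mul_norm_le_norm_one_add_ofReal_mul (z := z) ht.1]
      have hrpow := Real.rpow_le_rpow_of_nonpos (hpos t ht) hw (by linarith : a - 1 ≤ 0)
      have := mul_le_mul_of_nonneg_right (mul_le_mul_of_nonneg_left hrpow ha) (norm_nonneg z)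
      linarith)
  simpa [sub_eq_add_neg] using this

lemma norm_one_add_cpow_sub_one_le_of_one_le (hz : ‖z‖ < 1) (ha1 : 1 ≤ a) :
    ‖(1 + z) ^ (a : ℂ) - 1‖ ≤ (1 + ‖z‖) ^ a - 1 := by
  have hpos (t : ℝ) (ht : t ∈ Icc (0 : ℝ) 1) : 0 < 1 + t * ‖z‖ := by
    nlinarith [norm_nonneg z, ht.1]
  have ha : 0 ≤ a := by linarith
  have := norm_one_add_cpow_sub_one_le_of_deriv_boundary hz ha
    (B := fun t => (1 + t * ‖z‖) ^ a - 1) (by simp)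
    (fun t ht => (Real.hasDerivAt_one_add_mul_rpow (hpos t ht) a).sub_const 1)
    (fun t ht => by
      have hrpow := Real.rpow_le_rpow (norm_nonneg _) (norm_one_add_ofReal_mul_le (z := z) ht.1)
        (by linarith : 0 ≤ a - 1)
      exact mul_le_mul_of_nonneg_right (mul_le_mul_of_nonneg_left hrpow ha) (norm_nonneg z))
  simpa using this

end Complex

theorem abs_one_add_cpow_sub_one_bound
    (z : ℂ) (hz : ‖z‖ < 1) (a : ℝ) (ha : 0 ≤ a) :
    (a ≤ 1 → ‖(1 + z) ^ (a : ℂ) - 1‖ ≤ 1 - (1 - ‖z‖) ^ a) ∧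
    (1 ≤ a → ‖(1 + z) ^ (a : ℂ) - 1‖ ≤ (1 + ‖z‖) ^ a - 1) :=
  ⟨Complex.norm_one_add_cpow_sub_one_le_of_le_one hz ha,
    Complex.norm_one_add_cpow_sub_one_le_of_one_le hz⟩
end

section
/- Let d ≥ 1, let a₁,…,a_d be integers with aᵢ ≥ 1, let x₁,…,x_d ∈ ℂ, and let 0 < α < 1 be such that |x_j·x_{j+1}⋯x_d| ≤ α for every j = 1,…,d. Then the family (k₁,…,k_d) ↦ ∏_{i=1}^d x_i^{k_i}/k_i^{a_i}, indexed by strictly increasing d-tuples of positive integers 0 < k₁ < ⋯ < k_d, is absolutely summable, and for every integer N ≥ 1 the truncated sum satisfies | ∑_{0<k₁<⋯<k_d≤N} ∏_{i=1}^d x_i^{k_i}/k_i^{a_i} | ≤ ∑_{n=1}^N n^{d−1}·αⁿ. -/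
/-!
With `δ j = x j * ⋯ * x d`, one has
`x₁ ^ k₁ ⋯ x_d ^ k_d = δ₁ ^ k₁ * δ₂ ^ (k₂ - k₁) ⋯ δ_d ^ (k_d - k_{d-1})`, and for increasing `k`
all exponents are natural numbers summing to `k_d`, so each term has norm at most `α ^ k_d`.
A strictly increasing tuple of positive integers with last entry `n` is determined by its first
`d - 1` entries, which lie in `[1, n)`; so at most `n ^ (d - 1)` terms share the bound `α ^ n`.
Grouping by `k_d` gives the truncated estimate, and since `∑ n ^ (d - 1) * α ^ n` converges, also
absolute summability.
-/

open Finset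

theorem Fin.prod_pow_eq_prod_pow_mul_prod_pow_sub {M : Type*} [CommMonoid M] {n : ℕ}
    (x : Fin (n + 1) → M) {k : Fin (n + 1) → ℕ} (hk : ∀ i, k 0 ≤ k i) :
    ∏ i, x i ^ k i = (∏ i, x i) ^ k 0 * ∏ i : Fin n, x i.succ ^ (k i.succ - k 0) := by
  have hsplit : ∀ i, x i ^ k i = x i ^ k 0 * x i ^ (k i - k 0) := fun i => by
    rw [← pow_add, Nat.add_sub_cancel' (hk i)]
  simp only [hsplit, prod_mul_distrib, prod_pow, Fin.prod_univ_succ (fun i => x i ^ (k i - k 0)),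
    Nat.sub_self, pow_zero, one_mul]

theorem norm_prod_pow_le_of_norm_prod_Ici_le {R : Type*} [SeminormedCommRing R] [NormOneClass R]
    {n : ℕ} (x : Fin (n + 1) → R) {k : Fin (n + 1) → ℕ} (hk : Monotone k) {α : ℝ}
    (hx : ∀ j, ‖∏ i ∈ Ici j, x i‖ ≤ α) :
    ‖∏ i, x i ^ k i‖ ≤ α ^ k (Fin.last n) := by
  induction n with
  | zero =>
    have hprod : ‖x 0‖ ≤ α := by simpa using hx 0
    simpa using (norm_pow_le _ _).trans (pow_le_pow_left₀ (norm_nonneg _) hprod (k 0))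
  | succ n ih =>
    have hprod : ‖∏ i, x i‖ ≤ α := by simpa using hx 0
    have hk0 : ∀ i, k 0 ≤ k i := fun i => hk (Fin.zero_le i)
    have htail := ih (fun i => x i.succ) (k := fun i => k i.succ - k 0)
      (fun i j hij => Nat.sub_le_sub_right (hk (Fin.succ_le_succ_iff.mpr hij)) _)
      (fun j => by simpa only [Fin.prod_Ici_succ] using hx j.succ)
    calc ‖∏ i, x i ^ k i‖
        ≤ ‖∏ i, x i‖ ^ k 0 * ‖∏ i : Fin (n + 1), x i.succ ^ (k i.succ - k 0)‖ := by
          rw [Fin.prod_pow_eq_prod_pow_mul_prod_pow_sub x hk0]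
          exact (norm_mul_le _ _).trans
            (mul_le_mul_of_nonneg_right (norm_pow_le _ _) (norm_nonneg _))
      _ ≤ α ^ k 0 * α ^ (k (Fin.last n).succ - k 0) := by
          gcongr
          exact pow_nonneg ((norm_nonneg _).trans hprod) _
      _ = α ^ k (Fin.last (n + 1)) := by
          rw [← pow_add, Nat.add_sub_cancel' (hk0 _), Fin.succ_last]

theorem norm_prod_div_natCast_pow_le {𝕜 ι : Type*} [RCLike 𝕜] (s : Finset ι) (x : ι → 𝕜)
    {k : ι → ℕ} (hk : ∀ i, 0 < k i) (a : ι → ℕ) :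
    ‖∏ i ∈ s, x i / (k i : 𝕜) ^ a i‖ ≤ ‖∏ i ∈ s, x i‖ := by
  rw [prod_div_distrib, norm_div]
  refine div_le_self (norm_nonneg _) ?_
  have : 1 ≤ ∏ i ∈ s, k i ^ a i := Nat.one_le_iff_ne_zero.mpr <|
    prod_ne_zero_iff.mpr fun i _ => pow_ne_zero _ (hk i).ne'
  exact_mod_cast this

def strictMonoTuples (n N : ℕ) : Finset (Fin n → ℕ) :=
  {k ∈ Fintype.piFinset fun _ => Icc 1 N | StrictMono k}

theorem mem_strictMonoTuples {n N : ℕ} {k : Fin n → ℕ} :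
    k ∈ strictMonoTuples n N ↔ ((∀ i, 0 < k i) ∧ StrictMono k) ∧ ∀ i, k i ≤ N := by
  simp only [strictMonoTuples, mem_filter, Fintype.mem_piFinset, mem_Icc, Nat.one_le_iff_ne_zero,
    Nat.pos_iff_ne_zero, forall_and]
  tauto

theorem card_strictMonoTuples_last_eq_le (e N n : ℕ) :
    #{k ∈ strictMonoTuples (e + 1) N | k (Fin.last e) = n} ≤ n ^ e := by
  calc #{k ∈ strictMonoTuples (e + 1) N | k (Fin.last e) = n}
      ≤ #(Fintype.piFinset fun _ : Fin e => range n) := by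
        refine card_le_card_of_injOn Fin.init (fun k hk => ?_) fun k hk l hl hkl => ?_
        · simp only [coe_filter, Set.mem_ofPred_eq, mem_strictMonoTuples] at hk
          simp only [mem_coe, Fintype.mem_piFinset, mem_range]
          intro i
          exact hk.2 ▸ hk.1.1.2 (Fin.castSucc_lt_last i)
        · simp only [coe_filter, Set.mem_ofPred_eq] at hk hl
          rw [← Fin.snoc_init_self k, ← Fin.snoc_init_self l, hkl, hk.2, hl.2]
    _ = n ^ e := by simp

theorem sum_strictMonoTuples_le {e N : ℕ} {r : ℕ → ℝ} (hr : ∀ n, 0 ≤ r n) :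
    ∑ k ∈ strictMonoTuples (e + 1) N, r (k (Fin.last e)) ≤ ∑ n ∈ Icc 1 N, (n : ℝ) ^ e * r n := by
  rw [← sum_fiberwise_of_maps_to (g := fun k => k (Fin.last e)) (t := Icc 1 N)
    fun k hk => mem_Icc.mpr ⟨(mem_strictMonoTuples.mp hk).1.1 _, (mem_strictMonoTuples.mp hk).2 _⟩]
  refine sum_le_sum fun n _ => ?_
  rw [sum_congr rfl fun k hk => by rw [(mem_filter.mp hk).2], sum_const, nsmul_eq_mul]
  gcongr
  · exact hr n
  · exact_mod_cast card_strictMonoTuples_last_eq_le e N n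

theorem summable_comp_last_of_strictMono {e : ℕ} {r : ℕ → ℝ} (hr : ∀ n, 0 ≤ r n)
    (hsum : Summable fun n : ℕ => (n : ℝ) ^ e * r n) :
    Summable fun k : {k : Fin (e + 1) → ℕ // (∀ i, 0 < k i) ∧ StrictMono k} =>
      r (k.1 (Fin.last e)) := by
  refine summable_of_sum_le (c := ∑' n : ℕ, (n : ℝ) ^ e * r n) (fun _ => hr _) fun u => ?_
  set N := u.sup fun k => k.1 (Fin.last e)
  have hsub : u.map (Function.Embedding.subtype _) ⊆ strictMonoTuples (e + 1) N := by
    intro k hk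
    obtain ⟨k, hku, rfl⟩ := mem_map.mp hk
    refine mem_strictMonoTuples.mpr ⟨k.2, fun i => ?_⟩
    exact (k.2.2.monotone (Fin.le_last i)).trans (le_sup (f := fun k => k.1 (Fin.last e)) hku)
  calc ∑ k ∈ u, r (k.1 (Fin.last e))
      = ∑ k ∈ u.map (Function.Embedding.subtype _), r (k (Fin.last e)) := by rw [sum_map]; rfl
    _ ≤ ∑ k ∈ strictMonoTuples (e + 1) N, r (k (Fin.last e)) :=
        sum_le_sum_of_subset_of_nonneg hsub fun _ _ _ => hr _
    _ ≤ ∑ n ∈ Icc 1 N, (n : ℝ) ^ e * r n := sum_strictMonoTuples_le hr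
    _ ≤ ∑' n : ℕ, (n : ℝ) ^ e * r n :=
        hsum.sum_le_tsum _ fun n _ => mul_nonneg (by positivity) (hr n)

theorem multiple_polylogarithm_geometric_convergence_general
    (d : ℕ) (hd : 1 ≤ d) (a : Fin d → ℕ)
    (x : Fin d → ℂ) (α : ℝ) (hα1 : α < 1)
    (hx : ∀ j : Fin d, ‖∏ i ∈ Finset.Ici j, x i‖ ≤ α)
    (N : ℕ) :
    (Summable fun k : {k : Fin d → ℕ // (∀ i, 0 < k i) ∧ StrictMono k} =>
      ‖∏ i : Fin d, x i ^ k.1 i / (k.1 i : ℂ) ^ a i‖) ∧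
    ‖(∑' k : {k : Fin d → ℕ // ((∀ i, 0 < k i) ∧ StrictMono k) ∧ ∀ i, k i ≤ N},
          ∏ i : Fin d, x i ^ k.1 i / (k.1 i : ℂ) ^ a i)‖
      ≤ ∑ n ∈ Finset.Icc 1 N, (n : ℝ) ^ (d - 1) * α ^ n := by
  obtain ⟨e, rfl⟩ : ∃ e, d = e + 1 := ⟨d - 1, by omega⟩
  set term := fun k : Fin (e + 1) → ℕ => ∏ i, x i ^ k i / (k i : ℂ) ^ a i
  have hα0 : 0 ≤ α := (norm_nonneg _).trans (hx 0)
  have hterm : ∀ k, (∀ i, 0 < k i) → StrictMono k → ‖term k‖ ≤ α ^ k (Fin.last e) :=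
    fun k hpos hk => (norm_prod_div_natCast_pow_le _ (fun i => x i ^ k i) hpos a).trans
      (norm_prod_pow_le_of_norm_prod_Ici_le x hk.monotone hx)
  have htsum : ∑' k : {k : Fin (e + 1) → ℕ // ((∀ i, 0 < k i) ∧ StrictMono k) ∧ ∀ i, k i ≤ N},
      term k.1 = ∑ k ∈ strictMonoTuples (e + 1) N, term k := by
    rw [← Finset.tsum_subtype]
    exact ((Equiv.subtypeEquivRight fun _ => mem_strictMonoTuples).tsum_eq
      (term ∘ Subtype.val)).symm
  refine ⟨?_, ?_⟩
  · have hgeom := summable_pow_mul_geometric_of_norm_lt_one e (by rwa [Real.norm_of_nonneg hα0])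
    exact (summable_comp_last_of_strictMono (pow_nonneg hα0) hgeom).of_nonneg_of_le
      (fun _ => norm_nonneg _) fun k => hterm k.1 k.2.1 k.2.2
  · calc ‖∑' k : {k : Fin (e + 1) → ℕ // ((∀ i, 0 < k i) ∧ StrictMono k) ∧ ∀ i, k i ≤ N},
            term k.1‖
        ≤ ∑ k ∈ strictMonoTuples (e + 1) N, ‖term k‖ := htsum ▸ norm_sum_le _ _
      _ ≤ ∑ k ∈ strictMonoTuples (e + 1) N, α ^ k (Fin.last e) := sum_le_sum fun k hk =>
          hterm k (mem_strictMonoTuples.mp hk).1.1 (mem_strictMonoTuples.mp hk).1.2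
      _ ≤ ∑ n ∈ Icc 1 N, (n : ℝ) ^ (e + 1 - 1) * α ^ n := sum_strictMonoTuples_le (pow_nonneg hα0)

theorem multiple_polylogarithm_geometric_convergence
    (d : ℕ) (hd : 1 ≤ d) (a : Fin d → ℕ) (ha : ∀ i, 1 ≤ a i)
    (x : Fin d → ℂ) (α : ℝ) (hα0 : 0 < α) (hα1 : α < 1)
    (hx : ∀ j : Fin d, ‖∏ i ∈ Finset.Ici j, x i‖ ≤ α)
    (N : ℕ) (hN : 1 ≤ N) :
    (Summable fun k : {k : Fin d → ℕ // (∀ i, 0 < k i) ∧ StrictMono k} =>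
      ‖∏ i : Fin d, x i ^ k.1 i / (k.1 i : ℂ) ^ a i‖) ∧
    ‖(∑' k : {k : Fin d → ℕ // ((∀ i, 0 < k i) ∧ StrictMono k) ∧ ∀ i, k i ≤ N},
          ∏ i : Fin d, x i ^ k.1 i / (k.1 i : ℂ) ^ a i)‖
      ≤ ∑ n ∈ Finset.Icc 1 N, (n : ℝ) ^ (d - 1) * α ^ n :=
  multiple_polylogarithm_geometric_convergence_general d hd a x α hα1 hx N
end

section
/- For every φ ∈ (0, π/2), the iterated integral ∫₀¹ ( ∫₀ˢ 4·cos(φ)·(u² − 1)/(u⁴ − 2cos(2φ)u² + 1) du ) · ( 4i·sin(2φ)·s/(s⁴ − 2cos(2φ)s² + 1) ) ds equals 2πi·log(sin φ). -/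
/-!
The inner integral is the logarithm `logRatio φ s` of a ratio of the two quadratic factors of the
denominator, because `ω₂` is a logarithmic derivative. For the outer integral we differentiate in
`φ`: the `φ`-derivative of the integrand has an explicit `s`-primitive (a rational multiple
of `logRatio` plus two arctangents), whose values at `s = 0, 1` give `∫₀¹ ∂_φ(…) ds = 2π cot φ`.
The integrand vanishes at `φ = π/2`, so integrating over `[φ, π/2]` and swapping the order of
integration yields `2π log sin φ`.
-/

open intervalIntegral

namespace Omega21

open Real

noncomputable section

def quartic (t s : ℝ) : ℝ := s ^ 4 - 2 * cos (2 * t) * s ^ 2 + 1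

def omegaOne (t s : ℝ) : ℝ := 4 * sin (2 * t) * s / quartic t s

def omegaTwo (t s : ℝ) : ℝ := 4 * cos t * (s ^ 2 - 1) / quartic t s

def logRatio (t s : ℝ) : ℝ :=
  log (s ^ 2 - 2 * cos t * s + 1) - log (s ^ 2 + 2 * cos t * s + 1)

def omegaOneParamDeriv (t s : ℝ) : ℝ :=
  8 * s * cos (2 * t) / quartic t s - 16 * sin (2 * t) ^ 2 * s ^ 3 / quartic t s ^ 2

/-- With `ω₁ = i · omegaOne φ z dz` and `ω₂ = omegaTwo φ z dz`, the integrand of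
`Ω_{2,1}(1) = ∫₀¹ ω₂ ω₁` is `i · iterIntegrand φ s`. -/
def iterIntegrand (t s : ℝ) : ℝ := logRatio t s * omegaOne t s

def iterIntegrandParamDeriv (t s : ℝ) : ℝ :=
  4 * sin t * s * (s ^ 2 + 1) / quartic t s * omegaOne t s + logRatio t s * omegaOneParamDeriv t s

/-- For the `s`-primitive `A = 2 arctan ((s² - cos 2t) / sin 2t)` of `omegaOne t` one has
`∂ₜA = 2 + 2 (1 - s⁴) / quartic t s`, so the first term differentiates to
`logRatio · ∂ₜ omegaOne + omegaTwo · (∂ₜA - 2)`; the arctangents supply the remaining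
rational part of `iterIntegrandParamDeriv`. -/
def iterIntegrandParamDerivPrimitive (t s : ℝ) : ℝ :=
  2 * (1 - s ^ 4) / quartic t s * logRatio t s
    + 4 * (cos t / sin t) * (arctan ((s - cos t) / sin t) + arctan ((s + cos t) / sin t))

end

theorem sq_sub_two_mul_add_one_pos {c : ℝ} (hc : c ^ 2 < 1) (s : ℝ) :
    0 < s ^ 2 - 2 * c * s + 1 := by
  nlinarith [sq_nonneg (s - c)]

theorem sq_add_two_mul_add_one_pos {c : ℝ} (hc : c ^ 2 < 1) (s : ℝ) :
    0 < s ^ 2 + 2 * c * s + 1 := by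
  nlinarith [sq_nonneg (s + c)]

section

variable {t : ℝ}

theorem cos_sq_lt_one_of_sin_ne_zero (ht : sin t ≠ 0) : cos t ^ 2 < 1 := by
  linarith [sin_sq_add_cos_sq t, sq_pos_of_ne_zero ht]

theorem quartic_eq_mul (s : ℝ) :
    quartic t s = (s ^ 2 - 2 * cos t * s + 1) * (s ^ 2 + 2 * cos t * s + 1) := by
  rw [quartic, cos_two_mul]; ring

theorem quartic_pos (ht : sin t ≠ 0) (s : ℝ) : 0 < quartic t s := by
  have hc := cos_sq_lt_one_of_sin_ne_zero ht
  rw [quartic_eq_mul]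
  exact mul_pos (sq_sub_two_mul_add_one_pos hc s) (sq_add_two_mul_add_one_pos hc s)

theorem hasDerivAt_logRatio (ht : sin t ≠ 0) (s : ℝ) :
    HasDerivAt (logRatio t) (omegaTwo t s) s := by
  have hc := cos_sq_lt_one_of_sin_ne_zero ht
  have hm := sq_sub_two_mul_add_one_pos hc s
  have hp := sq_add_two_mul_add_one_pos hc s
  have dm : HasDerivAt (fun u => u ^ 2 - 2 * cos t * u + 1) (2 * s - 2 * cos t) s :=
    (((hasDerivAt_pow 2 s).sub ((hasDerivAt_id s).const_mul _)).add_const 1).congr_deriv (by ring)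
  have dp : HasDerivAt (fun u => u ^ 2 + 2 * cos t * u + 1) (2 * s + 2 * cos t) s :=
    (((hasDerivAt_pow 2 s).add ((hasDerivAt_id s).const_mul _)).add_const 1).congr_deriv (by ring)
  refine ((dm.log hm.ne').sub (dp.log hp.ne')).congr_deriv ?_
  rw [omegaTwo, quartic_eq_mul, div_sub_div _ _ hm.ne' hp.ne']
  ring

theorem integral_omegaTwo (ht : sin t ≠ 0) (s : ℝ) :
    ∫ u in (0 : ℝ)..s, omegaTwo t u = logRatio t s := by
  have hcont : Continuous (omegaTwo t) := by
    unfold omegaTwo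
    exact Continuous.div (by fun_prop) (by unfold quartic; fun_prop) fun u => (quartic_pos ht u).ne'
  rw [integral_eq_sub_of_hasDerivAt (fun u _ => hasDerivAt_logRatio ht u)
    (hcont.intervalIntegrable _ _)]
  simp [logRatio]

theorem hasDerivAt_logRatio_param (ht : sin t ≠ 0) (s : ℝ) :
    HasDerivAt (logRatio · s) (4 * sin t * s * (s ^ 2 + 1) / quartic t s) t := by
  have hc := cos_sq_lt_one_of_sin_ne_zero ht
  have hm := sq_sub_two_mul_add_one_pos hc s
  have hp := sq_add_two_mul_add_one_pos hc s
  have dm : HasDerivAt (fun τ => s ^ 2 - 2 * cos τ * s + 1) (2 * sin t * s) t :=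
    ((((hasDerivAt_cos t).const_mul 2).mul_const s).const_sub _).add_const 1 |>.congr_deriv
      (by ring)
  have dp : HasDerivAt (fun τ => s ^ 2 + 2 * cos τ * s + 1) (-(2 * sin t * s)) t :=
    ((((hasDerivAt_cos t).const_mul 2).mul_const s).const_add _).add_const 1 |>.congr_deriv
      (by ring)
  refine ((dm.log hm.ne').sub (dp.log hp.ne')).congr_deriv ?_
  rw [quartic_eq_mul, sub_eq_add_neg, ← neg_div, neg_neg, div_add_div _ _ hm.ne' hp.ne']
  ring

theorem hasDerivAt_quartic_param (s : ℝ) :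
    HasDerivAt (quartic · s) (4 * sin (2 * t) * s ^ 2) t := by
  have h := ((hasDerivAt_cos (2 * t)).comp t ((hasDerivAt_id t).const_mul 2))
  exact (((h.const_mul 2).mul_const (s ^ 2)).const_sub (s ^ 4)).add_const 1 |>.congr_deriv
    (by ring)

theorem hasDerivAt_omegaOne_param (ht : sin t ≠ 0) (s : ℝ) :
    HasDerivAt (omegaOne · s) (omegaOneParamDeriv t s) t := by
  have hsin := ((hasDerivAt_sin (2 * t)).comp t ((hasDerivAt_id t).const_mul 2))
  have hnum : HasDerivAt (fun τ => 4 * sin (2 * τ) * s) (8 * cos (2 * t) * s) t :=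
    ((hsin.const_mul 4).mul_const s).congr_deriv (by ring)
  refine (hnum.div (hasDerivAt_quartic_param s) (quartic_pos ht s).ne').congr_deriv ?_
  have := (quartic_pos ht s).ne'
  rw [omegaOneParamDeriv]
  field_simp
  ring

theorem hasDerivAt_iterIntegrand_param (ht : sin t ≠ 0) (s : ℝ) :
    HasDerivAt (iterIntegrand · s) (iterIntegrandParamDeriv t s) t :=
  (hasDerivAt_logRatio_param ht s).mul (hasDerivAt_omegaOne_param ht s)

theorem hasDerivAt_two_mul_one_sub_pow_four_div_quartic (ht : sin t ≠ 0) (s : ℝ) :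
    HasDerivAt (fun u => 2 * (1 - u ^ 4) / quartic t u) (omegaOneParamDeriv t s) s := by
  have hQ : HasDerivAt (quartic t) (4 * s ^ 3 - 4 * cos (2 * t) * s) s :=
    (((hasDerivAt_pow 4 s).sub ((hasDerivAt_pow 2 s).const_mul _)).add_const 1).congr_deriv
      (by ring)
  have hP : HasDerivAt (fun u => 2 * (1 - u ^ 4)) (-8 * s ^ 3) s :=
    ((hasDerivAt_pow 4 s).const_sub 1).const_mul 2 |>.congr_deriv (by ring)
  refine (hP.div hQ (quartic_pos ht s).ne').congr_deriv ?_
  have := (quartic_pos ht s).ne'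
  rw [omegaOneParamDeriv]
  field_simp
  rw [quartic]
  linear_combination (16 * s ^ 3) * sin_sq_add_cos_sq (2 * t)

theorem hasDerivAt_arctan_sum (ht : sin t ≠ 0) (s : ℝ) :
    HasDerivAt (fun u => arctan ((u - cos t) / sin t) + arctan ((u + cos t) / sin t))
      (2 * sin t * (s ^ 2 + 1) / quartic t s) s := by
  have hc := cos_sq_lt_one_of_sin_ne_zero ht
  have hm := (sq_sub_two_mul_add_one_pos hc s).ne'
  have hp := (sq_add_two_mul_add_one_pos hc s).ne'
  have hsm : 1 + ((s - cos t) / sin t) ^ 2 = (s ^ 2 - 2 * cos t * s + 1) / sin t ^ 2 := by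
    field_simp
    linear_combination sin_sq_add_cos_sq t
  have hsp : 1 + ((s + cos t) / sin t) ^ 2 = (s ^ 2 + 2 * cos t * s + 1) / sin t ^ 2 := by
    field_simp
    linear_combination sin_sq_add_cos_sq t
  have am := (((hasDerivAt_id' s).sub_const (cos t)).div_const (sin t)).arctan
  have ap := (((hasDerivAt_id' s).add_const (cos t)).div_const (sin t)).arctan
  refine (am.add ap).congr_deriv ?_
  rw [hsm, hsp, quartic_eq_mul,
    show 2 * sin t * (s ^ 2 + 1)
      = sin t * ((s ^ 2 - 2 * cos t * s + 1) + (s ^ 2 + 2 * cos t * s + 1)) by ring]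
  generalize s ^ 2 - 2 * cos t * s + 1 = a at *
  generalize s ^ 2 + 2 * cos t * s + 1 = b at *
  field_simp
  ring

theorem hasDerivAt_iterIntegrandParamDerivPrimitive (ht : sin t ≠ 0) (s : ℝ) :
    HasDerivAt (iterIntegrandParamDerivPrimitive t) (iterIntegrandParamDeriv t s) s := by
  refine (((hasDerivAt_two_mul_one_sub_pow_four_div_quartic ht s).mul
    (hasDerivAt_logRatio ht s)).add
      ((hasDerivAt_arctan_sum ht s).const_mul (4 * (cos t / sin t)))).congr_deriv ?_
  have hQ := (quartic_pos ht s).ne'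
  rw [iterIntegrandParamDeriv, omegaOne, omegaTwo]
  field_simp
  rw [quartic, sin_two_mul, cos_two_mul]
  linear_combination (-32 * cos t * s ^ 2 * (s ^ 2 + 1)) * sin_sq_add_cos_sq t

theorem continuousOn_iterIntegrandParamDeriv :
    ContinuousOn (fun p : ℝ × ℝ => iterIntegrandParamDeriv p.2 p.1) {p | sin p.2 ≠ 0} := by
  rintro ⟨s, t⟩ (ht : sin t ≠ 0)
  refine ContinuousAt.continuousWithinAt ?_
  have hc := cos_sq_lt_one_of_sin_ne_zero ht
  have hQ := (quartic_pos ht s).ne'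
  have hm := (sq_sub_two_mul_add_one_pos hc s).ne'
  have hp := (sq_add_two_mul_add_one_pos hc s).ne'
  unfold iterIntegrandParamDeriv omegaOne omegaOneParamDeriv logRatio quartic at *
  fun_prop (disch := (dsimp only; first | assumption | exact pow_ne_zero 2 hQ))

theorem iterIntegrandParamDerivPrimitive_zero : iterIntegrandParamDerivPrimitive t 0 = 0 := by
  simp [iterIntegrandParamDerivPrimitive, logRatio, neg_div]

theorem iterIntegrandParamDerivPrimitive_one (ht : 0 < sin t) :
    iterIntegrandParamDerivPrimitive t 1 = 2 * π * (cos t / sin t) := by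
  have hc : cos t < 1 := by nlinarith [sin_sq_add_cos_sq t]
  have hinv : (1 + cos t) / sin t = ((1 - cos t) / sin t)⁻¹ := by
    rw [inv_div, div_eq_div_iff ht.ne' (sub_pos.2 hc).ne']
    linear_combination -sin_sq_add_cos_sq t
  rw [iterIntegrandParamDerivPrimitive, hinv,
    arctan_inv_of_pos (div_pos (sub_pos.2 hc) ht)]
  ring

theorem integral_iterIntegrandParamDeriv (ht : 0 < sin t) :
    ∫ s in (0 : ℝ)..1, iterIntegrandParamDeriv t s = 2 * π * (cos t / sin t) := by
  have hcont : Continuous (iterIntegrandParamDeriv t) :=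
    continuousOn_iterIntegrandParamDeriv.comp_continuous (f := fun s => (s, t))
      (by fun_prop) fun _ => ht.ne'
  rw [integral_eq_sub_of_hasDerivAt
    (fun s _ => hasDerivAt_iterIntegrandParamDerivPrimitive ht.ne' s)
    (hcont.intervalIntegrable _ _), iterIntegrandParamDerivPrimitive_one ht,
    iterIntegrandParamDerivPrimitive_zero, sub_zero]

end

theorem integral_cos_div_sin {a b : ℝ} (h : ∀ t ∈ Set.uIcc a b, sin t ≠ 0) :
    ∫ t in a..b, cos t / sin t = log (sin b) - log (sin a) :=
  integral_eq_sub_of_hasDerivAt (fun t ht => (hasDerivAt_sin t).log (h t ht))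
    ((continuous_cos.continuousOn.div continuous_sin.continuousOn h).intervalIntegrable)

theorem iterIntegrand_pi_div_two (s : ℝ) : iterIntegrand (π / 2) s = 0 := by
  rw [iterIntegrand, omegaOne, mul_div_cancel₀ π two_ne_zero, sin_pi]
  simp

theorem integral_iterIntegrand {φ : ℝ} (h0 : 0 < φ) (h1 : φ < π / 2) :
    ∫ s in (0 : ℝ)..1, iterIntegrand φ s = 2 * π * log (sin φ) := by
  have hsin : ∀ t ∈ Set.uIcc φ (π / 2), 0 < sin t := by
    intro t ht
    rw [Set.uIcc_of_le h1.le] at ht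
    exact sin_pos_of_pos_of_lt_pi (h0.trans_le ht.1) (by linarith [ht.2, pi_pos])
  have hD : ContinuousOn (Function.uncurry fun s t => iterIntegrandParamDeriv t s)
      (Set.uIcc 0 1 ×ˢ Set.uIcc φ (π / 2)) :=
    continuousOn_iterIntegrandParamDeriv.mono fun p hp => (hsin p.2 hp.2).ne'
  have hE (s : ℝ) : iterIntegrand φ s = -∫ t in φ..π / 2, iterIntegrandParamDeriv t s := by
    rw [integral_eq_sub_of_hasDerivAt
      (fun t ht => hasDerivAt_iterIntegrand_param (hsin t ht).ne' s)
      (continuousOn_iterIntegrandParamDeriv.comp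
        (continuous_const.prodMk continuous_id).continuousOn
        fun t ht => (hsin t ht).ne').intervalIntegrable, iterIntegrand_pi_div_two]
    ring
  calc ∫ s in (0 : ℝ)..1, iterIntegrand φ s
      = -∫ t in φ..π / 2, ∫ s in (0 : ℝ)..1, iterIntegrandParamDeriv t s := by
        simp_rw [hE]
        rw [integral_neg, MeasureTheory.intervalIntegral_intervalIntegral_swap
          ((hD.integrableOn_compact (isCompact_uIcc.prod isCompact_uIcc)).mono_set
            (Set.prod_mono Set.uIoc_subset_uIcc Set.uIoc_subset_uIcc))]
    _ = -∫ t in φ..π / 2, 2 * π * (cos t / sin t) := by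
        rw [integral_congr fun t ht => integral_iterIntegrandParamDeriv (hsin t ht)]
    _ = 2 * π * log (sin φ) := by
        rw [integral_const_mul, integral_cos_div_sin fun t ht => (hsin t ht).ne',
          sin_pi_div_two, log_one]
        ring

end Omega21

open Real Omega21

theorem omega21_depth_two_iterated_integral
    (φ : ℝ) (h0 : 0 < φ) (h1 : φ < Real.pi / 2) :
    (∫ s in (0:ℝ)..1,
        (∫ u in (0:ℝ)..s,
          ((4 * Real.cos φ * (u ^ 2 - 1) / (u ^ 4 - 2 * Real.cos (2 * φ) * u ^ 2 + 1) : ℝ) : ℂ))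
        * (4 * Complex.I * (Real.sin (2 * φ) : ℂ) * (s : ℂ)
            / ((s : ℂ) ^ 4 - 2 * (Real.cos (2 * φ) : ℂ) * (s : ℂ) ^ 2 + 1)))
      = 2 * (Real.pi : ℂ) * Complex.I * (Real.log (Real.sin φ) : ℂ) := by
  have hφ : sin φ ≠ 0 := (sin_pos_of_pos_of_lt_pi h0 (by linarith [pi_pos])).ne'
  have hinner (s : ℝ) : ∫ u in (0:ℝ)..s,
      4 * cos φ * (u ^ 2 - 1) / (u ^ 4 - 2 * cos (2 * φ) * u ^ 2 + 1) = logRatio φ s :=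
    integral_omegaTwo hφ s
  rw [integral_congr (g := fun s => Complex.I * (iterIntegrand φ s : ℂ)) fun s _ => by
      simp only [integral_ofReal, hinner, iterIntegrand, omegaOne, quartic]
      push_cast
      ring,
    integral_const_mul, integral_ofReal, integral_iterIntegrand h0 h1]
  push_cast
  ring
end

section
/- The family (k₁,k₂) ↦ (−1)^{k₂}/(k₁·k₂²), indexed by pairs of positive integers with k₁ < k₂, is absolutely summable, and ∑_{0<k₁<k₂} (−1)^{k₂}/(k₁·k₂²) = (1/8)·ζ(3). (This is the alternating multiple zeta value ζ(1,2̄).) -/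
/-!
Write `T(x, y) = ∑_{j, l ≥ 1} x^j y^l / (j (j + l)^2)` and
`D(x, y) = ∑_{j, l ≥ 1} x^j y^l / (j l (j + l))`, so that `ζ(1, 2̄) = T(-1, -1)`.
The partial fraction `1/(j l (j+l)) = 1/(j (j+l)^2) + 1/(l (j+l)^2)` gives
`D(x, y) = T(x, y) + T(y, x)`. Summing `D(y, 1)` over `l` first (`∑_l 1/(l (j+l)) = H_j / j`)
gives `∑_k y^k H_k / k^2`, while summing `T(y, y)` along the diagonals `j + l = k` gives
`∑_k y^k H_{k-1} / k^2`; hence `T(y, 1) + T(1, y) = T(y, y) + Li₃(y)`.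
At `y = 1` this is Euler's `T(1, 1) = ζ(3)`. At `y = -1`, combined with `Li₃(-1) = -3/4 ζ(3)` and
the parity relation `∑_{ε, δ = ±1} T(ε, δ) = T(1, 1) / 2` (only even `j` and `l` survive),
it gives `T(-1, -1) = ζ(3) / 8`.
-/

open Finset Filter Topology

lemma hasSum_sub_add_of_antitone {f : ℕ → ℝ} (hf : Antitone f) (h0 : Tendsto f atTop (𝓝 0))
    (k : ℕ) : HasSum (fun n => f n - f (n + k)) (∑ i ∈ range k, f i) := by
  rw [hasSum_iff_tendsto_nat_of_nonneg fun n => sub_nonneg.2 (hf (Nat.le_add_right n k))]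
  have hpartial : ∀ N, ∑ n ∈ range N, (f n - f (n + k))
      = ∑ i ∈ range k, f i - ∑ i ∈ range k, f (N + i) := by
    intro N
    have h₁ := sum_range_add f N k
    have h₂ := sum_range_add f k N
    rw [add_comm k N] at h₂
    simp only [sum_sub_distrib, add_comm _ k]
    linarith
  have htail : Tendsto (fun N => ∑ i ∈ range k, f (N + i)) atTop (𝓝 0) := by
    simpa using tendsto_finsetSum (range k) fun i _ => h0.comp (tendsto_add_atTop_nat i)
  simpa [hpartial] using tendsto_const_nhds.sub htail

lemma hasSum_one_div_mul_add (k : ℕ) (hk : 0 < k) :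
    HasSum (fun n : ℕ => 1 / (((n : ℝ) + 1) * ((n : ℝ) + 1 + k))) (harmonic k / k) := by
  have hanti : Antitone fun n : ℕ => 1 / ((n : ℝ) + 1) := fun a b hab => by
    dsimp only
    gcongr
  have hk' : (k : ℝ) ≠ 0 := by positivity
  have h := (hasSum_sub_add_of_antitone hanti tendsto_one_div_add_atTop_nhds_zero_nat k).div_const
    (k : ℝ)
  have hterm : (fun n : ℕ => (1 / ((n : ℝ) + 1) - 1 / (((n + k : ℕ) : ℝ) + 1)) / k)
      = fun n : ℕ => 1 / (((n : ℝ) + 1) * ((n : ℝ) + 1 + k)) := by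
    ext n
    push_cast
    field_simp
    ring
  rw [hterm] at h
  simpa [harmonic] using h

lemma HasSum.sum_antidiagonal {A α : Type*} [AddCommMonoid A] [HasAntidiagonal A]
    [AddCommMonoid α] [TopologicalSpace α] [ContinuousAdd α] [RegularSpace α]
    {f : A × A → α} {a : α} (h : HasSum f a) :
    HasSum (fun n => ∑ p ∈ antidiagonal n, f p) a :=
  (HasAntidiagonal.sigmaAntidiagonalEquivProd.hasSum_iff.2 h).sigma fun n =>
    (antidiagonal n).hasSum f

lemma abs_pow_mul_pow_div_le_one_div {x y d : ℝ} (hx : |x| ≤ 1) (hy : |y| ≤ 1) (hd : 0 < d)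
    (i m : ℕ) : |x ^ i * y ^ m / d| ≤ 1 / d := by
  rw [abs_div, abs_mul, abs_pow, abs_pow, abs_of_pos hd]
  gcongr
  exact mul_le_one₀ (pow_le_one₀ (abs_nonneg x) hx) (by positivity) (pow_le_one₀ (abs_nonneg y) hy)

lemma sqrt_mul_sqrt_pow_three_le {a b : ℝ} (ha : 0 ≤ a) (hb : 0 ≤ b) :
    (√a * √b) ^ 3 ≤ a * b * (a + b) := by
  obtain ⟨s, hs, rfl⟩ : ∃ s, 0 ≤ s ∧ s ^ 2 = a := ⟨√a, Real.sqrt_nonneg a, Real.sq_sqrt ha⟩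
  obtain ⟨t, ht, rfl⟩ : ∃ t, 0 ≤ t ∧ t ^ 2 = b := ⟨√b, Real.sqrt_nonneg b, Real.sq_sqrt hb⟩
  rw [Real.sqrt_sq hs, Real.sqrt_sq ht]
  have hst : s * t ≤ s ^ 2 + t ^ 2 := by nlinarith [sq_nonneg (s - t), mul_nonneg hs ht]
  calc (s * t) ^ 3 = (s * t) ^ 2 * (s * t) := by ring
    _ ≤ (s * t) ^ 2 * (s ^ 2 + t ^ 2) := by gcongr
    _ = s ^ 2 * t ^ 2 * (s ^ 2 + t ^ 2) := by ring

lemma summable_one_div_sqrt_succ_pow_three : Summable fun n : ℕ => 1 / √((n : ℝ) + 1) ^ 3 := by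
  have h := (summable_nat_add_iff 1).2
    (Real.summable_one_div_nat_rpow.2 (by norm_num : (1 : ℝ) < 3 / 2))
  refine h.congr fun n => ?_
  rw [Real.sqrt_eq_rpow, ← Real.rpow_natCast, ← Real.rpow_mul (by positivity)]
  norm_num

lemma summable_pow_div_succ_pow_three {y : ℝ} (hy : |y| ≤ 1) :
    Summable fun n : ℕ => y ^ (n + 1) / ((n : ℝ) + 1) ^ 3 := by
  have h := (summable_nat_add_iff 1).2 (Real.summable_one_div_nat_pow.2 (by norm_num : 1 < 3))
  refine Summable.of_norm_bounded h fun n => ?_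
  rw [Real.norm_eq_abs]
  simpa using abs_pow_mul_pow_div_le_one_div (d := ((n : ℝ) + 1) ^ 3) hy abs_one.le
    (by positivity) (n + 1) 0

lemma tsum_one_add_neg_one_pow_mul (f : ℕ → ℝ) :
    ∑' n, (1 + (-1) ^ (n + 1)) * f n = 2 * ∑' k, f (2 * k + 1) := by
  have hodd : Function.Injective fun k : ℕ => 2 * k + 1 := fun a b h => by simpa using h
  rw [← hodd.tsum_eq, ← tsum_mul_left]
  · refine tsum_congr fun k => ?_
    rw [Even.neg_one_pow ⟨k + 1, by ring⟩]
    ring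
  · intro n hn
    obtain ⟨k, rfl | rfl⟩ := n.even_or_odd'
    · rw [Function.mem_support, Odd.neg_one_pow ⟨k, rfl⟩] at hn
      simp at hn
    · exact ⟨k, rfl⟩

lemma tsum_prod_one_add_neg_one_pow_mul (w : ℕ × ℕ → ℝ) :
    ∑' p, (1 + (-1) ^ (p.1 + 1)) * (1 + (-1) ^ (p.2 + 1)) * w p
      = 4 * ∑' q : ℕ × ℕ, w (2 * q.1 + 1, 2 * q.2 + 1) := by
  have hodd : Function.Injective fun q : ℕ × ℕ => (2 * q.1 + 1, 2 * q.2 + 1) := fun a b h => by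
    simp only [Prod.mk.injEq] at h
    exact Prod.ext (by omega) (by omega)
  rw [← hodd.tsum_eq, ← tsum_mul_left]
  · refine tsum_congr fun q => ?_
    rw [Even.neg_one_pow ⟨q.1 + 1, by ring⟩, Even.neg_one_pow ⟨q.2 + 1, by ring⟩]
    ring
  · rintro ⟨i, m⟩ hp
    obtain ⟨a, rfl | rfl⟩ := i.even_or_odd'
    · rw [Function.mem_support, Odd.neg_one_pow ⟨a, rfl⟩] at hp
      simp at hp
    obtain ⟨b, rfl | rfl⟩ := m.even_or_odd'
    · rw [Function.mem_support, Odd.neg_one_pow ⟨b, rfl⟩] at hp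
      simp at hp
    exact ⟨(a, b), rfl⟩

lemma summable_one_div_succ_pow_three : Summable fun n : ℕ => 1 / ((n : ℝ) + 1) ^ 3 := by
  simpa using summable_pow_div_succ_pow_three abs_one.le

lemma tsum_neg_one_pow_div_succ_pow_three :
    ∑' n : ℕ, (-1) ^ (n + 1) / ((n : ℝ) + 1) ^ 3 = -(3 / 4) * ∑' n : ℕ, 1 / ((n : ℝ) + 1) ^ 3 := by
  have h := tsum_one_add_neg_one_pow_mul fun n => 1 / ((n : ℝ) + 1) ^ 3
  have hodd : ∀ k : ℕ, 1 / (((2 * k + 1 : ℕ) : ℝ) + 1) ^ 3 = 1 / 8 * (1 / ((k : ℝ) + 1) ^ 3) := by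
    intro k
    push_cast
    field_simp
    ring
  simp only [mul_one_div, add_div] at h
  rw [tsum_congr hodd, tsum_mul_left, summable_one_div_succ_pow_three.tsum_add
    (summable_pow_div_succ_pow_three (by norm_num))] at h
  linarith

/-- `mzvTerm x y (j - 1, l - 1) = x^j y^l / (j (j + l)^2)` and
`tornheimTerm x y (j - 1, l - 1) = x^j y^l / (j l (j + l))`, for `j, l ≥ 1`. -/
noncomputable def mzvTerm (x y : ℝ) (p : ℕ × ℕ) : ℝ :=
  x ^ (p.1 + 1) * y ^ (p.2 + 1) / (((p.1 : ℝ) + 1) * ((p.1 : ℝ) + p.2 + 2) ^ 2)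

noncomputable def tornheimTerm (x y : ℝ) (p : ℕ × ℕ) : ℝ :=
  x ^ (p.1 + 1) * y ^ (p.2 + 1) / (((p.1 : ℝ) + 1) * ((p.2 : ℝ) + 1) * ((p.1 : ℝ) + p.2 + 2))

lemma tornheimTerm_one_one_le (p : ℕ × ℕ) :
    tornheimTerm 1 1 p ≤ 1 / √((p.1 : ℝ) + 1) ^ 3 * (1 / √((p.2 : ℝ) + 1) ^ 3) := by
  rw [tornheimTerm, one_pow, one_pow, one_mul, one_div_mul_one_div, ← mul_pow]
  have h := sqrt_mul_sqrt_pow_three_le (a := (p.1 : ℝ) + 1) (b := (p.2 : ℝ) + 1)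
    (by positivity) (by positivity)
  gcongr
  linarith

lemma summable_tornheimTerm_one_one : Summable (tornheimTerm 1 1) :=
  (summable_one_div_sqrt_succ_pow_three.mul_of_nonneg summable_one_div_sqrt_succ_pow_three
    (fun _ => by positivity) fun _ => by positivity).of_nonneg_of_le
    (fun p => by rw [tornheimTerm]; positivity) tornheimTerm_one_one_le

lemma tornheimTerm_eq_mzvTerm_add (x y : ℝ) (p : ℕ × ℕ) :
    tornheimTerm x y p = mzvTerm x y p + mzvTerm y x p.swap := by
  obtain ⟨i, m⟩ := p
  simp only [tornheimTerm, mzvTerm, Prod.swap_prod_mk]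
  field_simp
  ring

lemma mzvTerm_eq_pow_mul_pow_mul (x y : ℝ) (p : ℕ × ℕ) :
    mzvTerm x y p = x ^ (p.1 + 1) * y ^ (p.2 + 1) * mzvTerm 1 1 p := by
  simp only [mzvTerm, one_pow, one_mul]
  ring

lemma mzvTerm_one_one_odd (q : ℕ × ℕ) :
    mzvTerm 1 1 (2 * q.1 + 1, 2 * q.2 + 1) = mzvTerm 1 1 q / 8 := by
  simp only [mzvTerm, one_pow, mul_one]
  push_cast
  field_simp
  ring

lemma hasSum_tornheimTerm_fiber (x : ℝ) (i : ℕ) :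
    HasSum (fun m => tornheimTerm x 1 (i, m))
      (x ^ (i + 1) * harmonic (i + 1) / ((i : ℝ) + 1) ^ 2) := by
  have h := (hasSum_one_div_mul_add (i + 1) i.succ_pos).mul_left (x ^ (i + 1) / ((i : ℝ) + 1))
  rw [show x ^ (i + 1) / ((i : ℝ) + 1) * (harmonic (i + 1) / ((i + 1 : ℕ) : ℝ))
      = x ^ (i + 1) * harmonic (i + 1) / ((i : ℝ) + 1) ^ 2 by push_cast; field_simp] at h
  refine h.congr_fun fun m => ?_
  simp only [tornheimTerm, one_pow, mul_one]
  push_cast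
  field_simp
  ring

lemma sum_antidiagonal_mzvTerm (y : ℝ) (n : ℕ) :
    ∑ p ∈ antidiagonal n, mzvTerm y y p
      = y ^ (n + 1 + 1) * harmonic (n + 1) / (((n + 1 : ℕ) : ℝ) + 1) ^ 2 := by
  rw [Nat.sum_antidiagonal_eq_sum_range_succ_mk, harmonic, Rat.cast_sum, mul_sum, sum_div]
  refine sum_congr rfl fun i hi => ?_
  have hin : i ≤ n := Nat.lt_succ_iff.1 (mem_range.1 hi)
  have hden : (i : ℝ) + ((n - i : ℕ) : ℝ) + 2 = ((n + 1 : ℕ) : ℝ) + 1 := by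
    push_cast [Nat.cast_sub hin]
    ring
  simp only [mzvTerm, hden, ← pow_add]
  rw [show i + 1 + (n - i + 1) = n + 1 + 1 by omega]
  push_cast
  field_simp

section

variable {x y : ℝ}

lemma abs_tornheimTerm_le (hx : |x| ≤ 1) (hy : |y| ≤ 1) (p : ℕ × ℕ) :
    |tornheimTerm x y p| ≤ tornheimTerm 1 1 p := by
  simpa [tornheimTerm] using abs_pow_mul_pow_div_le_one_div hx hy
    (d := ((p.1 : ℝ) + 1) * ((p.2 : ℝ) + 1) * ((p.1 : ℝ) + p.2 + 2)) (by positivity)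
    (p.1 + 1) (p.2 + 1)

lemma abs_mzvTerm_le (hx : |x| ≤ 1) (hy : |y| ≤ 1) (p : ℕ × ℕ) :
    |mzvTerm x y p| ≤ tornheimTerm 1 1 p := by
  refine (abs_pow_mul_pow_div_le_one_div hx hy (by positivity) (p.1 + 1) (p.2 + 1)).trans ?_
  rw [tornheimTerm, one_pow, one_pow, one_mul, mul_assoc, sq]
  gcongr <;> linarith [(p.1.cast_nonneg : (0 : ℝ) ≤ p.1)]

lemma summable_tornheimTerm (hx : |x| ≤ 1) (hy : |y| ≤ 1) : Summable (tornheimTerm x y) :=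
  summable_tornheimTerm_one_one.of_norm_bounded (abs_tornheimTerm_le hx hy)

lemma summable_mzvTerm (hx : |x| ≤ 1) (hy : |y| ≤ 1) : Summable (mzvTerm x y) :=
  summable_tornheimTerm_one_one.of_norm_bounded (abs_mzvTerm_le hx hy)

lemma tsum_tornheimTerm (hx : |x| ≤ 1) (hy : |y| ≤ 1) :
    ∑' p, tornheimTerm x y p = ∑' p, mzvTerm x y p + ∑' p, mzvTerm y x p := by
  have hswap : Summable fun p : ℕ × ℕ => mzvTerm y x p.swap :=
    (Equiv.prodComm ℕ ℕ).summable_iff.2 (summable_mzvTerm hy hx)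
  rw [tsum_congr (tornheimTerm_eq_mzvTerm_add x y), (summable_mzvTerm hx hy).tsum_add hswap]
  congr 1
  exact (Equiv.prodComm ℕ ℕ).tsum_eq (mzvTerm y x)

lemma hasSum_pow_mul_harmonic_div_sq_tsum_tornheimTerm (hy : |y| ≤ 1) :
    HasSum (fun n : ℕ => y ^ (n + 1) * harmonic (n + 1) / ((n : ℝ) + 1) ^ 2)
      (∑' p, tornheimTerm y 1 p) :=
  (summable_tornheimTerm hy abs_one.le).hasSum.prod_fiberwise (hasSum_tornheimTerm_fiber y)

lemma hasSum_pow_mul_harmonic_div_sq_tsum_mzvTerm (hy : |y| ≤ 1) :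
    HasSum (fun n : ℕ => y ^ (n + 1) * harmonic (n + 1) / ((n : ℝ) + 1) ^ 2)
      (∑' p, mzvTerm y y p + ∑' n : ℕ, y ^ (n + 1) / ((n : ℝ) + 1) ^ 3) := by
  have hdiag : HasSum (fun n : ℕ => y ^ (n + 1) * harmonic n / ((n : ℝ) + 1) ^ 2)
      (∑' p, mzvTerm y y p) := by
    have h := HasSum.zero_add (f := fun n : ℕ => y ^ (n + 1) * harmonic n / ((n : ℝ) + 1) ^ 2)
      ((summable_mzvTerm hy hy).hasSum.sum_antidiagonal.congr_fun
        fun n => (sum_antidiagonal_mzvTerm y n).symm)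
    rwa [harmonic_zero, Rat.cast_zero, mul_zero, zero_div, zero_add] at h
  refine (hdiag.add (summable_pow_div_succ_pow_three hy).hasSum).congr_fun fun n => ?_
  rw [harmonic_succ]
  push_cast
  field_simp

theorem tsum_mzvTerm_add_tsum_mzvTerm_eq (hy : |y| ≤ 1) :
    ∑' p, mzvTerm y 1 p + ∑' p, mzvTerm 1 y p
      = ∑' p, mzvTerm y y p + ∑' n : ℕ, y ^ (n + 1) / ((n : ℝ) + 1) ^ 3 := by
  rw [← tsum_tornheimTerm hy abs_one.le]
  exact (hasSum_pow_mul_harmonic_div_sq_tsum_tornheimTerm hy).unique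
    (hasSum_pow_mul_harmonic_div_sq_tsum_mzvTerm hy)

end

lemma tsum_mzvTerm_sum_signs :
    ∑' p, mzvTerm 1 1 p + ∑' p, mzvTerm 1 (-1) p + ∑' p, mzvTerm (-1) 1 p
      + ∑' p, mzvTerm (-1) (-1) p = (∑' p, mzvTerm 1 1 p) / 2 := by
  have h₁ : |(1 : ℝ)| ≤ 1 := abs_one.le
  have h₂ : |(-1 : ℝ)| ≤ 1 := by norm_num
  have hsum := (((summable_mzvTerm h₁ h₁).hasSum.add (summable_mzvTerm h₁ h₂).hasSum).add
    (summable_mzvTerm h₂ h₁).hasSum).add (summable_mzvTerm h₂ h₂).hasSum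
  rw [← hsum.tsum_eq, tsum_congr fun p => ?_, tsum_prod_one_add_neg_one_pow_mul,
    tsum_congr mzvTerm_one_one_odd, tsum_div_const]
  · ring
  rw [mzvTerm_eq_pow_mul_pow_mul 1 (-1), mzvTerm_eq_pow_mul_pow_mul (-1) 1,
    mzvTerm_eq_pow_mul_pow_mul (-1) (-1)]
  ring

theorem tsum_mzvTerm_one_one : ∑' p, mzvTerm 1 1 p = ∑' n : ℕ, 1 / ((n : ℝ) + 1) ^ 3 := by
  have h := tsum_mzvTerm_add_tsum_mzvTerm_eq abs_one.le
  simp only [one_pow] at h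
  linarith

theorem tsum_mzvTerm_neg_one_neg_one :
    ∑' p, mzvTerm (-1) (-1) p = (∑' n : ℕ, 1 / ((n : ℝ) + 1) ^ 3) / 8 := by
  have hrelation := tsum_mzvTerm_add_tsum_mzvTerm_eq (y := -1) (by norm_num)
  have hsigns := tsum_mzvTerm_sum_signs
  rw [tsum_neg_one_pow_div_succ_pow_three] at hrelation
  rw [tsum_mzvTerm_one_one] at hsigns
  linarith

def equivLtPairs : ℕ × ℕ ≃ {p : ℕ × ℕ // 0 < p.1 ∧ p.1 < p.2} where
  toFun q := ⟨(q.1 + 1, q.1 + q.2 + 2), by omega, by omega⟩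
  invFun p := (p.1.1 - 1, p.1.2 - p.1.1 - 1)
  left_inv q := by
    ext <;> simp only <;> omega
  right_inv := by
    rintro ⟨⟨j, k⟩, hj, hjk⟩
    ext <;> simp only at hj hjk ⊢ <;> omega

lemma mzvTerm_neg_one_neg_one_eq (q : ℕ × ℕ) :
    mzvTerm (-1) (-1) q = (-1 : ℝ) ^ (equivLtPairs q).1.2
      / (((equivLtPairs q).1.1 : ℝ) * ((equivLtPairs q).1.2 : ℝ) ^ 2) := by
  simp only [mzvTerm, equivLtPairs, Equiv.coe_fn_mk, ← pow_add]
  push_cast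
  ring_nf

theorem alternating_mzv_one_two_bar :
    (Summable fun p : {p : ℕ × ℕ // 0 < p.1 ∧ p.1 < p.2} =>
      |(-1 : ℝ) ^ p.1.2 / ((p.1.1 : ℝ) * (p.1.2 : ℝ) ^ 2)|) ∧
    (∑' p : {p : ℕ × ℕ // 0 < p.1 ∧ p.1 < p.2},
        (-1 : ℝ) ^ p.1.2 / ((p.1.1 : ℝ) * (p.1.2 : ℝ) ^ 2))
      = (∑' n : ℕ, 1 / ((n : ℝ) + 1) ^ 3) / 8 := by
  have hsummable : Summable (mzvTerm (-1) (-1)) := summable_mzvTerm (by norm_num) (by norm_num)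
  constructor
  · rw [← equivLtPairs.summable_iff]
    simpa only [Function.comp_def, ← mzvTerm_neg_one_neg_one_eq] using hsummable.abs
  · rw [← equivLtPairs.tsum_eq, ← tsum_mzvTerm_neg_one_neg_one]
    exact tsum_congr fun q => (mzvTerm_neg_one_neg_one_eq q).symm
end

section
/- The limit as N → ∞ of the truncated sums ∑_{0<k₁<k₂<k₃≤N} (−1)^{k₁+k₂+k₃}/(k₁·k₂·k₃) exists and equals −(1/6)·log³2 + (π²/12)·log 2 − (1/4)·ζ(3). (This is the alternating multiple zeta value ζ(1̄,1̄,1̄).) -/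
/-!
Put `x k = (-1)^k / k` and write `pₘ(N) = ∑_{k ≤ N} x k ^ m` for the truncated power sums.
The truncated triple sum is the third elementary symmetric function of `x 1, …, x N`, so
Newton's identities give `6 e₃ = p₁³ - 3 p₁ p₂ + 2 p₃`. As `N → ∞` the power sums tend to `-log 2`
(alternating harmonic series), `ζ(2) = π²/6`, and `-(3/4) ζ(3)` (the alternating cubic series
is `(2⁻² - 1) ζ(3)`), which yields the stated value.
-/

open Finset Filter Real Topology

section NewtonIdentities

variable {R : Type*} [CommRing R] (x : ℕ → R)

theorem two_mul_sum_Icc_sum_Ico_mul (N : ℕ) :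
    2 * ∑ b ∈ Icc 1 N, ∑ a ∈ Ico 1 b, x a * x b
      = (∑ k ∈ Icc 1 N, x k) ^ 2 - ∑ k ∈ Icc 1 N, x k ^ 2 := by
  induction N with
  | zero => simp
  | succ n ih =>
    rw [sum_Icc_succ_top n.succ_pos, Ico_add_one_right_eq_Icc, ← sum_mul, mul_add, ih,
      sum_Icc_succ_top n.succ_pos, sum_Icc_succ_top n.succ_pos]
    ring

theorem six_mul_sum_Icc_sum_Ico_sum_Ico_mul (N : ℕ) :
    6 * ∑ c ∈ Icc 1 N, ∑ b ∈ Ico 1 c, ∑ a ∈ Ico 1 b, x a * x b * x c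
      = (∑ k ∈ Icc 1 N, x k) ^ 3 - 3 * (∑ k ∈ Icc 1 N, x k) * (∑ k ∈ Icc 1 N, x k ^ 2)
          + 2 * ∑ k ∈ Icc 1 N, x k ^ 3 := by
  induction N with
  | zero => simp
  | succ n ih =>
    have hlast : ∑ b ∈ Icc 1 n, ∑ a ∈ Ico 1 b, x a * x b * x (n + 1)
        = (∑ b ∈ Icc 1 n, ∑ a ∈ Ico 1 b, x a * x b) * x (n + 1) := by
      simp only [sum_mul]
    have h2 := two_mul_sum_Icc_sum_Ico_mul x n
    rw [sum_Icc_succ_top n.succ_pos, Ico_add_one_right_eq_Icc, hlast, mul_add, ih,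
      sum_Icc_succ_top n.succ_pos, sum_Icc_succ_top n.succ_pos, sum_Icc_succ_top n.succ_pos]
    linear_combination 3 * x (n + 1) * h2

end NewtonIdentities

theorem tendsto_sum_Icc_of_hasSum {M : Type*} [AddCommMonoid M] [TopologicalSpace M]
    {g : ℕ → M} {L : M} (hg : HasSum g L) (h0 : g 0 = 0) :
    Tendsto (fun N : ℕ => ∑ k ∈ Icc 1 N, g k) atTop (𝓝 L) := by
  have hrange (N : ℕ) : ∑ k ∈ Icc 1 N, g k = ∑ k ∈ range (N + 1), g k := by
    rw [range_eq_Ico, sum_eq_sum_Ico_succ_bot N.succ_pos, h0, zero_add, Nat.succ_eq_add_one,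
      zero_add, Ico_add_one_right_eq_Icc]
  exact (hg.tendsto_sum_nat.comp (tendsto_add_atTop_nat 1)).congr fun N => (hrange N).symm

theorem sum_range_two_mul_neg_one_pow_mul_one_div_succ (n : ℕ) :
    ∑ i ∈ range (2 * n), (-1 : ℝ) ^ i * (1 / ((i : ℝ) + 1))
      = (harmonic (2 * n) : ℝ) - harmonic n := by
  induction n with
  | zero => simp
  | succ m ih =>
    rw [show 2 * (m + 1) = 2 * m + 1 + 1 by ring, sum_range_succ, sum_range_succ, ih,
      Even.neg_one_pow ⟨m, by ring⟩, Odd.neg_one_pow ⟨m, rfl⟩,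
      harmonic_succ, harmonic_succ (2 * m), harmonic_succ m]
    push_cast
    field_simp
    ring

theorem tendsto_harmonic_two_mul_sub_harmonic :
    Tendsto (fun n : ℕ => (harmonic (2 * n) : ℝ) - harmonic n) atTop (𝓝 (log 2)) := by
  have hdiff := ((tendsto_harmonic_sub_log.comp
    (tendsto_id.const_mul_atTop' two_pos)).sub tendsto_harmonic_sub_log).add_const (log 2)
  rw [sub_self, zero_add] at hdiff
  refine hdiff.congr' ?_
  filter_upwards [eventually_ne_atTop 0] with n hn
  simp only [Function.comp_apply, id_eq, Nat.cast_mul, Nat.cast_ofNat]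
  rw [log_mul two_ne_zero (Nat.cast_ne_zero.mpr hn)]
  ring

theorem tendsto_sum_range_neg_one_pow_mul_one_div_succ :
    Tendsto (fun N : ℕ => ∑ i ∈ range N, (-1 : ℝ) ^ i * (1 / ((i : ℝ) + 1))) atTop
      (𝓝 (log 2)) := by
  have hanti : Antitone (fun i : ℕ => 1 / ((i : ℝ) + 1)) := fun _ _ hab =>
    one_div_le_one_div_of_le (by positivity) (by gcongr)
  obtain ⟨l, hl⟩ :=
    hanti.tendsto_alternating_series_of_tendsto_zero tendsto_one_div_add_atTop_nhds_zero_nat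
  have heven := hl.comp (tendsto_id.const_mul_atTop' two_pos)
  have hl2 : l = log 2 := tendsto_nhds_unique
    (heven.congr sum_range_two_mul_neg_one_pow_mul_one_div_succ)
    tendsto_harmonic_two_mul_sub_harmonic
  rwa [hl2] at hl

theorem tendsto_sum_Icc_neg_one_pow_div :
    Tendsto (fun N : ℕ => ∑ k ∈ Icc 1 N, (-1 : ℝ) ^ k / k) atTop (𝓝 (-log 2)) := by
  have hshift (N : ℕ) : ∑ k ∈ Icc 1 N, (-1 : ℝ) ^ k / k
      = -∑ i ∈ range N, (-1 : ℝ) ^ i * (1 / ((i : ℝ) + 1)) := by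
    rw [← Ico_add_one_right_eq_Icc, sum_Ico_eq_sum_range, ← sum_neg_distrib]
    refine sum_congr (by simp) fun i _ => ?_
    push_cast
    ring
  simpa only [hshift] using tendsto_sum_range_neg_one_pow_mul_one_div_succ.neg

theorem hasSum_neg_one_pow_div_pow {p : ℕ} {Z : ℝ}
    (hZ : HasSum (fun k : ℕ => 1 / (k : ℝ) ^ p) Z) :
    HasSum (fun k : ℕ => (-1 : ℝ) ^ k / (k : ℝ) ^ p) (2 * Z / 2 ^ p - Z) := by
  have heven : HasSum (fun n : ℕ => 1 / ((2 * n : ℕ) : ℝ) ^ p) (Z / 2 ^ p) := by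
    rw [div_eq_inv_mul]
    refine (hZ.mul_left (2 ^ p)⁻¹).congr_fun fun n => ?_
    push_cast
    rw [mul_pow, one_div, one_div, mul_inv]
  obtain ⟨t, hodd⟩ : Summable (fun n : ℕ => 1 / ((2 * n + 1 : ℕ) : ℝ) ^ p) :=
    hZ.summable.comp_injective fun a b h => by simpa using h
  have ht : t = Z - Z / 2 ^ p := by
    linarith [hZ.unique (heven.even_add_odd hodd)]
  have hsigned := HasSum.even_add_odd (f := fun k : ℕ => (-1 : ℝ) ^ k / (k : ℝ) ^ p)
    (heven.congr_fun fun n => by rw [Even.neg_one_pow ⟨n, by ring⟩])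
    (hodd.neg.congr_fun fun n => by rw [Odd.neg_one_pow ⟨n, rfl⟩, neg_div])
  rwa [ht, show Z / 2 ^ p + -(Z - Z / 2 ^ p) = 2 * Z / 2 ^ p - Z by ring] at hsigned

theorem hasSum_one_div_nat_pow_tsum_succ {p : ℕ} (hp : 1 < p) :
    HasSum (fun k : ℕ => 1 / (k : ℝ) ^ p) (∑' n : ℕ, 1 / ((n : ℝ) + 1) ^ p) := by
  have hs := Real.summable_one_div_nat_pow.mpr hp
  convert hs.hasSum using 1
  rw [hs.tsum_eq_zero_add]
  simp [zero_pow (by omega : p ≠ 0)]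

theorem alternating_mzv_one_bar_one_bar_one_bar :
    Filter.Tendsto
      (fun N : ℕ => ∑ c ∈ Finset.Icc 1 N, ∑ b ∈ Finset.Ico 1 c, ∑ a ∈ Finset.Ico 1 b,
        (-1 : ℝ) ^ (a + b + c) / ((a : ℝ) * (b : ℝ) * (c : ℝ)))
      Filter.atTop
      (nhds (-(Real.log 2) ^ 3 / 6 + Real.pi ^ 2 / 12 * Real.log 2
        - (∑' n : ℕ, 1 / ((n : ℝ) + 1) ^ 3) / 4)) := by
  set ζ₃ : ℝ := ∑' n : ℕ, 1 / ((n : ℝ) + 1) ^ 3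
  set x : ℕ → ℝ := fun k => (-1 : ℝ) ^ k / k with hx
  have hp₁ : Tendsto (fun N : ℕ => ∑ k ∈ Icc 1 N, x k) atTop (𝓝 (-log 2)) :=
    tendsto_sum_Icc_neg_one_pow_div
  have hp₂ : Tendsto (fun N : ℕ => ∑ k ∈ Icc 1 N, x k ^ 2) atTop (𝓝 (π ^ 2 / 6)) :=
    (tendsto_sum_Icc_of_hasSum hasSum_zeta_two (by simp)).congr fun N =>
      sum_congr rfl fun k _ => by rw [hx, div_pow, ← pow_mul, pow_mul', neg_one_sq, one_pow]
  have hp₃ : Tendsto (fun N : ℕ => ∑ k ∈ Icc 1 N, x k ^ 3) atTop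
      (𝓝 (2 * ζ₃ / 2 ^ 3 - ζ₃)) :=
    (tendsto_sum_Icc_of_hasSum (hasSum_neg_one_pow_div_pow
      (hasSum_one_div_nat_pow_tsum_succ (by norm_num))) (by simp)).congr fun N =>
      sum_congr rfl fun k _ => by
        rw [hx, div_pow, ← pow_mul, pow_mul', show (-1 : ℝ) ^ 3 = -1 by norm_num]
  have hterm (a b c : ℕ) : (-1 : ℝ) ^ (a + b + c) / ((a : ℝ) * b * c) = x a * x b * x c := by
    rw [hx, pow_add, pow_add, div_mul_div_comm, div_mul_div_comm]
  have he₃ := (((hp₁.pow 3).sub ((hp₁.const_mul 3).mul hp₂)).add (hp₃.const_mul 2)).div_const 6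
  simp only [← six_mul_sum_Icc_sum_Ico_sum_Ico_mul,
    mul_div_cancel_left₀ _ (by norm_num : (6 : ℝ) ≠ 0)] at he₃
  simp only [hterm]
  convert he₃ using 2
  ring
end
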